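/- arXiv:1006.1593 — 11 statements merged into one kernel-verified Lean document; each statement's English description precedes it below -/
import Mathlib

section
/- Let f be differentiable on an interval containing [a,b] with a < b, f' integrable on [a,b], and |f'| convex on [a,b]. Then for each x ∈ [a,b], |((b-x)·f(b) + (x-a)·f(a))/(b-a) - (1/(b-a))·∫_a^b f(u) du| ≤ ((x-a)²/(b-a))·(|f'(x)| + 2|f'(a)|)/6 + ((b-x)²/(b-a))·(|f'(x)| + 2|f'(b)|)/6. -/
open MeasureTheory intervalIntegral

lemma helper1 (g : ℝ → ℝ) (a x A X : ℝ) (hax : a ≤ x)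
    (hg : IntervalIntegrable g volume a x)
    (hg0 : ∀ u ∈ Set.Icc a x, 0 ≤ g u)
    (hbound : ∀ u ∈ Set.Icc a x, (x - a) * g u ≤ (x - u) * A + (u - a) * X) :
    ∫ u in a..x, (x - u) * g u ≤ (x - a) ^ 2 * (X + 2 * A) / 6 := by
  rcases eq_or_lt_of_le hax with rfl | hlt
  · simp
  have hpos : (0:ℝ) < x - a := by linarith
  have hcontx : ContinuousOn (fun u : ℝ => x - u) (Set.uIcc a x) := by fun_prop
  have hIL : IntervalIntegrable (fun u => (x - u) * g u) volume a x :=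
    hg.continuousOn_mul hcontx
  have hIR : IntervalIntegrable (fun u => (x - u) * ((x - u) * A + (u - a) * X) / (x - a)) volume a x :=
    (Continuous.intervalIntegrable (by fun_prop) a x)
  have key : ∀ u ∈ Set.Icc a x, (x - u) * g u ≤ (x - u) * ((x - u) * A + (u - a) * X) / (x - a) := by
    intro u hu
    rw [le_div_iff₀ hpos]
    have h2 : 0 ≤ x - u := by linarith [hu.2]
    nlinarith [mul_le_mul_of_nonneg_left (hbound u hu) h2]
  have hcomp := intervalIntegral.integral_mono_on hax hIL hIR key
  have hcalc : ∫ u in a..x, (x - u) * ((x - u) * A + (u - a) * X) / (x - a)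
      = (x - a) ^ 2 * (2 * A + X) / 6 := by
    have h1 : ∀ u : ℝ, (x - u) * ((x - u) * A + (u - a) * X) / (x - a)
        = (x - a)⁻¹ * ((x - u) * ((x - u) * A + (u - a) * X)) := fun u => by ring
    simp_rw [h1]
    rw [intervalIntegral.integral_const_mul]
    have h2 : ∫ u in a..x, (x - u) * ((x - u) * A + (u - a) * X) = (x - a) ^ 3 * (2 * A + X) / 6 := by
      have hF : ∀ u : ℝ, HasDerivAt
          (fun u => (A - X) * u ^ 3 / 3 + (X * (x + a) - 2 * A * x) * u ^ 2 / 2 + (A * x ^ 2 - X * a * x) * u)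
          ((x - u) * ((x - u) * A + (u - a) * X)) u := by
        intro u
        have H := (((hasDerivAt_pow 3 u).const_mul (A - X)).div_const 3 |>.add
          (((hasDerivAt_pow 2 u).const_mul (X * (x + a) - 2 * A * x)).div_const 2)).add
          ((hasDerivAt_id u).const_mul (A * x ^ 2 - X * a * x))
        refine H.congr_deriv ?_
        push_cast
        ring
      rw [intervalIntegral.integral_eq_sub_of_hasDerivAt (fun u _ => hF u)
        ((Continuous.intervalIntegrable (by fun_prop) a x))]
      ring
    rw [h2]
    field_simp
  calc ∫ u in a..x, (x - u) * g u ≤ _ := hcomp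
    _ = (x - a) ^ 2 * (2 * A + X) / 6 := hcalc
    _ = (x - a) ^ 2 * (X + 2 * A) / 6 := by ring

lemma helper2 (g : ℝ → ℝ) (x b B X : ℝ) (hxb : x ≤ b)
    (hg : IntervalIntegrable g volume x b)
    (hg0 : ∀ u ∈ Set.Icc x b, 0 ≤ g u)
    (hbound : ∀ u ∈ Set.Icc x b, (b - x) * g u ≤ (b - u) * X + (u - x) * B) :
    ∫ u in x..b, (u - x) * g u ≤ (b - x) ^ 2 * (X + 2 * B) / 6 := by
  rcases eq_or_lt_of_le hxb with rfl | hlt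
  · simp
  have hpos : (0:ℝ) < b - x := by linarith
  have hcontx : ContinuousOn (fun u : ℝ => u - x) (Set.uIcc x b) := by fun_prop
  have hIL : IntervalIntegrable (fun u => (u - x) * g u) volume x b :=
    hg.continuousOn_mul hcontx
  have hIR : IntervalIntegrable (fun u => (u - x) * ((b - u) * X + (u - x) * B) / (b - x)) volume x b :=
    (Continuous.intervalIntegrable (by fun_prop) x b)
  have key : ∀ u ∈ Set.Icc x b, (u - x) * g u ≤ (u - x) * ((b - u) * X + (u - x) * B) / (b - x) := by
    intro u hu
    rw [le_div_iff₀ hpos]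
    have h2 : 0 ≤ u - x := by linarith [hu.1]
    nlinarith [mul_le_mul_of_nonneg_left (hbound u hu) h2]
  have hcomp := intervalIntegral.integral_mono_on hxb hIL hIR key
  have hcalc : ∫ u in x..b, (u - x) * ((b - u) * X + (u - x) * B) / (b - x)
      = (b - x) ^ 2 * (2 * B + X) / 6 := by
    have h1 : ∀ u : ℝ, (u - x) * ((b - u) * X + (u - x) * B) / (b - x)
        = (b - x)⁻¹ * ((u - x) * ((b - u) * X + (u - x) * B)) := fun u => by ring
    simp_rw [h1]
    rw [intervalIntegral.integral_const_mul]
    have h2 : ∫ u in x..b, (u - x) * ((b - u) * X + (u - x) * B) = (b - x) ^ 3 * (2 * B + X) / 6 := by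
      have hF : ∀ u : ℝ, HasDerivAt
          (fun u => (B - X) * u ^ 3 / 3 + (X * (b + x) - 2 * B * x) * u ^ 2 / 2 + (B * x ^ 2 - X * b * x) * u)
          ((u - x) * ((b - u) * X + (u - x) * B)) u := by
        intro u
        have H := (((hasDerivAt_pow 3 u).const_mul (B - X)).div_const 3 |>.add
          (((hasDerivAt_pow 2 u).const_mul (X * (b + x) - 2 * B * x)).div_const 2)).add
          ((hasDerivAt_id u).const_mul (B * x ^ 2 - X * b * x))
        refine H.congr_deriv ?_
        push_cast
        ring
      rw [intervalIntegral.integral_eq_sub_of_hasDerivAt (fun u _ => hF u)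
        ((Continuous.intervalIntegrable (by fun_prop) x b))]
      ring
    rw [h2]
    field_simp
  calc ∫ u in x..b, (u - x) * g u ≤ _ := hcomp
    _ = (b - x) ^ 2 * (2 * B + X) / 6 := hcalc
    _ = (b - x) ^ 2 * (X + 2 * B) / 6 := by ring

theorem thm_2_1 (f f' : ℝ → ℝ) (a b c d : ℝ) (hab : a < b)
    (hca : c < a) (hbd : b < d)
    (hf : ∀ y ∈ Set.Ioo c d, HasDerivAt f (f' y) y)
    (hint : IntervalIntegrable f' volume a b)
    (hconv : ConvexOn ℝ (Set.Icc a b) (fun y => |f' y|))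
    (x : ℝ) (hx : x ∈ Set.Icc a b) :
    |((b - x) * f b + (x - a) * f a) / (b - a) - (1 / (b - a)) * ∫ u in a..b, f u|
      ≤ ((x - a) ^ 2 / (b - a)) * ((|f' x| + 2 * |f' a|) / 6)
        + ((b - x) ^ 2 / (b - a)) * ((|f' x| + 2 * |f' b|) / 6) := by
  obtain ⟨hax, hxb⟩ := hx
  have hba : (0:ℝ) < b - a := by linarith
  have hsub : Set.uIcc a b ⊆ Set.Ioo c d := by
    rw [Set.uIcc_of_le hab.le]
    exact fun y hy => ⟨by linarith [hy.1], by linarith [hy.2]⟩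
  -- integration by parts identity
  have hid : ∫ u in a..b, (u - x) * f' u
      = (b - x) * f b + (x - a) * f a - ∫ u in a..b, f u := by
    have h := intervalIntegral.integral_mul_deriv_eq_deriv_mul
      (u := fun y => y - x) (u' := fun _ => (1:ℝ)) (v := f) (v' := f')
      (fun y _ => (hasDerivAt_id y).sub_const x)
      (fun y hy => hf y (hsub hy))
      (Continuous.intervalIntegrable (by fun_prop) a b) hint
    simp only [one_mul] at h
    rw [h]; ring
  -- rewrite LHS
  have hL : ((b - x) * f b + (x - a) * f a) / (b - a) - (1 / (b - a)) * ∫ u in a..b, f u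
      = (1 / (b - a)) * ∫ u in a..b, (u - x) * f' u := by
    rw [hid]; ring
  rw [hL, abs_mul, abs_of_pos (by positivity : (0:ℝ) < 1 / (b - a))]
  -- integrability pieces
  have hintax : IntervalIntegrable f' volume a x :=
    hint.mono_set (Set.uIcc_subset_uIcc (Set.left_mem_uIcc) (by rw [Set.uIcc_of_le hab.le]; exact ⟨hax, hxb⟩))
  have hintxb : IntervalIntegrable f' volume x b :=
    hint.mono_set (Set.uIcc_subset_uIcc (by rw [Set.uIcc_of_le hab.le]; exact ⟨hax, hxb⟩) (Set.right_mem_uIcc))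
  have habs : |∫ u in a..b, (u - x) * f' u| ≤ ∫ u in a..b, |u - x| * |f' u| := by
    have := intervalIntegral.abs_integral_le_integral_abs (μ := volume) (f := fun u => (u - x) * f' u) hab.le
    simpa [abs_mul] using this
  have hsplit : ∫ u in a..b, |u - x| * |f' u|
      = (∫ u in a..x, (x - u) * |f' u|) + ∫ u in x..b, (u - x) * |f' u| := by
    have h1 : IntervalIntegrable (fun u => |u - x| * |f' u|) volume a x :=
      hintax.abs.continuousOn_mul (by fun_prop)
    have h2 : IntervalIntegrable (fun u => |u - x| * |f' u|) volume x b :=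
      hintxb.abs.continuousOn_mul (by fun_prop)
    rw [← intervalIntegral.integral_add_adjacent_intervals h1 h2]
    congr 1
    · apply intervalIntegral.integral_congr
      intro u hu
      rw [Set.uIcc_of_le hax] at hu
      show |u - x| * |f' u| = (x - u) * |f' u|
      rw [abs_of_nonpos (by linarith [hu.2] : u - x ≤ 0)]
      ring
    · apply intervalIntegral.integral_congr
      intro u hu
      rw [Set.uIcc_of_le hxb] at hu
      show |u - x| * |f' u| = (u - x) * |f' u|
      rw [abs_of_nonneg (by linarith [hu.1] : (0:ℝ) ≤ u - x)]
  -- convexity bounds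
  have hbound1 : ∀ u ∈ Set.Icc a x, (x - a) * |f' u| ≤ (x - u) * |f' a| + (u - a) * |f' x| := by
    intro u hu
    rcases eq_or_lt_of_le hax with rfl | hlt
    · have : u = a := le_antisymm hu.2 hu.1
      subst this; simp
    · have hpos : (0:ℝ) < x - a := by linarith
      have ht1 : (0:ℝ) ≤ (x - u) / (x - a) := by
        apply div_nonneg (by linarith [hu.2]) hpos.le
      have ht2 : (0:ℝ) ≤ (u - a) / (x - a) := by
        apply div_nonneg (by linarith [hu.1]) hpos.le
      have hts : (x - u) / (x - a) + (u - a) / (x - a) = 1 := by field_simp; ring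
      have hc := hconv.2 (Set.left_mem_Icc.2 hab.le) (⟨hax, hxb⟩ : x ∈ Set.Icc a b) ht1 ht2 hts
      have hne : x - a ≠ 0 := hpos.ne'
      have heq : ((x - u) / (x - a)) • a + ((u - a) / (x - a)) • x = u := by
        rw [smul_eq_mul, smul_eq_mul]; field_simp; ring
      rw [heq] at hc
      simp only [smul_eq_mul] at hc
      have := mul_le_mul_of_nonneg_left hc hpos.le
      calc (x - a) * |f' u| ≤ (x - a) * ((x - u) / (x - a) * |f' a| + (u - a) / (x - a) * |f' x|) := this
        _ = (x - u) * |f' a| + (u - a) * |f' x| := by field_simp; try ring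
  have hbound2 : ∀ u ∈ Set.Icc x b, (b - x) * |f' u| ≤ (b - u) * |f' x| + (u - x) * |f' b| := by
    intro u hu
    rcases eq_or_lt_of_le hxb with rfl | hlt
    · have : u = x := le_antisymm hu.2 hu.1
      subst this; simp
    · have hpos : (0:ℝ) < b - x := by linarith
      have ht1 : (0:ℝ) ≤ (b - u) / (b - x) := by
        apply div_nonneg (by linarith [hu.2]) hpos.le
      have ht2 : (0:ℝ) ≤ (u - x) / (b - x) := by
        apply div_nonneg (by linarith [hu.1]) hpos.le
      have hts : (b - u) / (b - x) + (u - x) / (b - x) = 1 := by field_simp; ring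
      have hc := hconv.2 (⟨hax, hxb⟩ : x ∈ Set.Icc a b) (Set.right_mem_Icc.2 hab.le) ht1 ht2 hts
      have hne : b - x ≠ 0 := hpos.ne'
      have heq : ((b - u) / (b - x)) • x + ((u - x) / (b - x)) • b = u := by
        rw [smul_eq_mul, smul_eq_mul]; field_simp; ring
      rw [heq] at hc
      simp only [smul_eq_mul] at hc
      have := mul_le_mul_of_nonneg_left hc hpos.le
      calc (b - x) * |f' u| ≤ (b - x) * ((b - u) / (b - x) * |f' x| + (u - x) / (b - x) * |f' b|) := this
        _ = (b - u) * |f' x| + (u - x) * |f' b| := by field_simp; try ring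
  have h1 := helper1 (fun u => |f' u|) a x (|f' a|) (|f' x|) hax hintax.abs
    (fun u _ => abs_nonneg _) hbound1
  have h2 := helper2 (fun u => |f' u|) x b (|f' b|) (|f' x|) hxb hintxb.abs
    (fun u _ => abs_nonneg _) hbound2
  have hfinal : |∫ u in a..b, (u - x) * f' u|
      ≤ (x - a) ^ 2 * (|f' x| + 2 * |f' a|) / 6 + (b - x) ^ 2 * (|f' x| + 2 * |f' b|) / 6 := by
    calc |∫ u in a..b, (u - x) * f' u| ≤ ∫ u in a..b, |u - x| * |f' u| := habs
      _ = (∫ u in a..x, (x - u) * |f' u|) + ∫ u in x..b, (u - x) * |f' u| := hsplit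
      _ ≤ (x - a) ^ 2 * (|f' x| + 2 * |f' a|) / 6 + (b - x) ^ 2 * (|f' x| + 2 * |f' b|) / 6 := by
          apply add_le_add
          · simpa using h1
          · simpa using h2
  calc 1 / (b - a) * |∫ u in a..b, (u - x) * f' u|
      ≤ 1 / (b - a) * ((x - a) ^ 2 * (|f' x| + 2 * |f' a|) / 6 + (b - x) ^ 2 * (|f' x| + 2 * |f' b|) / 6) := by
        apply mul_le_mul_of_nonneg_left hfinal (by positivity)
    _ = ((x - a) ^ 2 / (b - a)) * ((|f' x| + 2 * |f' a|) / 6)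
        + ((b - x) ^ 2 / (b - a)) * ((|f' x| + 2 * |f' b|) / 6) := by
        field_simp
        try ring
end

section
/- Let f be differentiable on an interval containing [a,b] with a < b, f' integrable, and |f'| convex on [a,b]. Then |(f(a)+f(b))/2 - (1/(b-a))·∫_a^b f(u) du| ≤ ((b-a)/12)·(|f'(a)| + |f'((a+b)/2)| + |f'(b)|). -/
open MeasureTheory intervalIntegral

lemma int_quad (p q α β γ : ℝ) :
    ∫ u in p..q, (α + β*u + γ*u^2) = α*(q-p) + β*(q^2-p^2)/2 + γ*(q^3-p^3)/3 := by
  have h : ∀ u ∈ Set.uIcc p q,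
      HasDerivAt (fun u : ℝ => α*u + β*u^2/2 + γ*u^3/3) (α + β*u + γ*u^2) u := by
    intro u _
    have h1 : HasDerivAt (fun u : ℝ => α*u) α u := by
      simpa using (hasDerivAt_id u).const_mul α
    have h2 : HasDerivAt (fun u : ℝ => β*u^2/2) (β*u) u := by
      have := ((hasDerivAt_pow 2 u).const_mul β).div_const 2
      refine this.congr_deriv ?_
      push_cast
      ring
    have h3 : HasDerivAt (fun u : ℝ => γ*u^3/3) (γ*u^2) u := by
      have := ((hasDerivAt_pow 3 u).const_mul γ).div_const 3
      refine this.congr_deriv ?_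
      push_cast
      ring
    exact (h1.add h2).add h3
  have hc : IntervalIntegrable (fun u : ℝ => α + β*u + γ*u^2) volume p q := by
    apply Continuous.intervalIntegrable
    continuity
  rw [integral_eq_sub_of_hasDerivAt h hc]
  ring

theorem cor_2_1 (f f' : ℝ → ℝ) (a b c d : ℝ) (hab : a < b)
    (hca : c < a) (hbd : b < d)
    (hf : ∀ y ∈ Set.Ioo c d, HasDerivAt f (f' y) y)
    (hint : IntervalIntegrable f' volume a b)
    (hconv : ConvexOn ℝ (Set.Icc a b) (fun y => |f' y|)) :
    |(f a + f b) / 2 - (1 / (b - a)) * ∫ u in a..b, f u|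
      ≤ ((b - a) / 12) * (|f' a| + |f' ((a + b) / 2)| + |f' b|) := by
  have hab' : (0:ℝ) < b - a := by linarith
  set m : ℝ := (a + b) / 2 with hm
  have ham : a < m := by rw [hm]; linarith
  have hmb : m < b := by rw [hm]; linarith
  set A : ℝ := |f' a| with hA
  set B : ℝ := |f' m| with hB
  set C : ℝ := |f' b| with hC
  have hA0 : 0 ≤ A := abs_nonneg _
  have hB0 : 0 ≤ B := abs_nonneg _
  have hC0 : 0 ≤ C := abs_nonneg _
  have hIccsub : Set.Icc a b ⊆ Set.Ioo c d := fun x hx =>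
    ⟨lt_of_lt_of_le hca hx.1, lt_of_le_of_lt hx.2 hbd⟩
  have huIcc : Set.uIcc a b = Set.Icc a b := Set.uIcc_of_le hab.le
  -- integration by parts
  have hparts : ∫ u in a..b, (u - m) * f' u
      = (b - m) * f b - (a - m) * f a - ∫ u in a..b, f u := by
    have hu : ∀ x ∈ Set.uIcc a b, HasDerivAt (fun u : ℝ => u - m) 1 x := by
      intro x _; simpa using (hasDerivAt_id x).sub_const m
    have hv : ∀ x ∈ Set.uIcc a b, HasDerivAt f (f' x) x := by
      intro x hx; exact hf x (hIccsub (huIcc ▸ hx))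
    have h1 : IntervalIntegrable (fun _ : ℝ => (1:ℝ)) volume a b := intervalIntegrable_const
    have := integral_mul_deriv_eq_deriv_mul hu hv h1 hint
    simpa using this
  have key : (f a + f b) / 2 - (1 / (b - a)) * ∫ u in a..b, f u
      = (1/(b-a)) * ∫ u in a..b, (u - m) * f' u := by
    rw [hparts, hm]
    field_simp
    ring
  -- integrability of the absolute integrand
  have hIg : IntervalIntegrable (fun u => |u - m| * |f' u|) volume a b := by
    apply hint.abs.continuousOn_mul
    exact (continuous_abs.comp (continuous_id.sub continuous_const)).continuousOn
  have hg1 : IntervalIntegrable (fun u => |u - m| * |f' u|) volume a m := by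
    apply hIg.mono_set
    rw [huIcc, Set.uIcc_of_le ham.le]
    exact Set.Icc_subset_Icc le_rfl hmb.le
  have hg2 : IntervalIntegrable (fun u => |u - m| * |f' u|) volume m b := by
    apply hIg.mono_set
    rw [huIcc, Set.uIcc_of_le hmb.le]
    exact Set.Icc_subset_Icc ham.le le_rfl
  -- pointwise convexity bounds
  have hma : (0:ℝ) < m - a := by linarith
  have hbm : (0:ℝ) < b - m := by linarith
  have hmem_a : a ∈ Set.Icc a b := ⟨le_rfl, hab.le⟩
  have hmem_b : b ∈ Set.Icc a b := ⟨hab.le, le_rfl⟩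
  have hmem_m : m ∈ Set.Icc a b := ⟨ham.le, hmb.le⟩
  have hBnd1 : ∀ u ∈ Set.Icc a m, |u - m| * |f' u|
      ≤ ((m-u)*((m-u)*A + (u-a)*B))/(m-a) := by
    intro u hu
    have hs : (0:ℝ) ≤ (m-u)/(m-a) := div_nonneg (by linarith [hu.2]) hma.le
    have ht : (0:ℝ) ≤ (u-a)/(m-a) := div_nonneg (by linarith [hu.1]) hma.le
    have hst : (m-u)/(m-a) + (u-a)/(m-a) = 1 := by field_simp; ring
    have hcomb : ((m-u)/(m-a)) • a + ((u-a)/(m-a)) • m = u := by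
      simp only [smul_eq_mul]
      field_simp
      ring
    have hcv := hconv.2 hmem_a hmem_m hs ht hst
    rw [hcomb] at hcv
    simp only [smul_eq_mul] at hcv
    have habsu : |u - m| = m - u := by
      rw [abs_sub_comm]; exact abs_of_nonneg (by linarith [hu.2])
    rw [habsu]
    have h2 : (m-u) * |f' u| ≤ (m-u) * ((m-u)/(m-a) * A + (u-a)/(m-a) * B) :=
      mul_le_mul_of_nonneg_left hcv (by linarith [hu.2])
    have h3 : (m-u) * ((m-u)/(m-a) * A + (u-a)/(m-a) * B)
        = ((m-u)*((m-u)*A + (u-a)*B))/(m-a) := by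
      field_simp
    linarith [h2, h3.le, h3.ge]
  have hBnd2 : ∀ u ∈ Set.Icc m b, |u - m| * |f' u|
      ≤ ((u-m)*((b-u)*B + (u-m)*C))/(b-m) := by
    intro u hu
    have hs : (0:ℝ) ≤ (b-u)/(b-m) := div_nonneg (by linarith [hu.2]) hbm.le
    have ht : (0:ℝ) ≤ (u-m)/(b-m) := div_nonneg (by linarith [hu.1]) hbm.le
    have hst : (b-u)/(b-m) + (u-m)/(b-m) = 1 := by field_simp; ring
    have hcomb : ((b-u)/(b-m)) • m + ((u-m)/(b-m)) • b = u := by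
      simp only [smul_eq_mul]
      field_simp
      ring
    have hcv := hconv.2 hmem_m hmem_b hs ht hst
    rw [hcomb] at hcv
    simp only [smul_eq_mul] at hcv
    have habsu : |u - m| = u - m := abs_of_nonneg (by linarith [hu.1])
    rw [habsu]
    have h2 : (u-m) * |f' u| ≤ (u-m) * ((b-u)/(b-m) * B + (u-m)/(b-m) * C) :=
      mul_le_mul_of_nonneg_left hcv (by linarith [hu.1])
    have h3 : (u-m) * ((b-u)/(b-m) * B + (u-m)/(b-m) * C)
        = ((u-m)*((b-u)*B + (u-m)*C))/(b-m) := by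
      field_simp
    linarith [h2, h3.le, h3.ge]
  -- integrals of the quadratic majorants
  have hq1 : ∀ u : ℝ, ((m-u)*((m-u)*A + (u-a)*B))/(m-a)
      = (A*m^2 - B*m*a)/(m-a) + ((B*(m+a) - 2*A*m)/(m-a))*u + ((A-B)/(m-a))*u^2 := by
    intro u; field_simp; ring
  have hq2 : ∀ u : ℝ, ((u-m)*((b-u)*B + (u-m)*C))/(b-m)
      = (C*m^2 - B*m*b)/(b-m) + ((B*(b+m) - 2*C*m)/(b-m))*u + ((C-B)/(b-m))*u^2 := by
    intro u; field_simp; ring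
  have hI1 : ∫ u in a..m, ((m-u)*((m-u)*A + (u-a)*B))/(m-a) = (m-a)^2*(2*A+B)/6 := by
    simp only [hq1]
    rw [int_quad]
    field_simp
    ring
  have hI2 : ∫ u in m..b, ((u-m)*((b-u)*B + (u-m)*C))/(b-m) = (b-m)^2*(B+2*C)/6 := by
    simp only [hq2]
    rw [int_quad]
    field_simp
    ring
  have hcont1 : IntervalIntegrable (fun u => ((m-u)*((m-u)*A + (u-a)*B))/(m-a)) volume a m := by
    apply Continuous.intervalIntegrable
    fun_prop
  have hcont2 : IntervalIntegrable (fun u => ((u-m)*((b-u)*B + (u-m)*C))/(b-m)) volume m b := by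
    apply Continuous.intervalIntegrable
    fun_prop
  have hM1 : ∫ u in a..m, |u - m| * |f' u| ≤ (m-a)^2*(2*A+B)/6 := by
    rw [← hI1]
    exact integral_mono_on ham.le hg1 hcont1 hBnd1
  have hM2 : ∫ u in m..b, |u - m| * |f' u| ≤ (b-m)^2*(B+2*C)/6 := by
    rw [← hI2]
    exact integral_mono_on hmb.le hg2 hcont2 hBnd2
  have hsplit : ∫ u in a..b, |u - m| * |f' u|
      = (∫ u in a..m, |u - m| * |f' u|) + ∫ u in m..b, |u - m| * |f' u| :=
    (integral_add_adjacent_intervals hg1 hg2).symm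
  have hItot : ∫ u in a..b, |u - m| * |f' u| ≤ (b-a)^2*(A+B+C)/12 := by
    rw [hsplit]
    have hma2 : (m-a)^2*(2*A+B)/6 + (b-m)^2*(B+2*C)/6 = (b-a)^2*(A+B+C)/12 := by
      rw [hm]; ring
    linarith
  -- put it together
  have habs2 : |∫ u in a..b, (u - m) * f' u| ≤ ∫ u in a..b, |u - m| * |f' u| := by
    have h := intervalIntegral.abs_integral_le_integral_abs (μ := volume) (f := fun u => (u - m) * f' u) hab.le
    simpa [abs_mul] using h
  rw [key, abs_mul, abs_of_pos (by positivity : (0:ℝ) < 1/(b-a))]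
  have hfin : (1/(b-a)) * |∫ u in a..b, (u - m) * f' u|
      ≤ (1/(b-a)) * ((b-a)^2*(A+B+C)/12) := by
    apply mul_le_mul_of_nonneg_left _ (by positivity)
    linarith
  have : (1/(b-a)) * ((b-a)^2*(A+B+C)/12) = ((b-a)/12)*(A+B+C) := by
    field_simp
  exact hfin.trans_eq this
end

section
/- Let f be differentiable with f' integrable on [a,b], a < b, p > 1, q = p/(p-1), and suppose |f'|^q is convex on [a,b]. Then for each x ∈ [a,b], |((b-x)·f(b) + (x-a)·f(a))/(b-a) - (1/(b-a))·∫_a^b f(u) du| ≤ (1/(p+1))^{1/p} · (1/2)^{1/q} · [ (x-a)²·(|f'(a)|^q + |f'(x)|^q)^{1/q} + (b-x)²·(|f'(x)|^q + |f'(b)|^q)^{1/q} ] / (b-a). -/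
open MeasureTheory intervalIntegral

private lemma trap_convex {g : ℝ → ℝ} {s t : ℝ} (hst : s ≤ t)
    (hg : ConvexOn ℝ (Set.Icc s t) g) (hgi : IntervalIntegrable g volume s t) :
    ∫ u in s..t, g u ≤ (t - s) * (g s + g t) / 2 := by
  rcases eq_or_lt_of_le hst with rfl | hlt
  · simp
  · have hts : (0:ℝ) < t - s := by linarith
    have hbound : ∀ u ∈ Set.Icc s t,
        g u ≤ g s / (t - s) * (t - u) + g t / (t - s) * (u - s) := by
      intro u hu
      have h1 : (0:ℝ) ≤ (t - u) / (t - s) := by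
        apply div_nonneg <;> linarith [hu.2]
      have h2 : (0:ℝ) ≤ (u - s) / (t - s) := by
        apply div_nonneg <;> linarith [hu.1]
      have h3 : (t - u) / (t - s) + (u - s) / (t - s) = 1 := by field_simp; ring
      have h4 : ((t - u) / (t - s)) • s + ((u - s) / (t - s)) • t = u := by
        simp only [smul_eq_mul]; field_simp; ring
      have h5 := hg.2 (Set.left_mem_Icc.2 hst) (Set.right_mem_Icc.2 hst) h1 h2 h3
      rw [h4] at h5
      calc g u ≤ ((t - u) / (t - s)) • g s + ((u - s) / (t - s)) • g t := h5
        _ = g s / (t - s) * (t - u) + g t / (t - s) * (u - s) := by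
            simp only [smul_eq_mul]; ring
    have hc1 : IntervalIntegrable (fun u => g s / (t - s) * (t - u) + g t / (t - s) * (u - s))
        volume s t := by
      apply Continuous.intervalIntegrable; fun_prop
    calc ∫ u in s..t, g u
        ≤ ∫ u in s..t, (g s / (t - s) * (t - u) + g t / (t - s) * (u - s)) :=
          intervalIntegral.integral_mono_on hst hgi hc1 hbound
      _ = (t - s) * (g s + g t) / 2 := by
          have e1 : (∫ u in s..t, (t - u)) = (t - s) ^ 2 / 2 := by
            rw [intervalIntegral.integral_sub intervalIntegrable_const intervalIntegrable_id,
              integral_id, intervalIntegral.integral_const, smul_eq_mul]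
            ring
          have e2 : (∫ u in s..t, (u - s)) = (t - s) ^ 2 / 2 := by
            rw [intervalIntegral.integral_sub intervalIntegrable_id intervalIntegrable_const,
              integral_id, intervalIntegral.integral_const, smul_eq_mul]
            ring
          have i1 : IntervalIntegrable (fun u => g s / (t - s) * (t - u)) volume s t :=
            Continuous.intervalIntegrable (by fun_prop) s t
          have i2 : IntervalIntegrable (fun u => g t / (t - s) * (u - s)) volume s t :=
            Continuous.intervalIntegrable (by fun_prop) s t
          rw [intervalIntegral.integral_add i1 i2, intervalIntegral.integral_const_mul,
            intervalIntegral.integral_const_mul, e1, e2]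
          field_simp

private lemma alg_combine {p q A S : ℝ} (hpq : Real.HolderConjugate p q) (hA : 0 ≤ A) (hS : 0 ≤ S) :
    (A ^ (p + 1) / (p + 1)) ^ (1 / p) * (A * S / 2) ^ (1 / q)
      = (1 / (p + 1)) ^ (1 / p) * (1 / 2 : ℝ) ^ (1 / q) * (A ^ 2 * S ^ (1 / q)) := by
  have hp0 : (0:ℝ) < p := hpq.pos
  have hp1 : (0:ℝ) < p + 1 := by linarith [hpq.lt]
  have hq0 : (0:ℝ) < q := hpq.symm.pos
  have hApow : (0:ℝ) ≤ A ^ (p + 1) := Real.rpow_nonneg hA _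
  have hinv : 1 / p + 1 / q = 1 := by
    rw [one_div, one_div]; exact hpq.inv_add_inv_eq_one
  have hexp : (p + 1) * (1 / p) + 1 / q = 2 := by
    have h1q : 1 / q = 1 - 1 / p := by linarith
    rw [h1q]
    field_simp
    ring
  have key : A ^ ((p + 1) * (1 / p)) * A ^ (1 / q) = A ^ (2:ℝ) := by
    rw [← Real.rpow_add' hA (by rw [hexp]; norm_num), hexp]
  have e1 : A ^ (p + 1) / (p + 1) = A ^ (p + 1) * (1 / (p + 1)) := by ring
  have e2 : A * S / 2 = A * S * (1 / 2) := by ring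
  calc (A ^ (p + 1) / (p + 1)) ^ (1 / p) * (A * S / 2) ^ (1 / q)
      = A ^ ((p + 1) * (1 / p)) * (1 / (p + 1)) ^ (1 / p)
          * (A ^ (1 / q) * S ^ (1 / q) * (1 / 2 : ℝ) ^ (1 / q)) := by
        rw [e1, e2, Real.mul_rpow hApow (by positivity),
          Real.mul_rpow (mul_nonneg hA hS) (by norm_num), Real.mul_rpow hA hS,
          ← Real.rpow_mul hA]
    _ = (1 / (p + 1)) ^ (1 / p) * (1 / 2 : ℝ) ^ (1 / q)
          * (A ^ ((p + 1) * (1 / p)) * A ^ (1 / q) * S ^ (1 / q)) := by ring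
    _ = (1 / (p + 1)) ^ (1 / p) * (1 / 2 : ℝ) ^ (1 / q) * (A ^ 2 * S ^ (1 / q)) := by
        rw [key, Real.rpow_two]

theorem thm_2_2 (f f' : ℝ → ℝ) (a b c d : ℝ) (hab : a < b)
    (hca : c < a) (hbd : b < d)
    (hf : ∀ y ∈ Set.Ioo c d, HasDerivAt f (f' y) y)
    (hint : IntervalIntegrable f' volume a b)
    (p q : ℝ) (hp : 1 < p) (hq : q = p / (p - 1))
    (hconv : ConvexOn ℝ (Set.Icc a b) (fun y => |f' y| ^ q))
    (x : ℝ) (hx : x ∈ Set.Icc a b) :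
    |((b - x) * f b + (x - a) * f a) / (b - a) - (1 / (b - a)) * ∫ u in a..b, f u|
      ≤ (1 / (p + 1)) ^ (1 / p) * (1 / 2 : ℝ) ^ (1 / q) *
        (((x - a) ^ 2 * (|f' a| ^ q + |f' x| ^ q) ^ (1 / q)
          + (b - x) ^ 2 * (|f' x| ^ q + |f' b| ^ q) ^ (1 / q)) / (b - a)) := by
  obtain ⟨hax, hxb⟩ := hx
  have hpq : p.HolderConjugate q := (Real.holderConjugate_iff_eq_conjExponent hp).2 hq
  have hp0 : (0:ℝ) < p := hpq.pos
  have hq0 : (0:ℝ) < q := hpq.symm.pos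
  have hba : (0:ℝ) < b - a := by linarith
  have hIab : Set.Icc a b ⊆ Set.Ioo c d := fun y hy =>
    ⟨lt_of_lt_of_le hca hy.1, lt_of_le_of_lt hy.2 hbd⟩
  -- measurability of f' on subintervals
  have hmeas : ∀ s t : ℝ, a ≤ s → t ≤ b →
      AEStronglyMeasurable f' (volume.restrict (Set.Ioc s t)) := by
    intro s t hs ht
    refine (measurable_deriv f).aestronglyMeasurable.congr ?_
    filter_upwards [ae_restrict_mem measurableSet_Ioc] with y hy
    exact (hf y (hIab ⟨le_trans hs hy.1.le, le_trans hy.2 ht⟩)).deriv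
  -- bound on |f'|^q from convexity
  have hGbound : ∀ u ∈ Set.Icc a b, |f' u| ^ q ≤ max (|f' a| ^ q) (|f' b| ^ q) := by
    intro u hu
    exact hconv.le_on_segment (Set.left_mem_Icc.2 hab.le) (Set.right_mem_Icc.2 hab.le)
      (by rwa [segment_eq_Icc hab.le])
  have habs_bound : ∀ u ∈ Set.Icc a b, |f' u| ≤ max |f' a| |f' b| := by
    intro u hu
    have h1 := hGbound u hu
    have h2 : max (|f' a| ^ q) (|f' b| ^ q) ≤ (max |f' a| |f' b|) ^ q :=
      max_le (Real.rpow_le_rpow (abs_nonneg _) (le_max_left _ _) hq0.le)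
        (Real.rpow_le_rpow (abs_nonneg _) (le_max_right _ _) hq0.le)
    exact (Real.rpow_le_rpow_iff (abs_nonneg _)
      (le_trans (abs_nonneg _) (le_max_left _ _)) hq0).1 (h1.trans h2)
  -- the key per-side estimate
  have key : ∀ w : ℝ → ℝ, Continuous w → ∀ s t : ℝ, a ≤ s → s ≤ t → t ≤ b →
      (∀ u ∈ Set.Ioc s t, 0 ≤ w u ∧ w u ≤ t - s) →
      (∫ u in s..t, w u ^ p) = (t - s) ^ (p + 1) / (p + 1) →
      (∫ u in s..t, w u * |f' u|)
        ≤ (1 / (p + 1)) ^ (1 / p) * (1 / 2 : ℝ) ^ (1 / q)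
          * ((t - s) ^ 2 * (|f' s| ^ q + |f' t| ^ q) ^ (1 / q)) := by
    intro w hw s t hs hst htb hwb hwp
    haveI : IsFiniteMeasure (volume.restrict (Set.Ioc s t)) :=
      ⟨by rw [Measure.restrict_apply_univ]; exact measure_Ioc_lt_top⟩
    have hsub : Set.Ioc s t ⊆ Set.Icc a b := fun u hu => ⟨le_trans hs hu.1.le, le_trans hu.2 htb⟩
    -- Memℒp for w
    have hwm : MemLp w (ENNReal.ofReal p) (volume.restrict (Set.Ioc s t)) := by
      refine MemLp.mono_exponent (q := ⊤) ?_ le_top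
      refine memLp_top_of_bound hw.aestronglyMeasurable (t - s) ?_
      filter_upwards [ae_restrict_mem measurableSet_Ioc] with u hu
      rw [Real.norm_eq_abs, abs_of_nonneg (hwb u hu).1]
      exact (hwb u hu).2
    -- Memℒp for |f'|
    have hfm : MemLp (fun u => |f' u|) (ENNReal.ofReal q) (volume.restrict (Set.Ioc s t)) := by
      refine MemLp.mono_exponent (q := ⊤) ?_ le_top
      refine memLp_top_of_bound ?_ (max |f' a| |f' b|) ?_
      · simpa [Real.norm_eq_abs] using (hmeas s t hs htb).norm
      · filter_upwards [ae_restrict_mem measurableSet_Ioc] with u hu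
        rw [Real.norm_eq_abs, abs_abs]
        exact habs_bound u (hsub hu)
    have hold := integral_mul_le_Lp_mul_Lq_of_nonneg hpq
      (f := w) (g := fun u => |f' u|)
      (by filter_upwards [ae_restrict_mem measurableSet_Ioc] with u hu
          exact (hwb u hu).1)
      (Filter.Eventually.of_forall (fun u => abs_nonneg _)) hwm hfm
    -- convert set integrals to interval integrals
    rw [← intervalIntegral.integral_of_le hst, ← intervalIntegral.integral_of_le hst,
      ← intervalIntegral.integral_of_le hst] at hold
    -- integrability of |f'|^q
    have hGi : IntervalIntegrable (fun u => |f' u| ^ q) volume s t := by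
      rw [intervalIntegrable_iff_integrableOn_Ioc_of_le hst]
      refine ⟨((Real.continuous_rpow_const hq0.le).comp
        continuous_abs).comp_aestronglyMeasurable (hmeas s t hs htb), ?_⟩
      refine HasFiniteIntegral.of_bounded (C := max (|f' a| ^ q) (|f' b| ^ q)) ?_
      filter_upwards [ae_restrict_mem measurableSet_Ioc] with u hu
      rw [Real.norm_eq_abs, abs_of_nonneg (Real.rpow_nonneg (abs_nonneg _) _)]
      exact hGbound u (hsub hu)
    have htrap : (∫ u in s..t, |f' u| ^ q)
        ≤ (t - s) * (|f' s| ^ q + |f' t| ^ q) / 2 :=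
      trap_convex hst (hconv.subset (Set.Icc_subset_Icc hs htb) (convex_Icc s t)) hGi
    have hfac1 : (0:ℝ) ≤ ((t - s) ^ (p + 1) / (p + 1)) ^ (1 / p) :=
      Real.rpow_nonneg (div_nonneg (Real.rpow_nonneg (by linarith) _) (by linarith)) _
    calc (∫ u in s..t, w u * |f' u|)
        ≤ (∫ u in s..t, w u ^ p) ^ (1 / p) * (∫ u in s..t, |f' u| ^ q) ^ (1 / q) := hold
      _ ≤ ((t - s) ^ (p + 1) / (p + 1)) ^ (1 / p)
            * ((t - s) * (|f' s| ^ q + |f' t| ^ q) / 2) ^ (1 / q) := by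
          rw [hwp]
          refine mul_le_mul_of_nonneg_left ?_ hfac1
          exact Real.rpow_le_rpow (intervalIntegral.integral_nonneg hst
            (fun u _ => Real.rpow_nonneg (abs_nonneg _) _)) htrap (by positivity)
      _ = (1 / (p + 1)) ^ (1 / p) * (1 / 2 : ℝ) ^ (1 / q)
            * ((t - s) ^ 2 * (|f' s| ^ q + |f' t| ^ q) ^ (1 / q)) :=
          alg_combine hpq (by linarith) (by positivity)
  -- integration by parts identity
  have hderivs : ∀ y ∈ Set.uIcc a b, HasDerivAt f (f' y) y := fun y hy =>
    hf y (hIab (by rwa [Set.uIcc_of_le hab.le] at hy))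
  have hu : ∀ y ∈ Set.uIcc a b, HasDerivAt (fun z => z - x) (1:ℝ) y := fun y _ =>
    (hasDerivAt_id y).sub_const x
  have hparts := integral_mul_deriv_eq_deriv_mul hu hderivs intervalIntegrable_const hint
  simp only [one_mul] at hparts
  have hLHS : ((b - x) * f b + (x - a) * f a) / (b - a) - (1 / (b - a)) * ∫ u in a..b, f u
      = (∫ y in a..b, (y - x) * f' y) / (b - a) := by
    rw [hparts]; field_simp; ring
  -- splitting the integral
  have hsub1 : Set.uIcc a x ⊆ Set.uIcc a b := by
    rw [Set.uIcc_of_le hax, Set.uIcc_of_le hab.le]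
    exact Set.Icc_subset_Icc le_rfl hxb
  have hsub2 : Set.uIcc x b ⊆ Set.uIcc a b := by
    rw [Set.uIcc_of_le hxb, Set.uIcc_of_le hab.le]
    exact Set.Icc_subset_Icc hax le_rfl
  have hi1 : IntervalIntegrable (fun y => (y - x) * f' y) volume a x :=
    (hint.mono_set hsub1).continuousOn_mul ((continuous_id.sub continuous_const).continuousOn)
  have hi2 : IntervalIntegrable (fun y => (y - x) * f' y) volume x b :=
    (hint.mono_set hsub2).continuousOn_mul ((continuous_id.sub continuous_const).continuousOn)
  have hsplit : (∫ y in a..b, (y - x) * f' y)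
      = (∫ y in a..x, (y - x) * f' y) + ∫ y in x..b, (y - x) * f' y :=
    (integral_add_adjacent_intervals hi1 hi2).symm
  have hc1 : (∫ y in a..x, |(y - x) * f' y|) = ∫ y in a..x, (x - y) * |f' y| := by
    refine intervalIntegral.integral_congr fun y hy => ?_
    rw [Set.uIcc_of_le hax] at hy
    rw [abs_mul, abs_of_nonpos (by linarith [hy.2] : y - x ≤ 0)]
    ring
  have hc2 : (∫ y in x..b, |(y - x) * f' y|) = ∫ y in x..b, (y - x) * |f' y| := by
    refine intervalIntegral.integral_congr fun y hy => ?_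
    rw [Set.uIcc_of_le hxb] at hy
    rw [abs_mul, abs_of_nonneg (by linarith [hy.1] : (0:ℝ) ≤ y - x)]
  -- weight integrals
  have hwp1 : (∫ y in a..x, (x - y) ^ p) = (x - a) ^ (p + 1) / (p + 1) := by
    rw [intervalIntegral.integral_comp_sub_left (fun z => z ^ p) x, sub_self,
      integral_rpow (Or.inl (by linarith : (-1:ℝ) < p)),
      Real.zero_rpow (by positivity : p + 1 ≠ 0), sub_zero]
  have hwp2 : (∫ y in x..b, (y - x) ^ p) = (b - x) ^ (p + 1) / (p + 1) := by
    rw [intervalIntegral.integral_comp_sub_right (fun z => z ^ p) x, sub_self,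
      integral_rpow (Or.inl (by linarith : (-1:ℝ) < p)),
      Real.zero_rpow (by positivity : p + 1 ≠ 0), sub_zero]
  have hT1 := key (fun y => x - y) (by fun_prop) a x le_rfl hax hxb
    (fun u hu => ⟨show (0:ℝ) ≤ x - u by linarith [hu.2], show x - u ≤ x - a by linarith [hu.1]⟩) hwp1
  have hT2 := key (fun y => y - x) (by fun_prop) x b hax hxb le_rfl
    (fun u hu => ⟨show (0:ℝ) ≤ u - x by linarith [hu.1], show u - x ≤ b - x by linarith [hu.2]⟩) hwp2
  have hnum : |∫ y in a..b, (y - x) * f' y|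
      ≤ (1 / (p + 1)) ^ (1 / p) * (1 / 2 : ℝ) ^ (1 / q)
          * ((x - a) ^ 2 * (|f' a| ^ q + |f' x| ^ q) ^ (1 / q))
        + (1 / (p + 1)) ^ (1 / p) * (1 / 2 : ℝ) ^ (1 / q)
          * ((b - x) ^ 2 * (|f' x| ^ q + |f' b| ^ q) ^ (1 / q)) := by
    calc |∫ y in a..b, (y - x) * f' y|
        = |(∫ y in a..x, (y - x) * f' y) + ∫ y in x..b, (y - x) * f' y| := by rw [hsplit]
      _ ≤ |∫ y in a..x, (y - x) * f' y| + |∫ y in x..b, (y - x) * f' y| := abs_add_le _ _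
      _ ≤ (∫ y in a..x, |(y - x) * f' y|) + ∫ y in x..b, |(y - x) * f' y| :=
          add_le_add (intervalIntegral.abs_integral_le_integral_abs hax)
            (intervalIntegral.abs_integral_le_integral_abs hxb)
      _ = (∫ y in a..x, (x - y) * |f' y|) + ∫ y in x..b, (y - x) * |f' y| := by rw [hc1, hc2]
      _ ≤ _ := add_le_add hT1 hT2
  rw [hLHS, abs_div, abs_of_pos hba]
  calc |∫ y in a..b, (y - x) * f' y| / (b - a)
      ≤ ((1 / (p + 1)) ^ (1 / p) * (1 / 2 : ℝ) ^ (1 / q)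
          * ((x - a) ^ 2 * (|f' a| ^ q + |f' x| ^ q) ^ (1 / q))
        + (1 / (p + 1)) ^ (1 / p) * (1 / 2 : ℝ) ^ (1 / q)
          * ((b - x) ^ 2 * (|f' x| ^ q + |f' b| ^ q) ^ (1 / q))) / (b - a) :=
        (div_le_div_iff_of_pos_right hba).2 hnum
    _ = (1 / (p + 1)) ^ (1 / p) * (1 / 2 : ℝ) ^ (1 / q) *
        (((x - a) ^ 2 * (|f' a| ^ q + |f' x| ^ q) ^ (1 / q)
          + (b - x) ^ 2 * (|f' x| ^ q + |f' b| ^ q) ^ (1 / q)) / (b - a)) := by ring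
end

section
/- Let f be differentiable with f' integrable on [a,b], a < b, p > 1, q = p/(p-1), and |f'|^q convex on [a,b]. Then |(f(a)+f(b))/2 - (1/(b-a))·∫_a^b f(u) du| ≤ ((b-a)/4)·(1/(p+1))^{1/p}·(1/2)^{1/q}·[ (|f'(a)|^q + |f'((a+b)/2)|^q)^{1/q} + (|f'(b)|^q + |f'((a+b)/2)|^q)^{1/q} ] ≤ ((b-a)/2)·(1/(p+1))^{1/p}·(1/2)^{1/q}·(|f'(a)| + |f'(b)|). -/
open MeasureTheory intervalIntegral

open scoped NNReal

theorem aux_integrable_of_bounded {g : ℝ → ℝ} {s t C : ℝ} (hst : s ≤ t)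
    (hm : AEStronglyMeasurable g (volume.restrict (Set.Ioc s t)))
    (hb : ∀ x ∈ Set.Ioc s t, ‖g x‖ ≤ C) : IntervalIntegrable g volume s t := by
  rw [intervalIntegrable_iff_integrableOn_Ioc_of_le hst]
  refine ⟨hm, MeasureTheory.HasFiniteIntegral.restrict_of_bounded (C := C) ?_ ?_⟩
  · simp [Real.volume_Ioc]
  · exact (ae_restrict_iff' measurableSet_Ioc).2 (Filter.Eventually.of_forall hb)

theorem aux_trapezoid {g : ℝ → ℝ} {s t : ℝ} (hst : s < t)
    (hconv : ConvexOn ℝ (Set.Icc s t) g)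
    (hg : IntervalIntegrable g volume s t) :
    ∫ x in s..t, g x ≤ (t - s) * (g s + g t) / 2 := by
  have hts : (0:ℝ) < t - s := by linarith
  have hle : ∀ x ∈ Set.Icc s t, g x ≤ ((t - x) * g s + (x - s) * g t) / (t - s) := by
    intro x hx
    have h1 : (0:ℝ) ≤ (t - x) / (t - s) := by
      apply div_nonneg <;> [linarith [hx.2]; linarith]
    have h2 : (0:ℝ) ≤ (x - s) / (t - s) := by
      apply div_nonneg <;> [linarith [hx.1]; linarith]
    have h3 : (t - x) / (t - s) + (x - s) / (t - s) = 1 := by field_simp; ring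
    have hc := hconv.2 (Set.left_mem_Icc.2 hst.le) (Set.right_mem_Icc.2 hst.le) h1 h2 h3
    simp only [smul_eq_mul] at hc
    have hxx : (t - x) / (t - s) * s + (x - s) / (t - s) * t = x := by
      rw [div_mul_eq_mul_div, div_mul_eq_mul_div, ← add_div, div_eq_iff hts.ne']
      ring
    rw [hxx] at hc
    calc g x ≤ (t - x) / (t - s) * g s + (x - s) / (t - s) * g t := hc
      _ = ((t - x) * g s + (x - s) * g t) / (t - s) := by ring
  have hlin : IntervalIntegrable (fun x => ((t - x) * g s + (x - s) * g t) / (t - s)) volume s t :=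
    Continuous.intervalIntegrable (by continuity) s t
  calc ∫ x in s..t, g x ≤ ∫ x in s..t, ((t - x) * g s + (x - s) * g t) / (t - s) :=
        intervalIntegral.integral_mono_on hst.le hg hlin hle
    _ = (t - s) * (g s + g t) / 2 := by
        have heq : ∀ x : ℝ, ((t - x) * g s + (x - s) * g t) / (t - s)
            = ((g t - g s)/(t-s)) * x + ((t * g s - s * g t)/(t-s)) := by
          intro x; field_simp; ring
        simp_rw [heq]
        rw [integral_add (Continuous.intervalIntegrable (by continuity) s t)
          intervalIntegrable_const, intervalIntegral.integral_const_mul, integral_id,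
          intervalIntegral.integral_const, smul_eq_mul]
        field_simp
        ring

theorem aux_integral_pow_left {s t pp : ℝ} (h : -1 < pp) :
    ∫ x in s..t, (t - x) ^ pp = (t - s) ^ (pp + 1) / (pp + 1) := by
  rw [intervalIntegral.integral_comp_sub_left (fun x => x ^ pp) t]
  rw [integral_rpow (Or.inl h), sub_self, Real.zero_rpow (by linarith), sub_zero]

theorem aux_integral_pow_right {s t pp : ℝ} (h : -1 < pp) :
    ∫ x in s..t, (x - s) ^ pp = (t - s) ^ (pp + 1) / (pp + 1) := by
  rw [intervalIntegral.integral_comp_sub_right (fun x => x ^ pp) s]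
  rw [integral_rpow (Or.inl h), sub_self, Real.zero_rpow (by linarith), sub_zero]

theorem aux_holder {w g : ℝ → ℝ} {s t p q : ℝ} (hst : s ≤ t)
    (hpq : Real.HolderConjugate p q)
    (hwm : AEStronglyMeasurable w (volume.restrict (Set.Ioc s t)))
    (hgm : AEStronglyMeasurable g (volume.restrict (Set.Ioc s t)))
    (hw0 : ∀ x ∈ Set.Ioc s t, 0 ≤ w x) (hg0 : ∀ x ∈ Set.Ioc s t, 0 ≤ g x)
    {Cw Cg : ℝ} (hbw : ∀ x ∈ Set.Ioc s t, w x ≤ Cw) (hbg : ∀ x ∈ Set.Ioc s t, g x ≤ Cg) :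
    ∫ x in s..t, w x * g x
      ≤ (∫ x in s..t, w x ^ p) ^ (1/p) * (∫ x in s..t, g x ^ q) ^ (1/q) := by
  have hfin : IsFiniteMeasure (volume.restrict (Set.Ioc s t)) := by
    constructor
    rw [Measure.restrict_apply_univ]
    simp [Real.volume_Ioc]
  haveI := hfin
  have hmem : ∀ (h : ℝ → ℝ), AEStronglyMeasurable h (volume.restrict (Set.Ioc s t)) →
      (∀ x ∈ Set.Ioc s t, 0 ≤ h x) → (∀ x ∈ Set.Ioc s t, h x ≤ Cw + Cg) →
      ∀ r : ℝ, MemLp h (ENNReal.ofReal r) (volume.restrict (Set.Ioc s t)) := by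
    intro h hm h0 hb r
    refine MemLp.mono_exponent (q := ⊤) ?_ le_top
    refine memLp_top_of_bound hm (Cw + Cg) ?_
    refine (ae_restrict_iff' measurableSet_Ioc).2 (Filter.Eventually.of_forall ?_)
    intro x hx
    rw [Real.norm_eq_abs, abs_of_nonneg (h0 x hx)]
    exact hb x hx
  have h1 : ∀ x ∈ Set.Ioc s t, w x ≤ Cw + Cg := by
    intro x hx
    have := (hg0 x hx).trans (hbg x hx)
    linarith [hbw x hx]
  have h2 : ∀ x ∈ Set.Ioc s t, g x ≤ Cw + Cg := by
    intro x hx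
    have := (hw0 x hx).trans (hbw x hx)
    linarith [hbg x hx]
  rw [intervalIntegral.integral_of_le hst, intervalIntegral.integral_of_le hst,
    intervalIntegral.integral_of_le hst]
  exact MeasureTheory.integral_mul_le_Lp_mul_Lq_of_nonneg hpq
    ((ae_restrict_iff' measurableSet_Ioc).2 (Filter.Eventually.of_forall hw0))
    ((ae_restrict_iff' measurableSet_Ioc).2 (Filter.Eventually.of_forall hg0))
    (hmem w hwm hw0 h1 p) (hmem g hgm hg0 h2 q)

theorem aux_second_nn (a b m : ℝ≥0) {q : ℝ} (hq : 1 ≤ q)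
    (hm : m ^ q ≤ (a ^ q + b ^ q) / 2) :
    (a ^ q + m ^ q) ^ (1/q) + (b ^ q + m ^ q) ^ (1/q) ≤ 2 * (a + b) := by
  have hq0 : q ≠ 0 := by positivity
  set X := a ^ q + m ^ q with hX
  set Y := b ^ q + m ^ q with hY
  set S := X ^ (1/q) + Y ^ (1/q) with hS
  have h1 : S ^ q ≤ 2 ^ (q - 1) * (X + Y) := by
    have := NNReal.rpow_add_le_mul_rpow_add_rpow (X ^ (1/q)) (Y ^ (1/q)) hq
    rw [← NNReal.rpow_mul, ← NNReal.rpow_mul, one_div, inv_mul_cancel₀ hq0,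
      NNReal.rpow_one, NNReal.rpow_one] at this
    rw [hS]
    simpa [one_div] using this
  have h2 : X + Y ≤ 2 * (a ^ q + b ^ q) := by
    have : m ^ q + m ^ q ≤ a ^ q + b ^ q := by
      calc m ^ q + m ^ q = 2 * m ^ q := (two_mul _).symm
        _ ≤ 2 * ((a ^ q + b ^ q) / 2) := by gcongr
        _ = a ^ q + b ^ q := by rw [mul_div_cancel₀]; exact two_ne_zero
    calc X + Y = (a ^ q + b ^ q) + (m ^ q + m ^ q) := by rw [hX, hY]; ring
      _ ≤ (a ^ q + b ^ q) + (a ^ q + b ^ q) := by gcongr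
      _ = 2 * (a ^ q + b ^ q) := (two_mul _).symm
  have h3 : S ^ q ≤ 2 ^ q * (a ^ q + b ^ q) := by
    calc S ^ q ≤ 2 ^ (q - 1) * (X + Y) := h1
      _ ≤ 2 ^ (q - 1) * (2 * (a ^ q + b ^ q)) := by gcongr
      _ = 2 ^ q * (a ^ q + b ^ q) := by
          rw [← mul_assoc]
          congr 1
          have h5 : (2:ℝ≥0)^(q-1) * 2^(1:ℝ) = 2^q := by
            rw [← NNReal.rpow_add two_ne_zero]; norm_num
          simpa using h5
  have h4 : S ≤ (2 ^ q * (a ^ q + b ^ q)) ^ (1/q) := by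
    have := NNReal.rpow_le_rpow h3 (by positivity : (0:ℝ) ≤ 1/q)
    rwa [← NNReal.rpow_mul, mul_one_div, div_self hq0, NNReal.rpow_one] at this
  calc S ≤ (2 ^ q * (a ^ q + b ^ q)) ^ (1/q) := h4
    _ = 2 * (a ^ q + b ^ q) ^ (1/q) := by
        rw [NNReal.mul_rpow, ← NNReal.rpow_mul, mul_one_div, div_self hq0, NNReal.rpow_one]
    _ ≤ 2 * (a + b) := by
        gcongr
        exact NNReal.rpow_add_rpow_le_add a b hq

theorem aux_second {A B M q : ℝ} (hA : 0 ≤ A) (hB : 0 ≤ B) (hM : 0 ≤ M)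
    (hq : 1 ≤ q) (hMq : M ^ q ≤ (A ^ q + B ^ q) / 2) :
    (A ^ q + M ^ q) ^ (1/q) + (B ^ q + M ^ q) ^ (1/q) ≤ 2 * (A + B) := by
  lift A to ℝ≥0 using hA with a
  lift B to ℝ≥0 using hB with b
  lift M to ℝ≥0 using hM with m
  have h := aux_second_nn a b m hq (by exact_mod_cast hMq)
  exact_mod_cast h

theorem aux_rpow_le {X Y : ℝ} (hX : 0 ≤ X) (hY : 0 ≤ Y) {q : ℝ} (hq : 0 < q)
    (h : X ^ q ≤ Y ^ q) : X ≤ Y := by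
  have h2 := Real.rpow_le_rpow (by positivity) h (le_of_lt (by positivity : (0:ℝ) < 1/q))
  rwa [one_div, Real.rpow_rpow_inv hX hq.ne', Real.rpow_rpow_inv hY hq.ne'] at h2

set_option maxHeartbeats 2000000 in
theorem cor_2_2 (f f' : ℝ → ℝ) (a b c d : ℝ) (hab : a < b)
    (hca : c < a) (hbd : b < d)
    (hf : ∀ y ∈ Set.Ioo c d, HasDerivAt f (f' y) y)
    (hint : IntervalIntegrable f' volume a b)
    (p q : ℝ) (hp : 1 < p) (hq : q = p / (p - 1))
    (hconv : ConvexOn ℝ (Set.Icc a b) (fun y => |f' y| ^ q)) :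
    |(f a + f b) / 2 - (1 / (b - a)) * ∫ u in a..b, f u|
      ≤ ((b - a) / 4) * (1 / (p + 1)) ^ (1 / p) * (1 / 2 : ℝ) ^ (1 / q) *
        ((|f' a| ^ q + |f' ((a + b) / 2)| ^ q) ^ (1 / q)
          + (|f' b| ^ q + |f' ((a + b) / 2)| ^ q) ^ (1 / q))
    ∧ ((b - a) / 4) * (1 / (p + 1)) ^ (1 / p) * (1 / 2 : ℝ) ^ (1 / q) *
        ((|f' a| ^ q + |f' ((a + b) / 2)| ^ q) ^ (1 / q)
          + (|f' b| ^ q + |f' ((a + b) / 2)| ^ q) ^ (1 / q))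
      ≤ ((b - a) / 2) * (1 / (p + 1)) ^ (1 / p) * (1 / 2 : ℝ) ^ (1 / q) *
        (|f' a| + |f' b|) := by
  have hpq : p.HolderConjugate q := (Real.holderConjugate_iff_eq_conjExponent hp).2 hq
  have hq1 : 1 < q := hpq.symm.lt
  have hq0 : 0 < q := lt_trans one_pos hq1
  have hp0 : 0 < p := lt_trans one_pos hp
  set m : ℝ := (a + b) / 2 with hm
  have ham : a < m := by rw [hm]; linarith
  have hmb : m < b := by rw [hm]; linarith
  have hba : (0:ℝ) < b - a := by linarith
  set A : ℝ := |f' a| with hA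
  set B : ℝ := |f' b| with hB
  set M : ℝ := |f' m| with hM
  set h : ℝ := (b - a) / 2 with hh
  have hh0 : (0:ℝ) < h := by rw [hh]; linarith
  -- convexity midpoint bound
  have hMq : M ^ q ≤ (A ^ q + B ^ q) / 2 := by
    have hc := hconv.2 (Set.left_mem_Icc.2 hab.le) (Set.right_mem_Icc.2 hab.le)
      (by norm_num : (0:ℝ) ≤ 1/2) (by norm_num : (0:ℝ) ≤ 1/2) (by norm_num)
    simp only [smul_eq_mul] at hc
    have harg : (1/2:ℝ) * a + (1/2) * b = m := by rw [hm]; ring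
    rw [harg] at hc
    calc M ^ q ≤ 1/2 * A ^ q + 1/2 * B ^ q := hc
      _ = (A ^ q + B ^ q) / 2 := by ring
  -- bound on |f'| over [a,b]
  have hC : ∀ x ∈ Set.Icc a b, |f' x| ≤ max A B := by
    intro x hx
    have h1 := hconv.le_max_of_mem_Icc (Set.left_mem_Icc.2 hab.le)
      (Set.right_mem_Icc.2 hab.le) hx
    rcases le_total A B with hAB | hAB
    · have h2 : A ^ q ≤ B ^ q := Real.rpow_le_rpow (abs_nonneg _) hAB hq0.le
      rw [max_eq_right h2] at h1
      exact le_trans (aux_rpow_le (abs_nonneg _) (abs_nonneg _) hq0 h1) (le_max_right _ _)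
    · have h2 : B ^ q ≤ A ^ q := Real.rpow_le_rpow (abs_nonneg _) hAB hq0.le
      rw [max_eq_left h2] at h1
      exact le_trans (aux_rpow_le (abs_nonneg _) (abs_nonneg _) hq0 h1) (le_max_left _ _)
  -- measurability
  have hfm : AEStronglyMeasurable f' (volume.restrict (Set.Ioc a b)) :=
    hint.1.aestronglyMeasurable
  have hrestr : ∀ s : Set ℝ, s ⊆ Set.Ioc a b →
      AEStronglyMeasurable f' (volume.restrict s) := fun s hs =>
    hfm.mono_measure (Measure.restrict_mono hs le_rfl)
  have hcq : Continuous (fun y : ℝ => |y| ^ q) :=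
    continuous_abs.rpow_const (fun x => Or.inr hq0.le)
  -- integration by parts identity
  have hderiv : ∀ x ∈ Set.uIcc a b, HasDerivAt f (f' x) x := by
    intro x hx
    rw [Set.uIcc_of_le hab.le] at hx
    exact hf x ⟨lt_of_lt_of_le hca hx.1, lt_of_le_of_lt hx.2 hbd⟩
  have hu : ∀ x ∈ Set.uIcc a b, HasDerivAt (fun y => y - m) 1 x := fun x _ =>
    (hasDerivAt_id x).sub_const m
  have parts := intervalIntegral.integral_mul_deriv_eq_deriv_mul hu hderiv
    (_root_.intervalIntegrable_const (c := (1:ℝ))) hint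
  simp only [one_mul] at parts
  have hierr : (f a + f b) / 2 - (1 / (b - a)) * ∫ u in a..b, f u
      = (1 / (b - a)) * ∫ x in a..b, (x - m) * f' x := by
    rw [parts, hm]
    field_simp
    ring
  -- integrability facts
  have hintam : IntervalIntegrable f' volume a m := by
    apply hint.mono_set
    rw [Set.uIcc_of_le ham.le, Set.uIcc_of_le hab.le]
    exact Set.Icc_subset_Icc le_rfl hmb.le
  have hintmb : IntervalIntegrable f' volume m b := by
    apply hint.mono_set
    rw [Set.uIcc_of_le hmb.le, Set.uIcc_of_le hab.le]
    exact Set.Icc_subset_Icc ham.le le_rfl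
  have hwcont : Continuous (fun x : ℝ => |x - m|) :=
    (continuous_id.sub continuous_const).abs
  have habsprod_ab : IntervalIntegrable (fun x => |x - m| * |f' x|) volume a b :=
    hint.abs.continuousOn_mul hwcont.continuousOn
  have habsprod_am : IntervalIntegrable (fun x => |x - m| * |f' x|) volume a m :=
    hintam.abs.continuousOn_mul hwcont.continuousOn
  have habsprod_mb : IntervalIntegrable (fun x => |x - m| * |f' x|) volume m b :=
    hintmb.abs.continuousOn_mul hwcont.continuousOn
  -- half-interval bounds
  have halfbound : ∀ s t : ℝ, s < t → Set.Ioc s t ⊆ Set.Ioc a b → Set.Icc s t ⊆ Set.Icc a b →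
      (∫ x in s..t, |x - m| * |f' x|)
        ≤ (∫ x in s..t, |x - m| ^ p) ^ (1/p)
          * ((t - s) * (|f' s| ^ q + |f' t| ^ q) / 2) ^ (1/q) := by
    intro s t hst hsub hsub2
    have hgm : AEStronglyMeasurable (fun x => |f' x|) (volume.restrict (Set.Ioc s t)) :=
      continuous_abs.comp_aestronglyMeasurable (hrestr _ hsub)
    have hqint : IntervalIntegrable (fun x => |f' x| ^ q) volume s t := by
      refine aux_integrable_of_bounded hst.le
        (hcq.comp_aestronglyMeasurable (hrestr _ hsub)) (C := (max A B) ^ q) ?_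
      intro x hx
      rw [Real.norm_eq_abs, abs_of_nonneg (by positivity)]
      exact Real.rpow_le_rpow (abs_nonneg _)
        (hC x (hsub2 (Set.mem_Icc_of_Ioc hx)))
        hq0.le
    have hhold := aux_holder (w := fun x => |x - m|) (g := fun x => |f' x|) hst.le hpq
      (hwcont.aestronglyMeasurable.restrict)
      hgm
      (fun x _ => abs_nonneg _) (fun x _ => abs_nonneg _)
      (Cw := |s - m| + |t - m|)
      (Cg := max A B)
      (fun x hx => by
        have h1 : s ≤ x := hx.1.le
        have h2 : x ≤ t := hx.2
        cases abs_cases (x - m) with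
        | inl hcase =>
          rw [hcase.1]
          have := abs_nonneg (s - m)
          have := le_abs_self (t - m)
          linarith
        | inr hcase =>
          rw [hcase.1]
          have := abs_nonneg (t - m)
          have := neg_le_abs (s - m)
          linarith)
      (fun x hx => hC x (hsub2 (Set.mem_Icc_of_Ioc hx)))
    refine le_trans hhold ?_
    refine mul_le_mul_of_nonneg_left ?_ ?_
    · apply Real.rpow_le_rpow
      · apply intervalIntegral.integral_nonneg hst.le
        intro x _; positivity
      · have hcv : ConvexOn ℝ (Set.Icc s t) (fun y => |f' y| ^ q) :=
          hconv.subset hsub2 (convex_Icc s t)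
        exact aux_trapezoid hst hcv hqint
      · positivity
    · apply Real.rpow_nonneg
      apply intervalIntegral.integral_nonneg hst.le
      intro x _; positivity
  -- compute ∫ |x-m|^p on each half
  have hp1 : (-1:ℝ) < p := by linarith
  have hEleft : (∫ x in a..m, |x - m| ^ p) = h ^ (p + 1) / (p + 1) := by
    have hcongr : Set.EqOn (fun x => |x - m| ^ p) (fun x => (m - x) ^ p) (Set.uIcc a m) := by
      intro x hx
      rw [Set.uIcc_of_le ham.le] at hx
      simp only
      rw [abs_of_nonpos (by linarith [hx.2]), neg_sub]
    rw [intervalIntegral.integral_congr hcongr, aux_integral_pow_left hp1]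
    congr 2
    rw [hm, hh]; ring
  have hEright : (∫ x in m..b, |x - m| ^ p) = h ^ (p + 1) / (p + 1) := by
    have hcongr : Set.EqOn (fun x => |x - m| ^ p) (fun x => (x - m) ^ p) (Set.uIcc m b) := by
      intro x hx
      rw [Set.uIcc_of_le hmb.le] at hx
      simp only
      rw [abs_of_nonneg (by linarith [hx.1])]
    rw [intervalIntegral.integral_congr hcongr, aux_integral_pow_right hp1]
    congr 2
    rw [hm, hh]; ring
  -- algebra: the common factor
  have halg : ∀ X : ℝ, 0 ≤ X →
      (h ^ (p + 1) / (p + 1)) ^ (1/p) * (h * X / 2) ^ (1/q)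
        = h ^ 2 * (1/(p+1)) ^ (1/p) * ((1:ℝ)/2) ^ (1/q) * X ^ (1/q) := by
    intro X hX
    have e1 : (h ^ (p + 1) / (p + 1)) ^ (1/p)
        = h ^ ((p+1)/p) * (1/(p+1)) ^ (1/p) := by
      rw [div_eq_mul_one_div (h ^ (p+1)) (p+1),
        Real.mul_rpow (by positivity) (by positivity),
        ← Real.rpow_mul hh0.le, mul_one_div]
    have e2 : (h * X / 2) ^ (1/q)
        = h ^ (1/q) * ((1:ℝ)/2) ^ (1/q) * X ^ (1/q) := by
      have : h * X / 2 = h * (1/2) * X := by ring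
      rw [this, Real.mul_rpow (by positivity) hX,
        Real.mul_rpow hh0.le (by norm_num)]
    have e3 : h ^ ((p+1)/p) * h ^ (1/q) = h ^ (2:ℝ) := by
      rw [← Real.rpow_add hh0]
      congr 1
      have hinv : 1/p + 1/q = 1 := by
        have := hpq.inv_add_inv_eq_one
        rwa [← one_div, ← one_div] at this
      field_simp
      field_simp at hinv
      nlinarith [hinv]
    rw [e1, e2]
    calc h ^ ((p+1)/p) * (1/(p+1)) ^ (1/p) * (h ^ (1/q) * ((1:ℝ)/2) ^ (1/q) * X ^ (1/q))
        = (h ^ ((p+1)/p) * h ^ (1/q)) * (1/(p+1)) ^ (1/p) * ((1:ℝ)/2) ^ (1/q) * X ^ (1/q) := by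
          ring
      _ = h ^ (2:ℝ) * (1/(p+1)) ^ (1/p) * ((1:ℝ)/2) ^ (1/q) * X ^ (1/q) := by rw [e3]
      _ = h ^ 2 * (1/(p+1)) ^ (1/p) * ((1:ℝ)/2) ^ (1/q) * X ^ (1/q) := by
          rw [Real.rpow_two]
  -- put the two halves together
  have hbound1 : (∫ x in a..m, |x - m| * |f' x|)
      ≤ h ^ 2 * (1/(p+1)) ^ (1/p) * ((1:ℝ)/2) ^ (1/q) * (A ^ q + M ^ q) ^ (1/q) := by
    have := halfbound a m ham (Set.Ioc_subset_Ioc le_rfl hmb.le)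
      (Set.Icc_subset_Icc le_rfl hmb.le)
    rw [hEleft] at this
    refine le_trans this ?_
    rw [show m - a = h by rw [hm, hh]; ring]
    rw [halg (A ^ q + M ^ q) (by positivity)]
  have hbound2 : (∫ x in m..b, |x - m| * |f' x|)
      ≤ h ^ 2 * (1/(p+1)) ^ (1/p) * ((1:ℝ)/2) ^ (1/q) * (B ^ q + M ^ q) ^ (1/q) := by
    have := halfbound m b hmb (Set.Ioc_subset_Ioc ham.le le_rfl)
      (Set.Icc_subset_Icc ham.le le_rfl)
    rw [hEright] at this
    refine le_trans this ?_
    rw [show b - m = h by rw [hm, hh]; ring]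
    have e : M ^ q + B ^ q = B ^ q + M ^ q := by ring
    rw [e] at this ⊢
    rw [halg (B ^ q + M ^ q) (by positivity)]
  -- main estimate
  constructor
  · rw [hierr, abs_mul, abs_of_nonneg (by positivity : (0:ℝ) ≤ 1/(b-a))]
    have hsplit : (∫ x in a..b, |x - m| * |f' x|)
        = (∫ x in a..m, |x - m| * |f' x|) + ∫ x in m..b, |x - m| * |f' x| :=
      (intervalIntegral.integral_add_adjacent_intervals habsprod_am habsprod_mb).symm
    have habs1 : |∫ x in a..b, (x - m) * f' x| ≤ ∫ x in a..b, |x - m| * |f' x| := by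
      refine le_trans (intervalIntegral.abs_integral_le_integral_abs hab.le) ?_
      apply le_of_eq
      apply intervalIntegral.integral_congr
      intro x _
      simp [abs_mul]
    calc (1/(b-a)) * |∫ x in a..b, (x - m) * f' x|
        ≤ (1/(b-a)) * ((∫ x in a..m, |x - m| * |f' x|) + ∫ x in m..b, |x - m| * |f' x|) := by
          rw [← hsplit]
          exact mul_le_mul_of_nonneg_left habs1 (by positivity)
      _ ≤ (1/(b-a)) * (h ^ 2 * (1/(p+1)) ^ (1/p) * ((1:ℝ)/2) ^ (1/q) * (A ^ q + M ^ q) ^ (1/q)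
            + h ^ 2 * (1/(p+1)) ^ (1/p) * ((1:ℝ)/2) ^ (1/q) * (B ^ q + M ^ q) ^ (1/q)) := by
          exact mul_le_mul_of_nonneg_left (add_le_add hbound1 hbound2) (by positivity)
      _ = ((b - a) / 4) * (1 / (p + 1)) ^ (1 / p) * (1 / 2 : ℝ) ^ (1 / q) *
          ((A ^ q + M ^ q) ^ (1 / q) + (B ^ q + M ^ q) ^ (1 / q)) := by
          rw [hh]
          field_simp
          ring
  · have hS := aux_second (abs_nonneg (f' a)) (abs_nonneg (f' b)) (abs_nonneg (f' m))
      hq1.le hMq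
    have hfac : (0:ℝ) ≤ ((b - a) / 4) * (1 / (p + 1)) ^ (1 / p) * (1 / 2 : ℝ) ^ (1 / q) := by
      have : (0:ℝ) ≤ (1 / (p + 1)) ^ (1 / p) := Real.rpow_nonneg (by positivity) _
      have : (0:ℝ) ≤ (1 / 2 : ℝ) ^ (1 / q) := Real.rpow_nonneg (by norm_num) _
      positivity
    simp only [hh]
    calc ((b - a) / 4) * (1 / (p + 1)) ^ (1 / p) * (1 / 2 : ℝ) ^ (1 / q) *
          ((A ^ q + M ^ q) ^ (1 / q) + (B ^ q + M ^ q) ^ (1 / q))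
        ≤ ((b - a) / 4) * (1 / (p + 1)) ^ (1 / p) * (1 / 2 : ℝ) ^ (1 / q) * (2 * (A + B)) :=
          mul_le_mul_of_nonneg_left hS hfac
      _ = ((b - a) / 2) * (1 / (p + 1)) ^ (1 / p) * (1 / 2 : ℝ) ^ (1 / q) * (A + B) := by
          ring
end

section
/- Let f be differentiable with f' integrable on [a,b], a < b, q > 1, and suppose |f'|^q is concave on [a,b]. Then for each x ∈ [a,b], |((b-x)·f(b) + (x-a)·f(a))/(b-a) - (1/(b-a))·∫_a^b f(u) du| ≤ ((q-1)/(2q-1))^{(q-1)/q} · [ (x-a)²·|f'((a+x)/2)| + (b-x)²·|f'((b+x)/2)| ] / (b-a). -/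
open MeasureTheory intervalIntegral

section aux
open Set

lemma concave_bdd {G : ℝ → ℝ} {α β : ℝ} (hαβ : α ≤ β)
    (hG : ConcaveOn ℝ (Icc α β) G) :
    ∀ u ∈ Icc α β, G u ≤ 2 * G ((α + β) / 2) - min (G α) (G β) := by
  intro u hu
  have hv : α + β - u ∈ Icc α β := ⟨by linarith [hu.2], by linarith [hu.1]⟩
  have h1 := hG.2 hu hv (by norm_num : (0:ℝ) ≤ 1/2) (by norm_num : (0:ℝ) ≤ 1/2) (by norm_num)
  simp only [smul_eq_mul] at h1
  have hm : (1:ℝ)/2 * u + 1/2 * (α + β - u) = (α + β) / 2 := by ring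
  rw [hm] at h1
  have h2 : min (G α) (G β) ≤ G (α + β - u) :=
    hG.ge_on_segment (left_mem_Icc.2 hαβ) (right_mem_Icc.2 hαβ)
      (by rw [segment_eq_Icc hαβ]; exact hv)
  linarith

lemma jensen_mid {G : ℝ → ℝ} {α β : ℝ} (hαβ : α ≤ β)
    (hG : ConcaveOn ℝ (Icc α β) G) (hGi : IntervalIntegrable G volume α β) :
    ∫ u in α..β, G u ≤ (β - α) * G ((α + β) / 2) := by
  have hrefl : (∫ u in α..β, G (α + β - u)) = ∫ u in α..β, G u := by
    rw [intervalIntegral.integral_comp_sub_left (fun t => G t) (α + β)]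
    norm_num
  have hGi' : IntervalIntegrable (fun u => G (α + β - u)) volume α β := by
    have := hGi.comp_sub_left (α + β)
    simpa using this.symm
  have hsum : (∫ u in α..β, (G u + G (α + β - u)))
      ≤ ∫ _u in α..β, (2 * G ((α + β) / 2)) := by
    apply intervalIntegral.integral_mono_on hαβ (hGi.add hGi') intervalIntegrable_const
    intro u hu
    have hv : α + β - u ∈ Icc α β := ⟨by linarith [hu.2], by linarith [hu.1]⟩
    have h1 := hG.2 hu hv (by norm_num : (0:ℝ) ≤ 1/2) (by norm_num : (0:ℝ) ≤ 1/2) (by norm_num)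
    simp only [smul_eq_mul] at h1
    have hm : (1:ℝ)/2 * u + 1/2 * (α + β - u) = (α + β) / 2 := by ring
    rw [hm] at h1; linarith
  rw [intervalIntegral.integral_add hGi hGi', hrefl, intervalIntegral.integral_const,
    smul_eq_mul] at hsum
  linarith

lemma side_est (h : ℝ → ℝ) (q : ℝ) (hq : 1 < q) (α β e : ℝ) (hαβ : α < β)
    (he : e = α ∨ e = β)
    (hh0 : ∀ u, 0 ≤ h u)
    (hmeas : AEStronglyMeasurable h (volume.restrict (Ioc α β)))
    (hconc : ConcaveOn ℝ (Icc α β) (fun u => h u ^ q)) :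
    ∫ u in α..β, |u - e| * h u ≤
      ((q - 1) / (2 * q - 1)) ^ ((q - 1) / q) * ((β - α) ^ 2 * h ((α + β) / 2)) := by
  have hq0 : (0:ℝ) < q := by linarith
  have hq1 : (0:ℝ) < q - 1 := by linarith
  set p : ℝ := q / (q - 1) with hpdef
  have hpq : p.HolderConjugate q := (Real.HolderConjugate.conjExponent hq).symm
  have hp1 : 1 < p := hpq.lt
  have hp0 : (0:ℝ) < p := by linarith
  haveI : Fact (volume (Ioc α β) < ⊤) := ⟨measure_Ioc_lt_top⟩
  have hL : (0:ℝ) < β - α := by linarith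
  set hm : ℝ := h ((α + β) / 2) with hmdef
  have hhm : 0 ≤ hm := hh0 _
  set M : ℝ := 2 * hm ^ q - min ((h α) ^ q) ((h β) ^ q) with hM
  have hGbd : ∀ u ∈ Icc α β, h u ^ q ≤ M := concave_bdd hαβ.le hconc
  have hM0 : 0 ≤ M := le_trans (Real.rpow_nonneg (hh0 α) q) (hGbd α (left_mem_Icc.2 hαβ.le))
  have hhbd : ∀ u ∈ Icc α β, h u ≤ M ^ (1/q) := by
    intro u hu
    calc h u = ((h u) ^ q) ^ (1/q) := by
          rw [← Real.rpow_mul (hh0 u), mul_one_div, div_self hq0.ne', Real.rpow_one]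
      _ ≤ M ^ (1/q) := Real.rpow_le_rpow (Real.rpow_nonneg (hh0 u) q) (hGbd u hu)
            (one_div_nonneg.mpr hq0.le)
  have hwmeas : AEStronglyMeasurable (fun u : ℝ => |u - e|) (volume.restrict (Ioc α β)) :=
    ((continuous_id.sub continuous_const).abs).aestronglyMeasurable
  have hwLp : MemLp (fun u : ℝ => |u - e|) (ENNReal.ofReal p) (volume.restrict (Ioc α β)) := by
    apply MemLp.of_bound hwmeas (β - α)
    filter_upwards [ae_restrict_mem measurableSet_Ioc] with u hu
    rw [Real.norm_eq_abs, abs_abs]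
    rcases he with rfl | rfl
    · rw [abs_of_nonneg (by linarith [hu.1.le] : (0:ℝ) ≤ u - e)]
      linarith [hu.2]
    · rw [abs_of_nonpos (by linarith [hu.2] : u - e ≤ 0)]
      linarith [hu.1]
  have hhLq : MemLp h (ENNReal.ofReal q) (volume.restrict (Ioc α β)) := by
    apply MemLp.of_bound hmeas (M ^ (1/q))
    filter_upwards [ae_restrict_mem measurableSet_Ioc] with u hu
    rw [Real.norm_eq_abs, abs_of_nonneg (hh0 u)]
    exact hhbd u (Ioc_subset_Icc_self hu)
  have holder := integral_mul_le_Lp_mul_Lq_of_nonneg hpq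
      (ae_of_all _ fun u => abs_nonneg _) (ae_of_all _ hh0) hwLp hhLq
  -- compute the weight integral
  have h0p : (∫ t in (0:ℝ)..(β - α), t ^ p) = (β - α) ^ (p+1) / (p+1) := by
    rw [integral_rpow (Or.inl (by linarith : (-1:ℝ) < p)),
      Real.zero_rpow (by linarith : (0:ℝ) < p + 1).ne']
    ring
  have hWcalc : (∫ u in α..β, |u - e| ^ p) = (β - α) ^ (p+1) / (p+1) := by
    rcases he with rfl | rfl
    · have h1 : (∫ u in e..β, |u - e| ^ p) = ∫ u in e..β, (u - e) ^ p := by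
        apply intervalIntegral.integral_congr
        intro u hu
        rw [uIcc_of_le hαβ.le] at hu
        simp only
        rw [abs_of_nonneg (by linarith [hu.1] : (0:ℝ) ≤ u - e)]
      rw [h1, intervalIntegral.integral_comp_sub_right (fun t => t ^ p) e, sub_self]
      exact h0p
    · have h1 : (∫ u in α..e, |u - e| ^ p) = ∫ u in α..e, (e - u) ^ p := by
        apply intervalIntegral.integral_congr
        intro u hu
        rw [uIcc_of_le hαβ.le] at hu
        simp only
        rw [abs_of_nonpos (by linarith [hu.2] : u - e ≤ 0), neg_sub]
      rw [h1, intervalIntegral.integral_comp_sub_left (fun t => t ^ p) e, sub_self]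
      exact h0p
  -- Jensen
  have hGmeas : AEStronglyMeasurable (fun u => h u ^ q) (volume.restrict (Ioc α β)) :=
    (Real.continuous_rpow_const hq0.le).comp_aestronglyMeasurable hmeas
  have hGi : IntervalIntegrable (fun u => h u ^ q) volume α β := by
    rw [intervalIntegrable_iff_integrableOn_Ioc_of_le hαβ.le]
    refine memLp_one_iff_integrable.mp (MemLp.of_bound hGmeas M ?_)
    filter_upwards [ae_restrict_mem measurableSet_Ioc] with u hu
    rw [Real.norm_eq_abs, abs_of_nonneg (Real.rpow_nonneg (hh0 u) q)]
    exact hGbd u (Ioc_subset_Icc_self hu)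
  have hJ : (∫ u in α..β, h u ^ q) ≤ (β - α) * hm ^ q := jensen_mid hαβ.le hconc hGi
  -- algebra
  have hexp : (p + 1) * (1/p) + 1/q = 2 := by
    rw [hpdef]; field_simp; ring
  have hip : 1/p = (q-1)/q := by rw [hpdef]; field_simp
  have hp1' : p + 1 = (2*q-1)/(q-1) := by rw [hpdef]; field_simp; ring
  have hCeq : ((q-1)/(2*q-1)) ^ ((q-1)/q) = ((p+1) ^ (1/p))⁻¹ := by
    rw [hip, hp1', ← Real.inv_rpow (div_nonneg (by linarith) (by linarith)), inv_div]
  have hLL : (β-α) ^ ((p+1)*(1/p)) * (β-α) ^ (1/q) = (β-α) ^ 2 := by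
    rw [← Real.rpow_add hL, hexp, show (2:ℝ) = ((2:ℕ):ℝ) by norm_num, Real.rpow_natCast]
  have key : ((β-α) ^ (p+1) / (p+1)) ^ (1/p) * ((β-α) * hm ^ q) ^ (1/q)
      = ((q-1)/(2*q-1)) ^ ((q-1)/q) * ((β-α) ^ 2 * hm) := by
    rw [Real.div_rpow (Real.rpow_nonneg hL.le _) (by linarith : (0:ℝ) ≤ p + 1),
        Real.mul_rpow hL.le (Real.rpow_nonneg hhm q),
        ← Real.rpow_mul hL.le, ← Real.rpow_mul hhm, mul_one_div q q, div_self hq0.ne',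
        Real.rpow_one, hCeq]
    rw [← hLL]; ring
  calc (∫ u in α..β, |u - e| * h u)
      ≤ (∫ u in Ioc α β, |u - e| ^ p) ^ (1/p) * (∫ u in Ioc α β, h u ^ q) ^ (1/q) := by
        rw [intervalIntegral.integral_of_le hαβ.le]; exact holder
    _ = ((β-α) ^ (p+1) / (p+1)) ^ (1/p) * (∫ u in α..β, h u ^ q) ^ (1/q) := by
        rw [← intervalIntegral.integral_of_le hαβ.le, hWcalc,
          ← intervalIntegral.integral_of_le hαβ.le]
    _ ≤ ((β-α) ^ (p+1) / (p+1)) ^ (1/p) * ((β-α) * hm ^ q) ^ (1/q) := by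
        apply mul_le_mul_of_nonneg_left _
          (Real.rpow_nonneg (div_nonneg (Real.rpow_nonneg hL.le _) (by linarith)) _)
        apply Real.rpow_le_rpow _ hJ (one_div_nonneg.mpr hq0.le)
        exact intervalIntegral.integral_nonneg hαβ.le (fun u _ => Real.rpow_nonneg (hh0 u) q)
    _ = ((q-1)/(2*q-1)) ^ ((q-1)/q) * ((β-α) ^ 2 * hm) := key
end aux

open Set in
theorem thm_2_3 (f f' : ℝ → ℝ) (a b c d : ℝ) (hab : a < b)
    (hca : c < a) (hbd : b < d)
    (hf : ∀ y ∈ Set.Ioo c d, HasDerivAt f (f' y) y)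
    (hint : IntervalIntegrable f' volume a b)
    (q : ℝ) (hq : 1 < q)
    (hconc : ConcaveOn ℝ (Set.Icc a b) (fun y => |f' y| ^ q))
    (x : ℝ) (hx : x ∈ Set.Icc a b) :
    |((b - x) * f b + (x - a) * f a) / (b - a) - (1 / (b - a)) * ∫ u in a..b, f u|
      ≤ ((q - 1) / (2 * q - 1)) ^ ((q - 1) / q) *
        (((x - a) ^ 2 * |f' ((a + x) / 2)| + (b - x) ^ 2 * |f' ((b + x) / 2)|) / (b - a)) := by
  obtain ⟨hax, hxb⟩ := hx
  have hba : (0:ℝ) < b - a := by linarith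
  set C : ℝ := ((q - 1) / (2 * q - 1)) ^ ((q - 1) / q) with hC
  have hC0 : 0 ≤ C := Real.rpow_nonneg (div_nonneg (by linarith) (by linarith)) _
  have hsub : Icc a b ⊆ Ioo c d := fun u hu => ⟨by linarith [hu.1], by linarith [hu.2]⟩
  have hcont : ContinuousOn f (uIcc a b) := by
    rw [uIcc_of_le hab.le]
    exact fun u hu => ((hf u (hsub hu)).continuousAt).continuousWithinAt
  have hprod : IntervalIntegrable (fun u => (u - x) * f' u) volume a b :=
    hint.continuousOn_mul ((continuous_id.sub continuous_const).continuousOn)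
  -- kernel identity
  have key : (∫ u in a..b, (u - x) * f' u)
      = (b - x) * f b + (x - a) * f a - ∫ u in a..b, f u := by
    have hder : ∀ u ∈ uIcc a b, HasDerivAt (fun t => (t - x) * f t)
        (f u + (u - x) * f' u) u := by
      intro u hu
      rw [uIcc_of_le hab.le] at hu
      have := ((hasDerivAt_id u).sub_const x).mul (hf u (hsub hu))
      simpa [add_comm, Pi.mul_def] using this
    have hint2 : IntervalIntegrable (fun u => f u + (u - x) * f' u) volume a b :=
      (hcont.intervalIntegrable).add hprod
    have h2 := intervalIntegral.integral_eq_sub_of_hasDerivAt hder hint2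
    rw [intervalIntegral.integral_add (hcont.intervalIntegrable) hprod] at h2
    have : (b - x) * f b - (a - x) * f a
        = (b - x) * f b + (x - a) * f a := by ring
    rw [this] at h2
    linarith
  -- LHS rewrite
  have hLHS : ((b - x) * f b + (x - a) * f a) / (b - a) - (1 / (b - a)) * ∫ u in a..b, f u
      = (∫ u in a..b, (u - x) * f' u) / (b - a) := by
    rw [key]; ring
  rw [hLHS, abs_div, abs_of_pos hba]
  -- split the integral
  have h1i : IntervalIntegrable (fun u => (u - x) * f' u) volume a x :=
    hprod.mono_set (by rw [uIcc_of_le hab.le, uIcc_of_le hax]; exact Icc_subset_Icc le_rfl hxb)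
  have h2i : IntervalIntegrable (fun u => (u - x) * f' u) volume x b :=
    hprod.mono_set (by rw [uIcc_of_le hab.le, uIcc_of_le hxb]; exact Icc_subset_Icc hax le_rfl)
  have hsplit : (∫ u in a..b, (u - x) * f' u)
      = (∫ u in a..x, (u - x) * f' u) + ∫ u in x..b, (u - x) * f' u :=
    (intervalIntegral.integral_add_adjacent_intervals h1i h2i).symm
  -- absolute value bounds
  have habs1 : |∫ u in a..x, (u - x) * f' u| ≤ ∫ u in a..x, |u - x| * |f' u| := by
    refine le_trans (intervalIntegral.abs_integral_le_integral_abs hax) ?_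
    apply le_of_eq
    apply intervalIntegral.integral_congr
    intro u _; simp [abs_mul]
  have habs2 : |∫ u in x..b, (u - x) * f' u| ≤ ∫ u in x..b, |u - x| * |f' u| := by
    refine le_trans (intervalIntegral.abs_integral_le_integral_abs hxb) ?_
    apply le_of_eq
    apply intervalIntegral.integral_congr
    intro u _; simp [abs_mul]
  -- side estimates
  have hS1 : (∫ u in a..x, |u - x| * |f' u|) ≤ C * ((x - a) ^ 2 * |f' ((a + x) / 2)|) := by
    rcases eq_or_lt_of_le hax with rfl | hax'
    · simp
    · exact side_est (fun u => |f' u|) q hq a x x hax' (Or.inr rfl) (fun u => abs_nonneg _)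
        (((hint.1.aestronglyMeasurable.mono_measure
            (Measure.restrict_mono (Ioc_subset_Ioc le_rfl hxb) le_rfl)).norm).congr
          (ae_of_all _ fun u => Real.norm_eq_abs _))
        (hconc.subset (Icc_subset_Icc le_rfl hxb) (convex_Icc _ _))
  have hS2 : (∫ u in x..b, |u - x| * |f' u|) ≤ C * ((b - x) ^ 2 * |f' ((b + x) / 2)|) := by
    rcases eq_or_lt_of_le hxb with rfl | hxb'
    · simp
    · have := side_est (fun u => |f' u|) q hq x b x hxb' (Or.inl rfl) (fun u => abs_nonneg _)
        (((hint.1.aestronglyMeasurable.mono_measure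
            (Measure.restrict_mono (Ioc_subset_Ioc hax le_rfl) le_rfl)).norm).congr
          (ae_of_all _ fun u => Real.norm_eq_abs _))
        (hconc.subset (Icc_subset_Icc hax le_rfl) (convex_Icc _ _))
      rw [show (x + b) / 2 = (b + x) / 2 by ring] at this
      exact this
  -- combine
  have htot : |∫ u in a..b, (u - x) * f' u|
      ≤ C * ((x - a) ^ 2 * |f' ((a + x) / 2)| + (b - x) ^ 2 * |f' ((b + x) / 2)|) := by
    rw [hsplit]
    calc |(∫ u in a..x, (u - x) * f' u) + ∫ u in x..b, (u - x) * f' u|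
        ≤ |∫ u in a..x, (u - x) * f' u| + |∫ u in x..b, (u - x) * f' u| := abs_add_le _ _
      _ ≤ (∫ u in a..x, |u - x| * |f' u|) + ∫ u in x..b, |u - x| * |f' u| :=
          add_le_add habs1 habs2
      _ ≤ C * ((x - a) ^ 2 * |f' ((a + x) / 2)|) + C * ((b - x) ^ 2 * |f' ((b + x) / 2)|) :=
          add_le_add hS1 hS2
      _ = C * ((x - a) ^ 2 * |f' ((a + x) / 2)| + (b - x) ^ 2 * |f' ((b + x) / 2)|) := by ring
  rw [div_le_iff₀ hba] at *
  calc |∫ u in a..b, (u - x) * f' u|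
      ≤ C * ((x - a) ^ 2 * |f' ((a + x) / 2)| + (b - x) ^ 2 * |f' ((b + x) / 2)|) := htot
    _ = C * (((x - a) ^ 2 * |f' ((a + x) / 2)| + (b - x) ^ 2 * |f' ((b + x) / 2)|) / (b - a))
        * (b - a) := by field_simp
end

section
/- Let f be differentiable with f' integrable on [a,b], a < b, q > 1, and |f'|^q concave on [a,b]. Then |(f(a)+f(b))/2 - (1/(b-a))·∫_a^b f(u) du| ≤ ((q-1)/(2q-1))^{(q-1)/q} · ((b-a)/4) · (|f'((3a+b)/4)| + |f'((a+3b)/4)|). -/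
open MeasureTheory intervalIntegral Set

lemma aux_concave_upper {φ : ℝ → ℝ} {α β : ℝ} (hαβ : α ≤ β)
    (hc : ConcaveOn ℝ (Set.Icc α β) φ) {x : ℝ} (hx : x ∈ Set.Icc α β) :
    φ x ≤ 2 * φ ((α + β) / 2) - min (φ α) (φ β) := by
  have hy : α + β - x ∈ Set.Icc α β := ⟨by linarith [hx.2], by linarith [hx.1]⟩
  have hα : α ∈ Set.Icc α β := ⟨le_rfl, hαβ⟩
  have hβ : β ∈ Set.Icc α β := ⟨hαβ, le_rfl⟩
  have h1 : min (φ α) (φ β) ≤ φ (α + β - x) := by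
    refine hc.ge_on_segment hα hβ ?_
    rw [segment_eq_Icc hαβ]; exact hy
  have h2 := hc.2 hx hy (by norm_num : (0:ℝ) ≤ 1/2) (by norm_num : (0:ℝ) ≤ 1/2) (by norm_num)
  have e : (1/2 : ℝ) • x + (1/2 : ℝ) • (α + β - x) = (α + β) / 2 := by
    simp only [smul_eq_mul]; ring
  rw [e] at h2
  simp only [smul_eq_mul] at h2
  linarith

lemma aux_hh {φ : ℝ → ℝ} {α β : ℝ} (hαβ : α ≤ β)
    (hc : ConcaveOn ℝ (Set.Icc α β) φ) (hi : IntervalIntegrable φ volume α β) :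
    ∫ x in α..β, φ x ≤ (β - α) * φ ((α + β) / 2) := by
  have hm1 : α ≤ (α + β) / 2 := by linarith
  have hm2 : (α + β) / 2 ≤ β := by linarith
  have h1 : IntervalIntegrable φ volume α ((α + β) / 2) :=
    hi.mono_set (Set.uIcc_subset_uIcc (by rw [Set.uIcc_of_le hαβ]; exact ⟨le_rfl, hαβ⟩)
      (by rw [Set.uIcc_of_le hαβ]; exact ⟨hm1, hm2⟩))
  have h2 : IntervalIntegrable φ volume ((α + β) / 2) β :=
    hi.mono_set (Set.uIcc_subset_uIcc
      (by rw [Set.uIcc_of_le hαβ]; exact ⟨hm1, hm2⟩)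
      (by rw [Set.uIcc_of_le hαβ]; exact ⟨hαβ, le_rfl⟩))
  have hrefl : IntervalIntegrable (fun x => φ (α + β - x)) volume α ((α + β) / 2) := by
    have h3 := (h2.comp_sub_left (α + β)).symm
    have e1 : α + β - β = α := by ring
    have e2 : α + β - (α + β) / 2 = (α + β) / 2 := by ring
    rwa [e1, e2] at h3
  have heq : ∫ x in α..(α + β) / 2, φ (α + β - x) = ∫ x in ((α + β) / 2)..β, φ x := by
    have h4 : (∫ x in α..(α + β) / 2, φ (α + β - x))
        = ∫ x in (α + β - (α + β) / 2)..(α + β - α), φ x :=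
      intervalIntegral.integral_comp_sub_left φ (α + β)
    have e1 : α + β - α = β := by ring
    have e2 : α + β - (α + β) / 2 = (α + β) / 2 := by ring
    rwa [e1, e2] at h4
  have hsplit : ∫ x in α..β, φ x
      = ∫ x in α..(α + β) / 2, (φ x + φ (α + β - x)) := by
    rw [intervalIntegral.integral_add h1 hrefl, heq,
      intervalIntegral.integral_add_adjacent_intervals h1 h2]
  rw [hsplit]
  have hmono : ∫ x in α..(α + β) / 2, (φ x + φ (α + β - x))
      ≤ ∫ _x in α..(α + β) / 2, 2 * φ ((α + β) / 2) := by
    refine intervalIntegral.integral_mono_on hm1 (h1.add hrefl)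
      intervalIntegrable_const (fun x hx => ?_)
    have hx1 : x ∈ Set.Icc α β := ⟨hx.1, le_trans hx.2 hm2⟩
    have hy1 : α + β - x ∈ Set.Icc α β := ⟨by linarith [hx1.2], by linarith [hx1.1]⟩
    have h2' := hc.2 hx1 hy1 (by norm_num : (0:ℝ) ≤ 1/2) (by norm_num : (0:ℝ) ≤ 1/2) (by norm_num)
    have e : (1/2 : ℝ) • x + (1/2 : ℝ) • (α + β - x) = (α + β) / 2 := by
      simp only [smul_eq_mul]; ring
    rw [e] at h2'
    simp only [smul_eq_mul] at h2'
    linarith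
  refine le_trans hmono ?_
  rw [intervalIntegral.integral_const, smul_eq_mul]
  exact le_of_eq (by ring)

lemma aux_intInt {g : ℝ → ℝ} {α β M : ℝ} (hαβ : α ≤ β)
    (hm : AEStronglyMeasurable g (volume.restrict (Set.Ioc α β)))
    (hbd : ∀ x ∈ Set.Ioc α β, |g x| ≤ M) :
    IntervalIntegrable g volume α β := by
  rw [intervalIntegrable_iff_integrableOn_Ioc_of_le hαβ]
  refine Integrable.mono' (g := fun _ => M) ?_ hm ?_
  · exact integrableOn_const measure_Ioc_lt_top.ne
  · exact (ae_restrict_iff' measurableSet_Ioc).2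
      (Filter.Eventually.of_forall fun x hx => by
        simpa [Real.norm_eq_abs] using hbd x hx)

lemma aux_half {g w : ℝ → ℝ} {α β M q p : ℝ} (hαβ : α < β)
    (hpq : Real.HolderConjugate p q)
    (hgm : AEStronglyMeasurable g (volume.restrict (Set.Ioc α β)))
    (hg0 : ∀ x, 0 ≤ g x) (hgM : ∀ x ∈ Set.Icc α β, g x ≤ M)
    (hconc : ConcaveOn ℝ (Set.Icc α β) (fun x => g x ^ q))
    (hw : Continuous w) (hw0 : ∀ x ∈ Set.Icc α β, 0 ≤ w x) :
    ∫ x in α..β, w x * g x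
      ≤ (∫ x in α..β, w x ^ p) ^ (1/p) * ((β - α) ^ (1/q) * g ((α + β) / 2)) := by
  haveI : IsFiniteMeasure (volume.restrict (Set.Ioc α β)) :=
    ⟨by rw [Measure.restrict_apply_univ]; exact measure_Ioc_lt_top⟩
  have hq1 : 1 < q := hpq.symm.lt
  have hq0 : 0 < q := by linarith
  have hp0 : 0 < p := hpq.pos
  -- nonnegativity a.e.
  have hsub : Set.Ioc α β ⊆ Set.Icc α β := Set.Ioc_subset_Icc_self
  have hwae : 0 ≤ᵐ[volume.restrict (Set.Ioc α β)] w :=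
    (ae_restrict_iff' measurableSet_Ioc).2
      (Filter.Eventually.of_forall fun x hx => hw0 x (hsub hx))
  have hgae : 0 ≤ᵐ[volume.restrict (Set.Ioc α β)] g :=
    Filter.Eventually.of_forall fun x => hg0 x
  -- Memℒp for w
  obtain ⟨C, hC⟩ := (isCompact_Icc (a := α) (b := β)).exists_bound_of_continuousOn
    hw.continuousOn
  have hwmem : MemLp w (ENNReal.ofReal p) (volume.restrict (Set.Ioc α β)) :=
    MemLp.of_bound (hw.aestronglyMeasurable.restrict) C
      ((ae_restrict_iff' measurableSet_Ioc).2
        (Filter.Eventually.of_forall fun x hx => hC x (hsub hx)))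
  -- Memℒp for g
  have hM0 : 0 ≤ M := le_trans (hg0 α) (hgM α ⟨le_rfl, hαβ.le⟩)
  have hgmem : MemLp g (ENNReal.ofReal q) (volume.restrict (Set.Ioc α β)) :=
    MemLp.of_bound hgm M
      ((ae_restrict_iff' measurableSet_Ioc).2
        (Filter.Eventually.of_forall fun x hx => by
          rw [Real.norm_eq_abs, abs_of_nonneg (hg0 x)]; exact hgM x (hsub hx)))
  have hold := integral_mul_le_Lp_mul_Lq_of_nonneg hpq hwae hgae hwmem hgmem
  -- Hermite-Hadamard for g^q
  have hphi_int : IntervalIntegrable (fun x => g x ^ q) volume α β := by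
    refine aux_intInt hαβ.le ?_ (M := M ^ q) ?_
    · exact (Real.continuous_rpow_const hq0.le).comp_aestronglyMeasurable hgm
    · intro x hx
      rw [abs_of_nonneg (Real.rpow_nonneg (hg0 x) q)]
      exact Real.rpow_le_rpow (hg0 x) (hgM x (hsub hx)) hq0.le
  have hHH : ∫ x in α..β, g x ^ q ≤ (β - α) * g ((α + β) / 2) ^ q :=
    aux_hh hαβ.le hconc hphi_int
  -- convert interval integrals to set integrals
  rw [intervalIntegral.integral_of_le hαβ.le, intervalIntegral.integral_of_le hαβ.le]
  rw [intervalIntegral.integral_of_le hαβ.le] at hHH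
  refine le_trans hold ?_
  have hA0 : 0 ≤ (∫ x in Set.Ioc α β, w x ^ p) ^ (1/p) :=
    Real.rpow_nonneg (integral_nonneg_of_ae ((ae_restrict_iff' measurableSet_Ioc).2
      (Filter.Eventually.of_forall fun x hx =>
        Real.rpow_nonneg (hw0 x (hsub hx)) p))) _
  refine mul_le_mul_of_nonneg_left ?_ hA0
  have h1 : (∫ x in Set.Ioc α β, g x ^ q) ^ (1/q)
      ≤ ((β - α) * g ((α + β) / 2) ^ q) ^ (1/q) :=
    Real.rpow_le_rpow (integral_nonneg fun x => Real.rpow_nonneg (hg0 x) q)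
      hHH (by positivity)
  refine le_trans h1 (le_of_eq ?_)
  rw [Real.mul_rpow (by linarith) (Real.rpow_nonneg (hg0 _) q), one_div,
    Real.rpow_rpow_inv (hg0 _) (ne_of_gt hq0)]

lemma aux_const {q h : ℝ} (hq : 1 < q) (hh : 0 < h) :
    ((h ^ (q/(q-1) + 1)) / (q/(q-1) + 1)) ^ (1/(q/(q-1))) * h ^ (1/q)
      = ((q-1)/(2*q-1)) ^ ((q-1)/q) * (h * h) := by
  have hq1 : (0:ℝ) < q - 1 := by linarith
  have hq2 : (0:ℝ) < 2*q - 1 := by linarith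
  have hq0 : (0:ℝ) < q := by linarith
  set p := q/(q-1) with hp_def
  have hp : 0 < p := div_pos hq0 hq1
  have hp1 : p + 1 = (2*q-1)/(q-1) := by rw [hp_def]; field_simp; ring
  have hip : 1/p = (q-1)/q := one_div_div q (q-1)
  have hp1pos : 0 < p + 1 := by linarith
  have hexp : (p+1) * (1/p) + 1/q = 2 := by
    rw [hp_def]; field_simp; ring
  rw [Real.div_rpow (Real.rpow_nonneg hh.le _) hp1pos.le,
    ← Real.rpow_mul hh.le, div_mul_eq_mul_div, ← Real.rpow_add hh, hexp]
  have h2 : h ^ (2:ℝ) = h * h := by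
    rw [Real.rpow_two]; ring
  rw [h2, hp1, hip]
  rw [div_eq_mul_inv, ← Real.inv_rpow (by positivity), inv_div]
  ring

theorem rmk_2_2 (f f' : ℝ → ℝ) (a b c d : ℝ) (hab : a < b)
    (hca : c < a) (hbd : b < d)
    (hf : ∀ y ∈ Set.Ioo c d, HasDerivAt f (f' y) y)
    (hint : IntervalIntegrable f' volume a b)
    (q : ℝ) (hq : 1 < q)
    (hconc : ConcaveOn ℝ (Set.Icc a b) (fun y => |f' y| ^ q)) :
    |(f a + f b) / 2 - (1 / (b - a)) * ∫ u in a..b, f u|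
      ≤ ((q - 1) / (2 * q - 1)) ^ ((q - 1) / q) * ((b - a) / 4) *
        (|f' ((3 * a + b) / 4)| + |f' ((a + 3 * b) / 4)|) := by
  have hba : (0:ℝ) < b - a := by linarith
  have hm1 : a ≤ (a + b) / 2 := by linarith
  have hm2 : (a + b) / 2 ≤ b := by linarith
  have hq0 : (0:ℝ) < q := by linarith
  have hderiv : ∀ x ∈ Set.uIcc a b, HasDerivAt f (f' x) x := by
    intro x hx
    rw [Set.uIcc_of_le hab.le] at hx
    exact hf x ⟨lt_of_lt_of_le hca hx.1, lt_of_le_of_lt hx.2 hbd⟩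
  -- integration by parts
  have parts := intervalIntegral.integral_mul_deriv_eq_deriv_mul
    (u := fun x => x - (a + b) / 2) (u' := fun _ => (1:ℝ)) (v := f) (v' := f')
    (fun x _ => (hasDerivAt_id x).sub_const ((a + b) / 2)) hderiv
    intervalIntegrable_const hint
  simp only [one_mul] at parts
  have hE : (f a + f b) / 2 - (1 / (b - a)) * ∫ u in a..b, f u
      = (1 / (b - a)) * ∫ x in a..b, (x - (a + b) / 2) * f' x := by
    rw [parts]; field_simp; ring
  -- split the integral
  have hWl : IntervalIntegrable (fun x => (x - (a + b) / 2) * f' x) volume a ((a + b) / 2) :=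
    (hint.mono_set (Set.uIcc_subset_uIcc
      (by rw [Set.uIcc_of_le hab.le]; exact ⟨le_rfl, hab.le⟩)
      (by rw [Set.uIcc_of_le hab.le]; exact ⟨hm1, hm2⟩))).continuousOn_mul
      ((continuous_id.sub continuous_const).continuousOn)
  have hWr : IntervalIntegrable (fun x => (x - (a + b) / 2) * f' x) volume ((a + b) / 2) b :=
    (hint.mono_set (Set.uIcc_subset_uIcc
      (by rw [Set.uIcc_of_le hab.le]; exact ⟨hm1, hm2⟩)
      (by rw [Set.uIcc_of_le hab.le]; exact ⟨hab.le, le_rfl⟩))).continuousOn_mul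
      ((continuous_id.sub continuous_const).continuousOn)
  have hsplit : ∫ x in a..b, (x - (a + b) / 2) * f' x
      = (∫ x in a..((a + b) / 2), (x - (a + b) / 2) * f' x)
        + ∫ x in ((a + b) / 2)..b, (x - (a + b) / 2) * f' x :=
    (intervalIntegral.integral_add_adjacent_intervals hWl hWr).symm
  -- measurability of |f'|
  have hmeas : AEStronglyMeasurable f' (volume.restrict (Set.Ioc a b)) :=
    hint.1.aestronglyMeasurable
  have hgm : AEStronglyMeasurable (fun x => |f' x|) (volume.restrict (Set.Ioc a b)) :=
    hmeas.norm.congr (Filter.Eventually.of_forall fun x => Real.norm_eq_abs (f' x))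
  have hgml : AEStronglyMeasurable (fun x => |f' x|)
      (volume.restrict (Set.Ioc a ((a + b) / 2))) :=
    hgm.mono_measure (Measure.restrict_mono (Set.Ioc_subset_Ioc le_rfl hm2) le_rfl)
  have hgmr : AEStronglyMeasurable (fun x => |f' x|)
      (volume.restrict (Set.Ioc ((a + b) / 2) b)) :=
    hgm.mono_measure (Measure.restrict_mono (Set.Ioc_subset_Ioc hm1 le_rfl) le_rfl)
  -- uniform bound on |f'|
  obtain ⟨M, hM⟩ : ∃ M, ∀ x ∈ Set.Icc a b, |f' x| ≤ M := by
    refine ⟨(max (2 * (|f' ((a + b) / 2)| ^ q) - min (|f' a| ^ q) (|f' b| ^ q)) 0) ^ (1/q), ?_⟩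
    intro x hx
    have h1 : |f' x| ^ q
        ≤ max (2 * (|f' ((a + b) / 2)| ^ q) - min (|f' a| ^ q) (|f' b| ^ q)) 0 :=
      le_trans (aux_concave_upper hab.le hconc hx) (le_max_left _ _)
    calc |f' x| = (|f' x| ^ q) ^ (1/q) := by
          rw [one_div, Real.rpow_rpow_inv (abs_nonneg _) (ne_of_gt hq0)]
    _ ≤ _ := Real.rpow_le_rpow (Real.rpow_nonneg (abs_nonneg _) q) h1 (by positivity)
  -- conjugate exponent
  have hpq : Real.HolderConjugate (q / (q - 1)) q :=
    (Real.HolderConjugate.conjExponent hq).symm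
  have hp0 : 0 < q / (q - 1) := hpq.pos
  -- concavity on the halves
  have hconcl : ConcaveOn ℝ (Set.Icc a ((a + b) / 2)) (fun y => |f' y| ^ q) :=
    hconc.subset (Set.Icc_subset_Icc le_rfl hm2) (convex_Icc _ _)
  have hconcr : ConcaveOn ℝ (Set.Icc ((a + b) / 2) b) (fun y => |f' y| ^ q) :=
    hconc.subset (Set.Icc_subset_Icc hm1 le_rfl) (convex_Icc _ _)
  -- Hölder estimates on the halves
  have hL := aux_half (α := a) (β := (a + b) / 2) (M := M) (p := q / (q - 1))
    (g := fun x => |f' x|) (w := fun x => (a + b) / 2 - x)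
    (by linarith) hpq hgml (fun x => abs_nonneg _)
    (fun x hx => hM x ⟨hx.1, le_trans hx.2 hm2⟩) hconcl
    (continuous_const.sub continuous_id)
    (fun x hx => by linarith [hx.2])
  have hR := aux_half (α := (a + b) / 2) (β := b) (M := M) (p := q / (q - 1))
    (g := fun x => |f' x|) (w := fun x => x - (a + b) / 2)
    (by linarith) hpq hgmr (fun x => abs_nonneg _)
    (fun x hx => hM x ⟨le_trans hm1 hx.1, hx.2⟩) hconcr
    (continuous_id.sub continuous_const)
    (fun x hx => by linarith [hx.1])
  -- compute weight integrals
  have hwl : ∫ x in a..((a + b) / 2), ((a + b) / 2 - x) ^ (q / (q - 1))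
      = (((b - a) / 2) ^ (q / (q - 1) + 1)) / (q / (q - 1) + 1) := by
    have h4 : (∫ x in a..((a + b) / 2), ((a + b) / 2 - x) ^ (q / (q - 1)))
        = ∫ y in ((a + b) / 2 - (a + b) / 2)..((a + b) / 2 - a), y ^ (q / (q - 1)) :=
      intervalIntegral.integral_comp_sub_left (fun y => y ^ (q / (q - 1))) ((a + b) / 2)
    have e1 : (a + b) / 2 - (a + b) / 2 = 0 := by ring
    have e2 : (a + b) / 2 - a = (b - a) / 2 := by ring
    rw [e1, e2] at h4
    rw [h4, integral_rpow (Or.inl (by linarith : (-1:ℝ) < q / (q - 1))),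
      Real.zero_rpow (by positivity : q / (q - 1) + 1 ≠ 0)]
    ring
  have hwr : ∫ x in ((a + b) / 2)..b, (x - (a + b) / 2) ^ (q / (q - 1))
      = (((b - a) / 2) ^ (q / (q - 1) + 1)) / (q / (q - 1) + 1) := by
    have h4 : (∫ x in ((a + b) / 2)..b, (x - (a + b) / 2) ^ (q / (q - 1)))
        = ∫ y in ((a + b) / 2 - (a + b) / 2)..(b - (a + b) / 2), y ^ (q / (q - 1)) :=
      intervalIntegral.integral_comp_sub_right (fun y => y ^ (q / (q - 1))) ((a + b) / 2)
    have e1 : (a + b) / 2 - (a + b) / 2 = 0 := by ring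
    have e2 : b - (a + b) / 2 = (b - a) / 2 := by ring
    rw [e1, e2] at h4
    rw [h4, integral_rpow (Or.inl (by linarith : (-1:ℝ) < q / (q - 1))),
      Real.zero_rpow (by positivity : q / (q - 1) + 1 ≠ 0)]
    ring
  -- simplify the endpoints in hL, hR
  have eml : (a + (a + b) / 2) / 2 = (3 * a + b) / 4 := by ring
  have emr : ((a + b) / 2 + b) / 2 = (a + 3 * b) / 4 := by ring
  have edl : (a + b) / 2 - a = (b - a) / 2 := by ring
  have edr : b - (a + b) / 2 = (b - a) / 2 := by ring
  rw [hwl, eml, edl] at hL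
  rw [hwr, emr, edr] at hR
  have hcst := aux_const (h := (b - a) / 2) hq (by linarith)
  have hL2 : (∫ x in a..((a + b) / 2), ((a + b) / 2 - x) * |f' x|)
      ≤ ((q - 1) / (2 * q - 1)) ^ ((q - 1) / q) * ((b - a) / 2 * ((b - a) / 2))
        * |f' ((3 * a + b) / 4)| := by
    refine le_trans hL (le_of_eq ?_)
    rw [← mul_assoc, hcst]
  have hR2 : (∫ x in ((a + b) / 2)..b, (x - (a + b) / 2) * |f' x|)
      ≤ ((q - 1) / (2 * q - 1)) ^ ((q - 1) / q) * ((b - a) / 2 * ((b - a) / 2))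
        * |f' ((a + 3 * b) / 4)| := by
    refine le_trans hR (le_of_eq ?_)
    rw [← mul_assoc, hcst]
  -- absolute value bounds on the halves
  have habsL : |∫ x in a..((a + b) / 2), (x - (a + b) / 2) * f' x|
      ≤ ∫ x in a..((a + b) / 2), ((a + b) / 2 - x) * |f' x| := by
    refine le_trans (intervalIntegral.abs_integral_le_integral_abs hm1) (le_of_eq ?_)
    refine intervalIntegral.integral_congr fun x hx => ?_
    rw [Set.uIcc_of_le hm1] at hx
    rw [abs_mul, abs_of_nonpos (sub_nonpos.2 hx.2)]
    ring
  have habsR : |∫ x in ((a + b) / 2)..b, (x - (a + b) / 2) * f' x|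
      ≤ ∫ x in ((a + b) / 2)..b, (x - (a + b) / 2) * |f' x| := by
    refine le_trans (intervalIntegral.abs_integral_le_integral_abs hm2) (le_of_eq ?_)
    refine intervalIntegral.integral_congr fun x hx => ?_
    rw [Set.uIcc_of_le hm2] at hx
    rw [abs_mul, abs_of_nonneg (sub_nonneg.2 hx.1)]
  -- put everything together
  have hC0 : (0:ℝ) ≤ ((q - 1) / (2 * q - 1)) ^ ((q - 1) / q) :=
    Real.rpow_nonneg (div_nonneg (by linarith) (by linarith)) _
  have hIb : |∫ x in a..b, (x - (a + b) / 2) * f' x|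
      ≤ ((q - 1) / (2 * q - 1)) ^ ((q - 1) / q) * ((b - a) / 2 * ((b - a) / 2))
        * (|f' ((3 * a + b) / 4)| + |f' ((a + 3 * b) / 4)|) := by
    rw [hsplit]
    calc |(∫ x in a..((a + b) / 2), (x - (a + b) / 2) * f' x)
        + ∫ x in ((a + b) / 2)..b, (x - (a + b) / 2) * f' x|
        ≤ |∫ x in a..((a + b) / 2), (x - (a + b) / 2) * f' x|
          + |∫ x in ((a + b) / 2)..b, (x - (a + b) / 2) * f' x| := abs_add_le _ _
      _ ≤ ((q - 1) / (2 * q - 1)) ^ ((q - 1) / q) * ((b - a) / 2 * ((b - a) / 2))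
            * |f' ((3 * a + b) / 4)|
          + ((q - 1) / (2 * q - 1)) ^ ((q - 1) / q) * ((b - a) / 2 * ((b - a) / 2))
            * |f' ((a + 3 * b) / 4)| :=
        add_le_add (le_trans habsL hL2) (le_trans habsR hR2)
      _ = _ := by ring
  rw [hE, abs_mul, abs_of_pos (by positivity : (0:ℝ) < 1 / (b - a))]
  calc (1 / (b - a)) * |∫ x in a..b, (x - (a + b) / 2) * f' x|
      ≤ (1 / (b - a)) * (((q - 1) / (2 * q - 1)) ^ ((q - 1) / q)
          * ((b - a) / 2 * ((b - a) / 2))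
          * (|f' ((3 * a + b) / 4)| + |f' ((a + 3 * b) / 4)|)) :=
      mul_le_mul_of_nonneg_left hIb (by positivity)
    _ = _ := by field_simp; ring
end

section
/- Let f be differentiable with f' integrable on [a,b], a < b, q ≥ 1, and |f'|^q convex on [a,b]. Then for each x ∈ [a,b], |((b-x)·f(b) + (x-a)·f(a))/(b-a) - (1/(b-a))·∫_a^b f(u) du| ≤ (1/2)·(1/3)^{1/q} · [ (x-a)²·(|f'(x)|^q + 2|f'(a)|^q)^{1/q} + (b-x)²·(|f'(x)|^q + 2|f'(b)|^q)^{1/q} ] / (b-a). -/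
open MeasureTheory intervalIntegral Set

lemma aux_int_w (s t : ℝ) : ∫ u in s..t, (t - u) = (t - s)^2 / 2 := by
  rw [intervalIntegral.integral_comp_sub_left (fun v => v) t]
  simp [integral_id]

lemma aux_int_w2 (s t : ℝ) : ∫ u in s..t, (t - u)^2 = (t - s)^3 / 3 := by
  rw [intervalIntegral.integral_comp_sub_left (fun v => v^2) t]
  simp [integral_pow]; norm_num

lemma aux_int_w3 (s t : ℝ) : ∫ u in s..t, (t - u)*(u - s) = (t - s)^3 / 6 := by
  rw [show (fun u => (t-u)*(u-s)) = (fun u => ((t - s) - (u - s)) * (u - s)) from by funext u; ring]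
  rw [intervalIntegral.integral_comp_sub_right (fun v => ((t - s) - v) * v) s]
  rw [show (fun v : ℝ => ((t - s) - v) * v) = (fun v : ℝ => (t-s) * v - v^2) from by funext v; ring]
  rw [intervalIntegral.integral_sub ((by fun_prop : Continuous fun v : ℝ => (t-s)*v).intervalIntegrable _ _)
    ((by fun_prop : Continuous fun v : ℝ => v^2).intervalIntegrable _ _),
    intervalIntegral.integral_const_mul]
  simp [integral_id, integral_pow]
  ring

lemma key (g : ℝ → ℝ) (s t A B q : ℝ) (hst : s ≤ t) (hq : 1 ≤ q)
    (hA : 0 ≤ A) (hB : 0 ≤ B)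
    (hg0 : ∀ u ∈ Set.Icc s t, 0 ≤ g u)
    (hgi : IntervalIntegrable g volume s t)
    (hbd : ∀ u ∈ Set.Icc s t, (t - s) * g u ^ q ≤ (t - u) * A + (u - s) * B) :
    ∫ u in s..t, (t - u) * g u ≤ (t - s)^2 / 2 * (1/3 : ℝ)^(1/q) * (B + 2*A)^(1/q) := by
  have hq0 : 0 < q := lt_of_lt_of_le one_pos hq
  have hq0' : 0 ≤ 1/q := by positivity
  rcases eq_or_lt_of_le hst with rfl | hlt
  · simp
  have hts : 0 < t - s := sub_pos.2 hlt
  -- pointwise bounds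
  have hAB : ∀ u ∈ Set.Icc s t, g u ^ q ≤ A + B := by
    intro u hu
    have h := hbd u hu
    have h2 : (t - s) * g u ^ q ≤ (t - s) * (A + B) := by nlinarith [hu.1, hu.2]
    exact le_of_mul_le_mul_left h2 hts
  have hgb : ∀ u ∈ Set.Icc s t, g u ≤ (A + B)^(1/q) := by
    intro u hu
    have h1 : g u = (g u ^ q) ^ (1/q) := by
      rw [one_div, Real.rpow_rpow_inv (hg0 u hu) (ne_of_gt hq0)]
    rw [h1]
    exact Real.rpow_le_rpow (Real.rpow_nonneg (hg0 u hu) q) (hAB u hu) hq0'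
  -- integrability
  have gmeas : AEStronglyMeasurable g (volume.restrict (Set.Ioc s t)) :=
    hgi.1.aestronglyMeasurable
  have gq_meas : AEStronglyMeasurable (fun u => g u ^ q) (volume.restrict (Set.Ioc s t)) :=
    (gmeas.aemeasurable.pow_const q).aestronglyMeasurable
  have int_wgq : IntervalIntegrable (fun u => (t - u) * g u ^ q) volume s t := by
    rw [intervalIntegrable_iff_integrableOn_Ioc_of_le hst]
    refine Integrable.mono' (g := fun _ => (t - s) * (A + B))
      (integrableOn_const measure_Ioc_lt_top.ne)
      (((continuous_const.sub continuous_id).aestronglyMeasurable).mul gq_meas) ?_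
    rw [ae_restrict_iff' measurableSet_Ioc]
    refine Filter.Eventually.of_forall fun u hu => ?_
    have hu' : u ∈ Set.Icc s t := ⟨hu.1.le, hu.2⟩
    have h1 : (0:ℝ) ≤ t - u := by linarith [hu.2]
    rw [Real.norm_eq_abs, abs_of_nonneg (mul_nonneg h1 (Real.rpow_nonneg (hg0 u hu') q))]
    exact mul_le_mul (by linarith [hu.1]) (hAB u hu') (Real.rpow_nonneg (hg0 u hu') q) hts.le
  set M := ∫ u in s..t, (t - u) * g u ^ q with hMdef
  have hM0 : 0 ≤ M := intervalIntegral.integral_nonneg hst fun u hu =>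
    mul_nonneg (by linarith [hu.2]) (Real.rpow_nonneg (hg0 u hu) q)
  -- Hölder / power-mean step
  have hH : ∫ u in s..t, (t - u) * g u ≤ ((t - s)^2/2)^(1 - 1/q) * M^(1/q) := by
    rcases eq_or_lt_of_le hq with hq1 | hq1
    · subst hq1
      simp only [one_div, inv_one, sub_self, Real.rpow_zero, Real.rpow_one, one_mul, hMdef]
      exact le_of_eq (by simp [Real.rpow_one])
    · set p := Real.conjExponent q with hpdef
      have hpq : p.HolderConjugate q := (Real.HolderConjugate.conjExponent hq1).symm
      have hp0 : 0 < p := hpq.pos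
      have hsum : 1/p + 1/q = 1 := by
        rw [one_div, one_div]; exact hpq.inv_add_inv_eq_one
      have hp_inv : 1/p = 1 - 1/q := by linarith
      set μ := volume.restrict (Set.Ioc s t) with hμ
      haveI : IsFiniteMeasure μ := ⟨by
        rw [hμ, Measure.restrict_apply_univ]; exact measure_Ioc_lt_top⟩
      set F : ℝ → ℝ := fun u => (t - u)^(1/p) with hF
      set G : ℝ → ℝ := fun u => (t - u)^(1/q) * g u with hG
      have hGm : AEStronglyMeasurable G μ :=
        (((measurable_const.sub measurable_id).pow_const _).aestronglyMeasurable).mul gmeas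
      have hFm : AEStronglyMeasurable F μ :=
        ((measurable_const.sub measurable_id).pow_const _).aestronglyMeasurable
      have haeIoc : ∀ (P : ℝ → Prop), (∀ u ∈ Set.Ioc s t, P u) → ∀ᵐ u ∂μ, P u := by
        intro P hP
        rw [hμ, ae_restrict_iff' measurableSet_Ioc]
        exact Filter.Eventually.of_forall hP
      have memF : MemLp F (ENNReal.ofReal p) μ := by
        refine MemLp.of_bound hFm ((t - s)^(1/p)) (haeIoc _ fun u hu => ?_)
        have h1 : (0:ℝ) ≤ t - u := by linarith [hu.2]
        rw [Real.norm_eq_abs, abs_of_nonneg (Real.rpow_nonneg h1 _)]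
        exact Real.rpow_le_rpow h1 (by linarith [hu.1]) (by positivity)
      have memG : MemLp G (ENNReal.ofReal q) μ := by
        refine MemLp.of_bound hGm ((t - s)^(1/q) * (A + B)^(1/q)) (haeIoc _ fun u hu => ?_)
        have hu' : u ∈ Set.Icc s t := ⟨hu.1.le, hu.2⟩
        have h1 : (0:ℝ) ≤ t - u := by linarith [hu.2]
        rw [Real.norm_eq_abs, abs_of_nonneg (mul_nonneg (Real.rpow_nonneg h1 _) (hg0 u hu'))]
        exact mul_le_mul (Real.rpow_le_rpow h1 (by linarith [hu.1]) hq0') (hgb u hu')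
          (hg0 u hu') (Real.rpow_nonneg hts.le _)
      have hFnn : 0 ≤ᵐ[μ] F := haeIoc _ fun u hu => Real.rpow_nonneg (by linarith [hu.2]) _
      have hGnn : 0 ≤ᵐ[μ] G := haeIoc _ fun u hu =>
        mul_nonneg (Real.rpow_nonneg (by linarith [hu.2]) _) (hg0 u ⟨hu.1.le, hu.2⟩)
      have hH0 := integral_mul_le_Lp_mul_Lq_of_nonneg hpq hFnn hGnn memF memG
      have e1 : ∫ u, F u * G u ∂μ = ∫ u in s..t, (t - u) * g u := by
        rw [intervalIntegral.integral_of_le hst]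
        refine integral_congr_ae (haeIoc _ fun u hu => ?_)
        have h1 : (0:ℝ) ≤ t - u := by linarith [hu.2]
        show (t - u)^(1/p) * ((t - u)^(1/q) * g u) = (t - u) * g u
        rw [← mul_assoc, ← Real.rpow_add' h1 (by rw [hsum]; norm_num), hsum, Real.rpow_one]
      have e2 : ∫ u, F u ^ p ∂μ = (t - s)^2/2 := by
        have : ∫ u, F u ^ p ∂μ = ∫ u in s..t, (t - u) := by
          rw [intervalIntegral.integral_of_le hst]
          refine integral_congr_ae (haeIoc _ fun u hu => ?_)
          have h1 : (0:ℝ) ≤ t - u := by linarith [hu.2]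
          show ((t - u)^(1/p)) ^ p = t - u
          rw [← Real.rpow_mul h1, one_div, inv_mul_cancel₀ (ne_of_gt hp0), Real.rpow_one]
        rw [this, aux_int_w]
      have e3 : ∫ u, G u ^ q ∂μ = M := by
        rw [hMdef, intervalIntegral.integral_of_le hst]
        refine integral_congr_ae (haeIoc _ fun u hu => ?_)
        have h1 : (0:ℝ) ≤ t - u := by linarith [hu.2]
        show ((t - u)^(1/q) * g u) ^ q = (t - u) * g u ^ q
        rw [Real.mul_rpow (Real.rpow_nonneg h1 _) (hg0 u ⟨hu.1.le, hu.2⟩),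
          ← Real.rpow_mul h1, one_div, inv_mul_cancel₀ (ne_of_gt hq0), Real.rpow_one]
      rw [e1, e2, e3] at hH0
      rwa [hp_inv] at hH0
  -- bound on M
  have intpoly : IntervalIntegrable (fun u => (t - u) * ((t - u) * A + (u - s) * B)) volume s t :=
    (by fun_prop : Continuous fun u : ℝ => (t - u) * ((t - u) * A + (u - s) * B)).intervalIntegrable _ _
  have hMle : M ≤ (t - s)^2 * (B + 2*A) / 6 := by
    have h1 : (t - s) * M = ∫ u in s..t, (t - s) * ((t - u) * g u ^ q) :=
      (intervalIntegral.integral_const_mul _ _).symm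
    have h2 : ∫ u in s..t, (t - s) * ((t - u) * g u ^ q)
        ≤ ∫ u in s..t, (t - u) * ((t - u) * A + (u - s) * B) := by
      refine intervalIntegral.integral_mono_on hst (int_wgq.const_mul _) intpoly fun u hu => ?_
      have h3 : (0:ℝ) ≤ t - u := by linarith [hu.2]
      calc (t - s) * ((t - u) * g u ^ q) = (t - u) * ((t - s) * g u ^ q) := by ring
        _ ≤ (t - u) * ((t - u) * A + (u - s) * B) :=
            mul_le_mul_of_nonneg_left (hbd u hu) h3
    have h4 : ∫ u in s..t, (t - u) * ((t - u) * A + (u - s) * B)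
        = A * ((t - s)^3/3) + B * ((t - s)^3/6) := by
      rw [show (fun u => (t - u) * ((t - u) * A + (u - s) * B))
          = fun u => A * (t - u)^2 + B * ((t - u) * (u - s)) from by funext u; ring]
      rw [intervalIntegral.integral_add
        ((by fun_prop : Continuous fun u : ℝ => A * (t - u)^2).intervalIntegrable _ _)
        ((by fun_prop : Continuous fun u : ℝ => B * ((t - u) * (u - s))).intervalIntegrable _ _),
        intervalIntegral.integral_const_mul, intervalIntegral.integral_const_mul,
        aux_int_w2, aux_int_w3]
    have h5 : (t - s) * M ≤ (t - s) * ((t - s)^2 * (B + 2*A) / 6) := by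
      rw [h1]
      refine h2.trans (le_of_eq ?_)
      rw [h4]; ring
    exact le_of_mul_le_mul_left h5 hts
  -- combine
  have hc : (0:ℝ) < (t - s)^2/2 := by positivity
  calc ∫ u in s..t, (t - u) * g u ≤ ((t - s)^2/2)^(1 - 1/q) * M^(1/q) := hH
    _ ≤ ((t - s)^2/2)^(1 - 1/q) * ((t - s)^2 * (B + 2*A) / 6)^(1/q) :=
        mul_le_mul_of_nonneg_left (Real.rpow_le_rpow hM0 hMle hq0')
          (Real.rpow_nonneg hc.le _)
    _ = (t - s)^2 / 2 * (1/3 : ℝ)^(1/q) * (B + 2*A)^(1/q) := by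
        rw [show (t - s)^2 * (B + 2*A) / 6 = ((t - s)^2/2) * ((1/3) * (B + 2*A)) from by ring,
          Real.mul_rpow hc.le (by positivity), Real.mul_rpow (by norm_num) (by positivity)]
        rw [show ((t - s)^2/2)^(1 - 1/q) * (((t - s)^2/2)^(1/q) * ((1/3 : ℝ)^(1/q) * (B + 2*A)^(1/q)))
          = (((t - s)^2/2)^(1 - 1/q) * ((t - s)^2/2)^(1/q)) * ((1/3 : ℝ)^(1/q) * (B + 2*A)^(1/q)) from by ring]
        rw [← Real.rpow_add hc, show 1 - 1/q + 1/q = 1 from by ring, Real.rpow_one]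
        ring
lemma key' (g : ℝ → ℝ) (s t A B q : ℝ) (hst : s ≤ t) (hq : 1 ≤ q)
    (hA : 0 ≤ A) (hB : 0 ≤ B)
    (hg0 : ∀ u ∈ Set.Icc s t, 0 ≤ g u)
    (hgi : IntervalIntegrable g volume s t)
    (hbd : ∀ u ∈ Set.Icc s t, (t - s) * g u ^ q ≤ (u - s) * A + (t - u) * B) :
    ∫ u in s..t, (u - s) * g u ≤ (t - s)^2 / 2 * (1/3 : ℝ)^(1/q) * (B + 2*A)^(1/q) := by
  have h := key (fun v => g (-v)) (-t) (-s) A B q (by linarith) hq hA hB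
    (fun v hv => hg0 (-v) ⟨by linarith [hv.2], by linarith [hv.1]⟩)
    (((IntervalIntegrable.iff_comp_neg).mp hgi).symm)
    (fun v hv => by
      have h2 := hbd (-v) ⟨by linarith [hv.2], by linarith [hv.1]⟩
      have e1 : -s - -t = t - s := by ring
      rw [e1]
      calc (t - s) * g (-v) ^ q ≤ (-v - s) * A + (t - -v) * B := h2
        _ = (-s - v) * A + (v - -t) * B := by ring)
  have e : ∫ v in (-t)..(-s), (-s - v) * g (-v) = ∫ u in s..t, (u - s) * g u := by
    have h3 := intervalIntegral.integral_comp_neg (a := -t) (b := -s)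
      (f := fun u => (u - s) * g u)
    simp only [neg_neg] at h3
    rw [← h3]
    exact intervalIntegral.integral_congr fun v _ => by ring_nf
  calc ∫ u in s..t, (u - s) * g u = ∫ v in (-t)..(-s), (-s - v) * g (-v) := e.symm
    _ ≤ (-s - -t)^2 / 2 * (1/3 : ℝ)^(1/q) * (B + 2*A)^(1/q) := h
    _ = (t - s)^2 / 2 * (1/3 : ℝ)^(1/q) * (B + 2*A)^(1/q) := by ring_nf
theorem thm_2_4 (f f' : ℝ → ℝ) (a b c d : ℝ) (hab : a < b)
    (hca : c < a) (hbd : b < d)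
    (hf : ∀ y ∈ Set.Ioo c d, HasDerivAt f (f' y) y)
    (hint : IntervalIntegrable f' volume a b)
    (q : ℝ) (hq : 1 ≤ q)
    (hconv : ConvexOn ℝ (Set.Icc a b) (fun y => |f' y| ^ q))
    (x : ℝ) (hx : x ∈ Set.Icc a b) :
    |((b - x) * f b + (x - a) * f a) / (b - a) - (1 / (b - a)) * ∫ u in a..b, f u|
      ≤ (1 / 2) * (1 / 3 : ℝ) ^ (1 / q) *
        (((x - a) ^ 2 * (|f' x| ^ q + 2 * |f' a| ^ q) ^ (1 / q)
          + (b - x) ^ 2 * (|f' x| ^ q + 2 * |f' b| ^ q) ^ (1 / q)) / (b - a)) := by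
  obtain ⟨hax, hxb⟩ := hx
  have hba : (0:ℝ) < b - a := sub_pos.2 hab
  have hsub : Set.Icc a b ⊆ Set.Ioo c d := fun y hy =>
    ⟨lt_of_lt_of_le hca hy.1, lt_of_le_of_lt hy.2 hbd⟩
  have hderiv : ∀ y ∈ Set.uIcc a b, HasDerivAt f (f' y) y := fun y hy =>
    hf y (hsub (by rwa [Set.uIcc_of_le hab.le] at hy))
  have hu : ∀ y ∈ Set.uIcc a b, HasDerivAt (fun t => t - x) 1 y := fun y _ =>
    (hasDerivAt_id y).sub_const x
  have hparts := intervalIntegral.integral_mul_deriv_eq_deriv_mul hu hderiv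
    intervalIntegrable_const hint
  have h1 : ∫ u in a..b, (1:ℝ) * f u = ∫ u in a..b, f u := by simp
  have hiden : ((b - x) * f b + (x - a) * f a) / (b - a) - (1 / (b - a)) * ∫ u in a..b, f u
      = (∫ u in a..b, (u - x) * f' u) / (b - a) := by
    rw [hparts, h1]; ring
  -- integrability on subintervals
  have hint_ax : IntervalIntegrable f' volume a x := hint.mono_set
    (by rw [Set.uIcc_of_le hax, Set.uIcc_of_le hab.le]; exact Set.Icc_subset_Icc le_rfl hxb)
  have hint_xb : IntervalIntegrable f' volume x b := hint.mono_set
    (by rw [Set.uIcc_of_le hxb, Set.uIcc_of_le hab.le]; exact Set.Icc_subset_Icc hax le_rfl)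
  have hprod_ax : IntervalIntegrable (fun u => (u - x) * f' u) volume a x :=
    hint_ax.continuousOn_mul (by fun_prop)
  have hprod_xb : IntervalIntegrable (fun u => (u - x) * f' u) volume x b :=
    hint_xb.continuousOn_mul (by fun_prop)
  have hsplit : ∫ u in a..b, (u - x) * f' u
      = (∫ u in a..x, (u - x) * f' u) + ∫ u in x..b, (u - x) * f' u :=
    (intervalIntegral.integral_add_adjacent_intervals hprod_ax hprod_xb).symm
  -- abs bounds on each piece
  have hL1 : |∫ u in a..x, (u - x) * f' u| ≤ ∫ u in a..x, (x - u) * |f' u| := by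
    refine (intervalIntegral.abs_integral_le_integral_abs hax).trans (le_of_eq ?_)
    refine intervalIntegral.integral_congr fun u hu => ?_
    rw [Set.uIcc_of_le hax] at hu
    rw [abs_mul, abs_of_nonpos (by linarith [hu.2] : u - x ≤ 0)]
    ring
  have hR1 : |∫ u in x..b, (u - x) * f' u| ≤ ∫ u in x..b, (u - x) * |f' u| := by
    refine (intervalIntegral.abs_integral_le_integral_abs hxb).trans (le_of_eq ?_)
    refine intervalIntegral.integral_congr fun u hu => ?_
    rw [Set.uIcc_of_le hxb] at hu
    rw [abs_mul, abs_of_nonneg (by linarith [hu.1] : (0:ℝ) ≤ u - x)]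
  -- convexity bounds
  have hbdL : ∀ u ∈ Set.Icc a x, (x - a) * |f' u| ^ q
      ≤ (x - u) * |f' a| ^ q + (u - a) * |f' x| ^ q := by
    intro u hu
    rcases eq_or_lt_of_le hax with h | h
    · obtain rfl : a = x := h
      obtain rfl : u = a := le_antisymm hu.2 hu.1
      simp
    · have hxa : (0:ℝ) < x - a := sub_pos.2 h
      set lam := (x - u) / (x - a) with hlam
      set mu := (u - a) / (x - a) with hmu
      have hl0 : 0 ≤ lam := div_nonneg (by linarith [hu.2]) hxa.le
      have hm0 : 0 ≤ mu := div_nonneg (by linarith [hu.1]) hxa.le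
      have hsum : lam + mu = 1 := by rw [hlam, hmu]; field_simp; ring
      have h2 := hconv.2 (Set.mem_Icc.2 ⟨le_rfl, hab.le⟩) (Set.mem_Icc.2 ⟨hax, hxb⟩) hl0 hm0 hsum
      simp only [smul_eq_mul] at h2
      have hcomb : lam * a + mu * x = u := by rw [hlam, hmu]; field_simp; try ring
      rw [hcomb] at h2
      have h3 := mul_le_mul_of_nonneg_left h2 hxa.le
      calc (x - a) * |f' u| ^ q ≤ (x - a) * (lam * |f' a| ^ q + mu * |f' x| ^ q) := h3
        _ = (x - u) * |f' a| ^ q + (u - a) * |f' x| ^ q := by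
            rw [hlam, hmu]; field_simp; try ring
  have hbdR : ∀ u ∈ Set.Icc x b, (b - x) * |f' u| ^ q
      ≤ (u - x) * |f' b| ^ q + (b - u) * |f' x| ^ q := by
    intro u hu
    rcases eq_or_lt_of_le hxb with h | h
    · obtain rfl : x = b := h
      obtain rfl : u = x := le_antisymm hu.2 hu.1
      simp
    · have hbx : (0:ℝ) < b - x := sub_pos.2 h
      set lam := (b - u) / (b - x) with hlam
      set mu := (u - x) / (b - x) with hmu
      have hl0 : 0 ≤ lam := div_nonneg (by linarith [hu.2]) hbx.le
      have hm0 : 0 ≤ mu := div_nonneg (by linarith [hu.1]) hbx.le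
      have hsum : lam + mu = 1 := by rw [hlam, hmu]; field_simp; ring
      have h2 := hconv.2 (Set.mem_Icc.2 ⟨hax, hxb⟩) (Set.mem_Icc.2 ⟨hab.le, le_rfl⟩) hl0 hm0 hsum
      simp only [smul_eq_mul] at h2
      have hcomb : lam * x + mu * b = u := by rw [hlam, hmu]; field_simp; try ring
      rw [hcomb] at h2
      have h3 := mul_le_mul_of_nonneg_left h2 hbx.le
      calc (b - x) * |f' u| ^ q ≤ (b - x) * (lam * |f' x| ^ q + mu * |f' b| ^ q) := h3
        _ = (u - x) * |f' b| ^ q + (b - u) * |f' x| ^ q := by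
            rw [hlam, hmu]; field_simp; try ring
  -- apply key lemmas
  have hKL := key (fun u => |f' u|) a x (|f' a| ^ q) (|f' x| ^ q) q hax hq
    (Real.rpow_nonneg (abs_nonneg _) q) (Real.rpow_nonneg (abs_nonneg _) q)
    (fun u _ => abs_nonneg _) hint_ax.abs hbdL
  have hKR := key' (fun u => |f' u|) x b (|f' b| ^ q) (|f' x| ^ q) q hxb hq
    (Real.rpow_nonneg (abs_nonneg _) q) (Real.rpow_nonneg (abs_nonneg _) q)
    (fun u _ => abs_nonneg _) hint_xb.abs hbdR
  have h5 : |∫ u in a..b, (u - x) * f' u|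
      ≤ (x - a)^2 / 2 * (1/3 : ℝ)^(1/q) * (|f' x| ^ q + 2 * |f' a| ^ q)^(1/q)
        + (b - x)^2 / 2 * (1/3 : ℝ)^(1/q) * (|f' x| ^ q + 2 * |f' b| ^ q)^(1/q) := by
    rw [hsplit]
    refine (abs_add_le _ _).trans (add_le_add (hL1.trans ?_) (hR1.trans ?_))
    · exact le_of_le_of_eq hKL (by ring)
    · exact le_of_le_of_eq hKR (by ring)
  rw [hiden, abs_div, abs_of_pos hba]
  calc |∫ u in a..b, (u - x) * f' u| / (b - a)
      ≤ ((x - a)^2 / 2 * (1/3 : ℝ)^(1/q) * (|f' x| ^ q + 2 * |f' a| ^ q)^(1/q)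
        + (b - x)^2 / 2 * (1/3 : ℝ)^(1/q) * (|f' x| ^ q + 2 * |f' b| ^ q)^(1/q)) / (b - a) := by
        gcongr
    _ = (1 / 2) * (1 / 3 : ℝ) ^ (1 / q) *
        (((x - a) ^ 2 * (|f' x| ^ q + 2 * |f' a| ^ q) ^ (1 / q)
          + (b - x) ^ 2 * (|f' x| ^ q + 2 * |f' b| ^ q) ^ (1 / q)) / (b - a)) := by
        ring
end

section
/- Let f be differentiable with f' integrable on [a,b], a < b, q ≥ 1, and |f'|^q convex on [a,b]. Then |(f(a)+f(b))/2 - (1/(b-a))·∫_a^b f(u) du| ≤ ((b-a)/8)·(1/3)^{1/q}·[ (2|f'(a)|^q + |f'((a+b)/2)|^q)^{1/q} + (2|f'(b)|^q + |f'((a+b)/2)|^q)^{1/q} ] ≤ (3^{1-1/q}/8)·(b-a)·(|f'(a)| + |f'(b)|). -/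
open MeasureTheory intervalIntegral

open Set



lemma aux_rpow_add_le {x y s : ℝ} (hx : 0 ≤ x) (hy : 0 ≤ y) (hs0 : 0 ≤ s) (hs1 : s ≤ 1) :
    (x + y) ^ s ≤ x ^ s + y ^ s := by
  have h := NNReal.rpow_add_le_add_rpow x.toNNReal y.toNNReal hs0 hs1
  have h2 := NNReal.coe_le_coe.mpr h
  push_cast at h2
  rwa [Real.coe_toNNReal _ hx, Real.coe_toNNReal _ hy] at h2

lemma aux_two_point {x y q : ℝ} (hx : 0 ≤ x) (hy : 0 ≤ y) (hq : 1 ≤ q) :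
    x ^ (1/q) + y ^ (1/q) ≤ 2 * ((x + y) / 2) ^ (1/q) := by
  have hq0 : (0:ℝ) < q := lt_of_lt_of_le one_pos hq
  have key := Real.arith_mean_le_rpow_mean (Finset.univ : Finset (Fin 2))
      ![1/2, 1/2] ![x ^ (1/q), y ^ (1/q)]
      (by intro i _; fin_cases i <;> norm_num)
      (by simp [Fin.sum_univ_two]; norm_num)
      (by intro i _; fin_cases i <;>
        simp [Real.rpow_nonneg hx, Real.rpow_nonneg hy]) hq
  simp only [Fin.sum_univ_two, Matrix.cons_val_zero, Matrix.cons_val_one, Matrix.head_cons] at key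
  have ex : (x ^ (1/q)) ^ q = x := by
    rw [← Real.rpow_mul hx, one_div, inv_mul_cancel₀ (ne_of_gt hq0), Real.rpow_one]
  have ey : (y ^ (1/q)) ^ q = y := by
    rw [← Real.rpow_mul hy, one_div, inv_mul_cancel₀ (ne_of_gt hq0), Real.rpow_one]
  rw [ex, ey] at key
  have e : (1:ℝ)/2 * x + 1/2 * y = (x + y)/2 := by ring
  have e2 : (1:ℝ)/2 * x ^ (1/q) + 1/2 * y ^ (1/q) = (x ^ (1/q) + y ^ (1/q))/2 := by ring
  rw [e, e2] at key
  linarith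

lemma convex_affine_bound {g : ℝ → ℝ} {a b α β : ℝ} (hconv : ConvexOn ℝ (Set.Icc a b) g)
    (hs : Set.Icc α β ⊆ Set.Icc a b) (hαβ : α < β) {u : ℝ} (hu : u ∈ Set.Icc α β) :
    g u ≤ ((β - u) * g α + (u - α) * g β) / (β - α) := by
  have hβα : (0:ℝ) < β - α := by linarith
  have h1 : 0 ≤ (β - u) / (β - α) := div_nonneg (by linarith [hu.2]) hβα.le
  have h2 : 0 ≤ (u - α) / (β - α) := div_nonneg (by linarith [hu.1]) hβα.le
  have h3 : (β - u) / (β - α) + (u - α) / (β - α) = 1 := by field_simp; ring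
  have := hconv.2 (hs ⟨le_refl α, hαβ.le⟩) (hs ⟨hαβ.le, le_refl β⟩) h1 h2 h3
  have h4 : ((β - u) / (β - α)) • α + ((u - α) / (β - α)) • β = u := by
    rw [smul_eq_mul, smul_eq_mul]; field_simp; ring
  rw [h4, smul_eq_mul, smul_eq_mul] at this
  calc g u ≤ (β - u) / (β - α) * g α + (u - α) / (β - α) * g β := this
    _ = ((β - u) * g α + (u - α) * g β) / (β - α) := by field_simp

lemma holder_step {q : ℝ} (hq : 1 ≤ q) {α β : ℝ} (hαβ : α < β) {w φ : ℝ → ℝ}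
    (hw : Continuous w) (hw0 : ∀ u ∈ Set.Ioc α β, 0 ≤ w u)
    (hwb : ∀ u ∈ Set.Ioc α β, w u ≤ β - α)
    (hφ0 : ∀ u, 0 ≤ φ u)
    (hφm : AEStronglyMeasurable φ (volume.restrict (Set.Ioc α β)))
    (hwφq : IntegrableOn (fun u => w u * φ u ^ q) (Set.Ioc α β) volume) :
    ∫ u in α..β, w u * φ u ≤
      (∫ u in α..β, w u) ^ (1 - 1/q) * (∫ u in α..β, w u * φ u ^ q) ^ (1/q) := by
  rcases eq_or_lt_of_le hq with h1 | h1
  · rw [← h1]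
    norm_num [Real.rpow_one]
  · -- q > 1
    have hq0 : (0:ℝ) < q := by linarith
    set p := q / (q - 1) with hp
    have hpq : p.HolderConjugate q := by
      refine ⟨?_, ?_, hq0⟩
      · rw [hp, inv_div, inv_one, ← one_div, ← add_div, sub_add_cancel, div_self hq0.ne']
      · rw [hp]; exact div_pos hq0 (by linarith)
    set μ := volume.restrict (Set.Ioc α β) with hμ
    haveI : IsFiniteMeasure μ :=
      ⟨by rw [hμ, Measure.restrict_apply_univ, Real.volume_Ioc]; exact ENNReal.ofReal_lt_top⟩
    set f₁ := fun u => w u ^ (1/p) with hf₁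
    set g₁ := fun u => w u ^ (1/q) * φ u with hg₁
    have hf₁c : Continuous f₁ := hw.rpow_const (fun x => Or.inr hpq.one_div_nonneg)
    have hg₁m : AEStronglyMeasurable g₁ μ :=
      ((hw.rpow_const (fun x => Or.inr hpq.symm.one_div_nonneg)).aestronglyMeasurable).mul hφm
    have hwpow : ∀ u ∈ Set.Ioc α β, (w u ^ (1/q)) ^ q = w u := by
      intro u hu
      rw [← Real.rpow_mul (hw0 u hu), one_div_mul_cancel hq0.ne', Real.rpow_one]
    have hf₁nn : 0 ≤ᵐ[μ] f₁ :=
      ae_restrict_of_forall_mem measurableSet_Ioc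
        (fun u hu => Real.rpow_nonneg (hw0 u hu) _)
    have hg₁nn : 0 ≤ᵐ[μ] g₁ :=
      ae_restrict_of_forall_mem measurableSet_Ioc
        (fun u hu => mul_nonneg (Real.rpow_nonneg (hw0 u hu) _) (hφ0 u))
    have hmf : MemLp f₁ (ENNReal.ofReal p) μ := by
      refine MemLp.of_bound hf₁c.aestronglyMeasurable ((β - α) ^ (1/p)) ?_
      refine ae_restrict_of_forall_mem measurableSet_Ioc (fun u hu => ?_)
      rw [Real.norm_eq_abs, abs_of_nonneg (Real.rpow_nonneg (hw0 u hu) _)]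
      exact Real.rpow_le_rpow (hw0 u hu) (hwb u hu) hpq.one_div_nonneg
    have hgq_eq : ∀ u ∈ Set.Ioc α β, w u * φ u ^ q = ‖g₁ u‖ ^ q := by
      intro u hu
      rw [Real.norm_eq_abs,
        abs_of_nonneg (mul_nonneg (Real.rpow_nonneg (hw0 u hu) _) (hφ0 u)),
        Real.mul_rpow (Real.rpow_nonneg (hw0 u hu) _) (hφ0 u), hwpow u hu]
    have hiq : Integrable (fun u => ‖g₁ u‖ ^ q) μ :=
      hwφq.congr (ae_restrict_of_forall_mem measurableSet_Ioc hgq_eq)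
    have hmg : MemLp g₁ (ENNReal.ofReal q) μ := by
      have h2 := (memLp_one_iff_integrable).2 hiq
      have h3 : (ENNReal.ofReal q) / (ENNReal.ofReal q) = 1 :=
        ENNReal.div_self (ENNReal.ofReal_pos.2 hq0).ne' ENNReal.ofReal_ne_top
      have h4 : (ENNReal.ofReal q).toReal = q := ENNReal.toReal_ofReal hq0.le
      rw [← h3] at h2
      refine (memLp_norm_rpow_iff hg₁m (ENNReal.ofReal_pos.2 hq0).ne' ENNReal.ofReal_ne_top).1 ?_
      rw [h4]; exact h2
    have H := MeasureTheory.integral_mul_le_Lp_mul_Lq_of_nonneg hpq hf₁nn hg₁nn hmf hmg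
    have e₁ : ∫ u, f₁ u * g₁ u ∂μ = ∫ u, w u * φ u ∂μ := by
      refine integral_congr_ae (ae_restrict_of_forall_mem measurableSet_Ioc (fun u hu => ?_))
      show w u ^ (1/p) * (w u ^ (1/q) * φ u) = w u * φ u
      rw [← mul_assoc, ← Real.rpow_add_of_nonneg (hw0 u hu) hpq.one_div_nonneg
        hpq.symm.one_div_nonneg]
      rw [one_div, one_div, hpq.inv_add_inv_eq_one, Real.rpow_one]
    have e₂ : ∫ u, f₁ u ^ p ∂μ = ∫ u, w u ∂μ := by
      refine integral_congr_ae (ae_restrict_of_forall_mem measurableSet_Ioc (fun u hu => ?_))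
      show (w u ^ (1/p)) ^ p = w u
      rw [← Real.rpow_mul (hw0 u hu), one_div_mul_cancel hpq.ne_zero, Real.rpow_one]
    have e₃ : ∫ u, g₁ u ^ q ∂μ = ∫ u, w u * φ u ^ q ∂μ := by
      refine integral_congr_ae (ae_restrict_of_forall_mem measurableSet_Ioc (fun u hu => ?_))
      show (w u ^ (1/q) * φ u) ^ q = w u * φ u ^ q
      rw [Real.mul_rpow (Real.rpow_nonneg (hw0 u hu) _) (hφ0 u), hwpow u hu]
    rw [e₁, e₂, e₃] at H
    have hps : 1/p = 1 - 1/q := by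
      rw [one_div, one_div]
      have := hpq.inv_add_inv_eq_one
      linarith
    rw [hps] at H
    rw [intervalIntegral.integral_of_le hαβ.le, intervalIntegral.integral_of_le hαβ.le,
      intervalIntegral.integral_of_le hαβ.le]
    exact H

lemma rpow_combine {W0 c s : ℝ} (hW : 0 < W0) (hc : 0 ≤ c) :
    W0 ^ (1 - s) * (W0 * ((1/3) * c)) ^ s = W0 * ((1/3:ℝ)^s * c^s) := by
  rw [Real.mul_rpow hW.le (by positivity), Real.mul_rpow (by norm_num : (0:ℝ) ≤ 1/3) hc,
    ← mul_assoc, ← Real.rpow_add hW, sub_add_cancel, Real.rpow_one]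

lemma half_left {f' : ℝ → ℝ} {q α β : ℝ} (hq : 1 ≤ q) (hαβ : α < β)
    (hm : AEStronglyMeasurable f' (volume.restrict (Set.Ioc α β)))
    (hbound : ∀ u ∈ Set.Icc α β,
      |f' u| ^ q ≤ ((β - u) * |f' α| ^ q + (u - α) * |f' β| ^ q) / (β - α)) :
    ∫ u in α..β, (β - u) * |f' u| ≤
      ((β - α)^2/2) ^ (1 - 1/q) * ((β - α)^2 * (2 * |f' α| ^ q + |f' β| ^ q) / 6) ^ (1/q) := by
  have hβα : (0:ℝ) < β - α := by linarith
  set Gα := |f' α| ^ q with hGadef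
  set Gβ := |f' β| ^ q with hGbdef
  have hGα : 0 ≤ Gα := Real.rpow_nonneg (abs_nonneg _) q
  have hGβ : 0 ≤ Gβ := Real.rpow_nonneg (abs_nonneg _) q
  have hAff : Continuous (fun u => (β - u) * (((β - u) * Gα + (u - α) * Gβ) / (β - α))) := by
    fun_prop
  have hφm : AEStronglyMeasurable (fun u => |f' u|) (volume.restrict (Set.Ioc α β)) := by
    simpa [Real.norm_eq_abs] using hm.norm
  have hφqm : AEStronglyMeasurable (fun u => |f' u| ^ q) (volume.restrict (Set.Ioc α β)) :=
    (continuous_abs.rpow_const (fun _ => Or.inr (by linarith))).comp_aestronglyMeasurable hm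
  have hI : IntegrableOn (fun u => (β - u) * |f' u| ^ q) (Set.Ioc α β) volume := by
    refine Integrable.mono' hAff.integrableOn_Ioc
      (((continuous_const.sub continuous_id).aestronglyMeasurable).mul hφqm) ?_
    refine ae_restrict_of_forall_mem measurableSet_Ioc (fun u hu => ?_)
    have h1 : 0 ≤ β - u := by linarith [hu.2]
    rw [Real.norm_eq_abs, abs_of_nonneg (mul_nonneg h1 (Real.rpow_nonneg (abs_nonneg _) q))]
    exact mul_le_mul_of_nonneg_left (hbound u (Set.Ioc_subset_Icc_self hu)) h1
  have holder := holder_step hq hαβ (continuous_const.sub continuous_id)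
    (fun u hu => by show (0:ℝ) ≤ β - u; linarith [hu.2])
    (fun u hu => by show β - u ≤ β - α; linarith [hu.1])
    (fun u => abs_nonneg _) hφm hI
  have hW : ∫ u in α..β, (β - u) = (β - α)^2/2 := by
    rw [intervalIntegral.integral_sub (intervalIntegrable_const) intervalIntegrable_id,
      intervalIntegral.integral_const, integral_id]
    simp only [smul_eq_mul]; ring
  have hJ0 : 0 ≤ ∫ u in α..β, (β - u) * |f' u| ^ q :=
    intervalIntegral.integral_nonneg hαβ.le
      (fun u hu => mul_nonneg (by linarith [hu.2]) (Real.rpow_nonneg (abs_nonneg _) q))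
  have hder : ∀ u : ℝ, HasDerivAt
      (fun v => -(Gα*(β - v)^3)/3 + Gβ*(-(v^3)/3 + (α+β)*v^2/2 - α*β*v))
      ((β - u)^2*Gα + (β - u)*(u - α)*Gβ) u := by
    intro u
    have h1 : HasDerivAt (fun v : ℝ => β - v) (-1) u := (hasDerivAt_id u).const_sub β
    have h2 := h1.pow 3
    have h3 : HasDerivAt (fun v : ℝ => v^3) (3*u^2) u := by simpa using hasDerivAt_pow 3 u
    have h4 : HasDerivAt (fun v : ℝ => v^2) (2*u) u := by simpa using hasDerivAt_pow 2 u
    have h5 : HasDerivAt (fun v : ℝ => α*β*v) (α*β) u := by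
      simpa using (hasDerivAt_id u).const_mul (α*β)
    have hA := ((h2.const_mul Gα).neg).div_const 3
    have hB := (((h3.neg.div_const 3).add ((h4.const_mul (α+β)).div_const 2)).sub h5).const_mul Gβ
    exact (hA.add hB).congr_deriv (by ring)
  have hcomp : ∫ u in α..β, ((β - u)^2*Gα + (β - u)*(u - α)*Gβ)
      = Gα*(β-α)^3/3 + Gβ*(β-α)^3/6 := by
    rw [intervalIntegral.integral_eq_sub_of_hasDerivAt (fun u _ => hder u)
      ((by fun_prop : Continuous (fun u : ℝ => (β - u)^2*Gα + (β - u)*(u - α)*Gβ)).intervalIntegrable α β)]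
    ring
  have hJle : ∫ u in α..β, (β - u) * |f' u| ^ q ≤ (β - α)^2 * (2*Gα + Gβ)/6 := by
    have mono := intervalIntegral.integral_mono_on hαβ.le
      (intervalIntegrable_iff.2 (by rwa [Set.uIoc_of_le hαβ.le]))
      (hAff.intervalIntegrable α β)
      (fun u hu => mul_le_mul_of_nonneg_left (hbound u hu) (by linarith [hu.2]))
    refine mono.trans (le_of_eq ?_)
    have e1 : ∫ u in α..β, (β - u) * (((β - u) * Gα + (u - α) * Gβ) / (β - α))
        = ∫ u in α..β, (1/(β-α)) * ((β - u)^2*Gα + (β - u)*(u - α)*Gβ) :=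
      intervalIntegral.integral_congr (fun u _ => by field_simp)
    rw [e1, intervalIntegral.integral_const_mul, hcomp]
    field_simp
    ring
  calc ∫ u in α..β, (β - u) * |f' u|
      ≤ (∫ u in α..β, (β - u)) ^ (1 - 1/q) * (∫ u in α..β, (β - u) * |f' u| ^ q) ^ (1/q) := holder
    _ ≤ ((β - α)^2/2) ^ (1 - 1/q) * ((β - α)^2 * (2*Gα + Gβ)/6) ^ (1/q) := by
        rw [hW]
        exact mul_le_mul_of_nonneg_left
          (Real.rpow_le_rpow hJ0 hJle (by positivity))
          (Real.rpow_nonneg (by positivity) _)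

lemma half_right {f' : ℝ → ℝ} {q α β : ℝ} (hq : 1 ≤ q) (hαβ : α < β)
    (hm : AEStronglyMeasurable f' (volume.restrict (Set.Ioc α β)))
    (hbound : ∀ u ∈ Set.Icc α β,
      |f' u| ^ q ≤ ((β - u) * |f' α| ^ q + (u - α) * |f' β| ^ q) / (β - α)) :
    ∫ u in α..β, (u - α) * |f' u| ≤
      ((β - α)^2/2) ^ (1 - 1/q) * ((β - α)^2 * (|f' α| ^ q + 2 * |f' β| ^ q) / 6) ^ (1/q) := by
  have hβα : (0:ℝ) < β - α := by linarith
  set Gα := |f' α| ^ q with hGadef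
  set Gβ := |f' β| ^ q with hGbdef
  have hGα : 0 ≤ Gα := Real.rpow_nonneg (abs_nonneg _) q
  have hGβ : 0 ≤ Gβ := Real.rpow_nonneg (abs_nonneg _) q
  have hAff : Continuous (fun u => (u - α) * (((β - u) * Gα + (u - α) * Gβ) / (β - α))) := by
    fun_prop
  have hφm : AEStronglyMeasurable (fun u => |f' u|) (volume.restrict (Set.Ioc α β)) := by
    simpa [Real.norm_eq_abs] using hm.norm
  have hφqm : AEStronglyMeasurable (fun u => |f' u| ^ q) (volume.restrict (Set.Ioc α β)) :=
    (continuous_abs.rpow_const (fun _ => Or.inr (by linarith))).comp_aestronglyMeasurable hm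
  have hI : IntegrableOn (fun u => (u - α) * |f' u| ^ q) (Set.Ioc α β) volume := by
    refine Integrable.mono' hAff.integrableOn_Ioc
      (((continuous_id.sub continuous_const).aestronglyMeasurable).mul hφqm) ?_
    refine ae_restrict_of_forall_mem measurableSet_Ioc (fun u hu => ?_)
    have h1 : 0 ≤ u - α := by linarith [hu.1]
    rw [Real.norm_eq_abs, abs_of_nonneg (mul_nonneg h1 (Real.rpow_nonneg (abs_nonneg _) q))]
    exact mul_le_mul_of_nonneg_left (hbound u (Set.Ioc_subset_Icc_self hu)) h1
  have holder := holder_step hq hαβ (continuous_id.sub continuous_const)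
    (fun u hu => by show (0:ℝ) ≤ u - α; linarith [hu.1])
    (fun u hu => by show u - α ≤ β - α; linarith [hu.2])
    (fun u => abs_nonneg _) hφm hI
  have hW : ∫ u in α..β, (u - α) = (β - α)^2/2 := by
    rw [intervalIntegral.integral_sub intervalIntegrable_id (intervalIntegrable_const),
      intervalIntegral.integral_const, integral_id]
    simp only [smul_eq_mul]; ring
  have hJ0 : 0 ≤ ∫ u in α..β, (u - α) * |f' u| ^ q :=
    intervalIntegral.integral_nonneg hαβ.le
      (fun u hu => mul_nonneg (by linarith [hu.1]) (Real.rpow_nonneg (abs_nonneg _) q))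
  have hder : ∀ u : ℝ, HasDerivAt
      (fun v => Gα*(-(v^3)/3 + (α+β)*v^2/2 - α*β*v) + Gβ*(v - α)^3/3)
      ((u - α)*(β - u)*Gα + (u - α)^2*Gβ) u := by
    intro u
    have h1 : HasDerivAt (fun v : ℝ => v - α) (1) u := (hasDerivAt_id u).sub_const α
    have h2 := h1.pow 3
    have h3 : HasDerivAt (fun v : ℝ => v^3) (3*u^2) u := by simpa using hasDerivAt_pow 3 u
    have h4 : HasDerivAt (fun v : ℝ => v^2) (2*u) u := by simpa using hasDerivAt_pow 2 u
    have h5 : HasDerivAt (fun v : ℝ => α*β*v) (α*β) u := by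
      simpa using (hasDerivAt_id u).const_mul (α*β)
    have hA := (((h3.neg.div_const 3).add ((h4.const_mul (α+β)).div_const 2)).sub h5).const_mul Gα
    have hB := (h2.const_mul Gβ).div_const 3
    exact (hA.add hB).congr_deriv (by ring)
  have hcomp : ∫ u in α..β, ((u - α)*(β - u)*Gα + (u - α)^2*Gβ)
      = Gα*(β-α)^3/6 + Gβ*(β-α)^3/3 := by
    rw [intervalIntegral.integral_eq_sub_of_hasDerivAt (fun u _ => hder u)
      ((by fun_prop : Continuous (fun u : ℝ => (u - α)*(β - u)*Gα + (u - α)^2*Gβ)).intervalIntegrable α β)]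
    ring
  have hJle : ∫ u in α..β, (u - α) * |f' u| ^ q ≤ (β - α)^2 * (Gα + 2*Gβ)/6 := by
    have mono := intervalIntegral.integral_mono_on hαβ.le
      (intervalIntegrable_iff.2 (by rwa [Set.uIoc_of_le hαβ.le]))
      (hAff.intervalIntegrable α β)
      (fun u hu => mul_le_mul_of_nonneg_left (hbound u hu) (by linarith [hu.1]))
    refine mono.trans (le_of_eq ?_)
    have e1 : ∫ u in α..β, (u - α) * (((β - u) * Gα + (u - α) * Gβ) / (β - α))
        = ∫ u in α..β, (1/(β-α)) * ((u - α)*(β - u)*Gα + (u - α)^2*Gβ) :=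
      intervalIntegral.integral_congr (fun u _ => by field_simp)
    rw [e1, intervalIntegral.integral_const_mul, hcomp]
    field_simp
    ring
  calc ∫ u in α..β, (u - α) * |f' u|
      ≤ (∫ u in α..β, (u - α)) ^ (1 - 1/q) * (∫ u in α..β, (u - α) * |f' u| ^ q) ^ (1/q) := holder
    _ ≤ ((β - α)^2/2) ^ (1 - 1/q) * ((β - α)^2 * (Gα + 2*Gβ)/6) ^ (1/q) := by
        rw [hW]
        exact mul_le_mul_of_nonneg_left
          (Real.rpow_le_rpow hJ0 hJle (by positivity))
          (Real.rpow_nonneg (by positivity) _)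

theorem cor_2_3 (f f' : ℝ → ℝ) (a b c d : ℝ) (hab : a < b)
    (hca : c < a) (hbd : b < d)
    (hf : ∀ y ∈ Set.Ioo c d, HasDerivAt f (f' y) y)
    (hint : IntervalIntegrable f' volume a b)
    (q : ℝ) (hq : 1 ≤ q)
    (hconv : ConvexOn ℝ (Set.Icc a b) (fun y => |f' y| ^ q)) :
    |(f a + f b) / 2 - (1 / (b - a)) * ∫ u in a..b, f u|
      ≤ ((b - a) / 8) * (1 / 3 : ℝ) ^ (1 / q) *
        ((2 * |f' a| ^ q + |f' ((a + b) / 2)| ^ q) ^ (1 / q)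
          + (2 * |f' b| ^ q + |f' ((a + b) / 2)| ^ q) ^ (1 / q))
    ∧ ((b - a) / 8) * (1 / 3 : ℝ) ^ (1 / q) *
        ((2 * |f' a| ^ q + |f' ((a + b) / 2)| ^ q) ^ (1 / q)
          + (2 * |f' b| ^ q + |f' ((a + b) / 2)| ^ q) ^ (1 / q))
      ≤ ((3 : ℝ) ^ (1 - 1 / q) / 8) * (b - a) * (|f' a| + |f' b|) := by
  have hq0 : (0:ℝ) < q := by linarith
  have hba : (0:ℝ) < b - a := by linarith
  have hbane : b - a ≠ 0 := ne_of_gt hba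
  set m : ℝ := (a + b) / 2 with hmdef
  have ham : a < m := by rw [hmdef]; linarith
  have hmb : m < b := by rw [hmdef]; linarith
  have hsub : Set.Icc a b ⊆ Set.Ioo c d := fun x hx =>
    ⟨lt_of_lt_of_le hca hx.1, lt_of_le_of_lt hx.2 hbd⟩
  set Aq := |f' a| ^ q with hAqdef
  set Bq := |f' b| ^ q with hBqdef
  set Mq := |f' m| ^ q with hMqdef
  have hAq0 : 0 ≤ Aq := Real.rpow_nonneg (abs_nonneg _) q
  have hBq0 : 0 ≤ Bq := Real.rpow_nonneg (abs_nonneg _) q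
  have hMq0 : 0 ≤ Mq := Real.rpow_nonneg (abs_nonneg _) q
  have hs0 : (0:ℝ) ≤ 1/q := by positivity
  have hs1 : 1/q ≤ 1 := by rw [div_le_one hq0]; exact hq
  -- Part 1 machinery
  have hfc : ContinuousOn f (Set.uIcc a b) := by
    rw [Set.uIcc_of_le hab.le]
    exact fun x hx => ((hf x (hsub hx)).continuousAt).continuousWithinAt
  have hintf : IntervalIntegrable f volume a b := hfc.intervalIntegrable
  have hwf' : IntervalIntegrable (fun u => (u - m) * f' u) volume a b :=
    hint.continuousOn_mul ((continuous_id.sub continuous_const).continuousOn)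
  have hiden : ∫ u in a..b, (u - m) * f' u = (b - a) * (f a + f b) / 2 - ∫ u in a..b, f u := by
    have key : ∀ u ∈ Set.uIcc a b,
        HasDerivAt (fun v => (v - m) * f v) (f u + (u - m) * f' u) u := by
      intro u hu
      rw [Set.uIcc_of_le hab.le] at hu
      have := ((hasDerivAt_id u).sub_const m).mul (hf u (hsub hu))
      simp only [id_eq] at this
      exact this.congr_deriv (by ring)
    have hparts : ∫ u in a..b, (f u + (u - m) * f' u) = (b - m) * f b - (a - m) * f a := by
      simpa using intervalIntegral.integral_eq_sub_of_hasDerivAt key (hintf.add hwf')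
    rw [intervalIntegral.integral_add hintf hwf'] at hparts
    have e : (b - m) * f b - (a - m) * f a = (b - a) * (f a + f b) / 2 := by
      rw [hmdef]; ring
    linarith [hparts]
  have hset1 : Set.uIcc a m ⊆ Set.uIcc a b := by
    rw [Set.uIcc_of_le ham.le, Set.uIcc_of_le hab.le]
    exact Set.Icc_subset_Icc le_rfl hmb.le
  have hset2 : Set.uIcc m b ⊆ Set.uIcc a b := by
    rw [Set.uIcc_of_le hmb.le, Set.uIcc_of_le hab.le]
    exact Set.Icc_subset_Icc ham.le le_rfl
  have hia : IntervalIntegrable (fun u => |u - m| * |f' u|) volume a m :=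
    (hint.mono_set hset1).abs.continuousOn_mul
      ((continuous_id.sub continuous_const).abs.continuousOn)
  have hib : IntervalIntegrable (fun u => |u - m| * |f' u|) volume m b :=
    (hint.mono_set hset2).abs.continuousOn_mul
      ((continuous_id.sub continuous_const).abs.continuousOn)
  have habs : |∫ u in a..b, (u - m) * f' u|
      ≤ (∫ u in a..m, (m - u) * |f' u|) + ∫ u in m..b, (u - m) * |f' u| := by
    have h1 : |∫ u in a..b, (u - m) * f' u| ≤ ∫ u in a..b, |u - m| * |f' u| := by
      refine (intervalIntegral.abs_integral_le_integral_abs hab.le).trans (le_of_eq ?_)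
      exact intervalIntegral.integral_congr (fun u _ => abs_mul _ _)
    have hsplit := intervalIntegral.integral_add_adjacent_intervals hia hib
    have e1 : ∫ u in a..m, |u - m| * |f' u| = ∫ u in a..m, (m - u) * |f' u| :=
      intervalIntegral.integral_congr (fun u hu => by
        rw [Set.uIcc_of_le ham.le] at hu
        rw [abs_sub_comm, abs_of_nonneg (by linarith [hu.2] : (0:ℝ) ≤ m - u)])
    have e2 : ∫ u in m..b, |u - m| * |f' u| = ∫ u in m..b, (u - m) * |f' u| :=
      intervalIntegral.integral_congr (fun u hu => by
        rw [Set.uIcc_of_le hmb.le] at hu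
        rw [abs_of_nonneg (by linarith [hu.1] : (0:ℝ) ≤ u - m)])
    calc |∫ u in a..b, (u - m) * f' u| ≤ ∫ u in a..b, |u - m| * |f' u| := h1
      _ = (∫ u in a..m, |u - m| * |f' u|) + ∫ u in m..b, |u - m| * |f' u| := hsplit.symm
      _ = _ := by rw [e1, e2]
  have hf'm1 : AEStronglyMeasurable f' (volume.restrict (Set.Ioc a m)) :=
    hint.1.aestronglyMeasurable.mono_measure
      (Measure.restrict_mono (Set.Ioc_subset_Ioc_right hmb.le) le_rfl)
  have hf'm2 : AEStronglyMeasurable f' (volume.restrict (Set.Ioc m b)) :=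
    hint.1.aestronglyMeasurable.mono_measure
      (Measure.restrict_mono (Set.Ioc_subset_Ioc_left ham.le) le_rfl)
  have hb1 : ∀ u ∈ Set.Icc a m,
      |f' u| ^ q ≤ ((m - u) * |f' a| ^ q + (u - a) * |f' m| ^ q) / (m - a) := fun u hu =>
    convex_affine_bound hconv (Set.Icc_subset_Icc le_rfl hmb.le) ham hu
  have hb2 : ∀ u ∈ Set.Icc m b,
      |f' u| ^ q ≤ ((b - u) * |f' m| ^ q + (u - m) * |f' b| ^ q) / (b - m) := fun u hu =>
    convex_affine_bound hconv (Set.Icc_subset_Icc ham.le le_rfl) hmb hu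
  have h1 := half_left hq ham hf'm1 hb1
  have h2 := half_right hq hmb hf'm2 hb2
  have hW0 : (0:ℝ) < (b - a)^2/8 := by positivity
  have eW1 : (m - a)^2/2 = (b - a)^2/8 := by rw [hmdef]; ring
  have eW2 : (b - m)^2/2 = (b - a)^2/8 := by rw [hmdef]; ring
  have eJ1 : (m - a)^2 * (2 * Aq + Mq) / 6 = ((b - a)^2/8) * ((1/3) * (2 * Aq + Mq)) := by
    rw [hmdef]; ring
  have eJ2 : (b - m)^2 * (Mq + 2 * Bq) / 6 = ((b - a)^2/8) * ((1/3) * (2 * Bq + Mq)) := by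
    rw [hmdef]; ring
  rw [eW1, eJ1, rpow_combine hW0 (by positivity)] at h1
  rw [eW2, eJ2, rpow_combine hW0 (by positivity)] at h2
  have hgoal1 : (f a + f b) / 2 - (1 / (b - a)) * ∫ u in a..b, f u
      = (1 / (b - a)) * ∫ u in a..b, (u - m) * f' u := by
    rw [hiden]; field_simp
  constructor
  · rw [hgoal1, abs_mul, abs_of_pos (by positivity : (0:ℝ) < 1/(b - a))]
    calc (1/(b - a)) * |∫ u in a..b, (u - m) * f' u|
        ≤ (1/(b - a)) * ((∫ u in a..m, (m - u) * |f' u|) + ∫ u in m..b, (u - m) * |f' u|) :=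
          mul_le_mul_of_nonneg_left habs (by positivity)
      _ ≤ (1/(b - a)) * ((b - a)^2/8 * ((1/3:ℝ)^(1/q) * (2 * Aq + Mq)^(1/q))
            + (b - a)^2/8 * ((1/3:ℝ)^(1/q) * (2 * Bq + Mq)^(1/q))) :=
          mul_le_mul_of_nonneg_left (add_le_add h1 h2) (by positivity)
      _ = ((b - a) / 8) * (1/3:ℝ)^(1/q) * ((2 * Aq + Mq)^(1/q) + (2 * Bq + Mq)^(1/q)) := by
          field_simp
  · -- second inequality
    have hM : Mq ≤ (Aq + Bq)/2 := by
      have h := hconv.2 (Set.mem_Icc.2 ⟨le_refl a, hab.le⟩) (Set.mem_Icc.2 ⟨hab.le, le_refl b⟩)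
        (by norm_num : (0:ℝ) ≤ 1/2) (by norm_num : (0:ℝ) ≤ 1/2) (by norm_num)
      have e : (1/2 : ℝ) • a + (1/2 : ℝ) • b = m := by
        rw [hmdef, smul_eq_mul, smul_eq_mul]; ring
      rw [e] at h
      simp only [smul_eq_mul] at h
      have h' : Mq ≤ 1/2 * Aq + 1/2 * Bq := h
      linarith
    have hX0 : (0:ℝ) ≤ 2 * Aq + Mq := by linarith
    have hY0 : (0:ℝ) ≤ 2 * Bq + Mq := by linarith
    have t1 := aux_two_point hX0 hY0 hq
    have t2 : ((2 * Aq + Mq) + (2 * Bq + Mq))/2 ≤ (3/2) * (Aq + Bq) := by linarith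
    have t3 : (((2 * Aq + Mq) + (2 * Bq + Mq))/2) ^ (1/q) ≤ ((3/2) * (Aq + Bq)) ^ (1/q) :=
      Real.rpow_le_rpow (by positivity) t2 hs0
    have t4 : ((3/2) * (Aq + Bq) : ℝ) ^ (1/q) = (3/2:ℝ)^(1/q) * (Aq + Bq)^(1/q) :=
      Real.mul_rpow (by norm_num) (by positivity)
    have t5 : (Aq + Bq)^(1/q) ≤ |f' a| + |f' b| := by
      have h := aux_rpow_add_le hAq0 hBq0 hs0 hs1
      have eA : Aq ^ (1/q) = |f' a| := by
        rw [hAqdef, ← Real.rpow_mul (abs_nonneg _), mul_one_div, div_self hq0.ne', Real.rpow_one]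
      have eB : Bq ^ (1/q) = |f' b| := by
        rw [hBqdef, ← Real.rpow_mul (abs_nonneg _), mul_one_div, div_self hq0.ne', Real.rpow_one]
      rw [eA, eB] at h
      exact h
    have e13 : (1/3 : ℝ)^(1/q) * (3/2 : ℝ)^(1/q) = (1/2 : ℝ)^(1/q) := by
      rw [← Real.mul_rpow (by norm_num) (by norm_num)]
      norm_num
    have e2s : 2 * ((1:ℝ)/2)^(1/q) = (2:ℝ)^(1 - 1/q) := by
      rw [Real.rpow_sub (by norm_num : (0:ℝ) < 2), Real.rpow_one,
        Real.div_rpow (by norm_num) (by norm_num), Real.one_rpow]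
      ring
    have e23 : (2:ℝ)^(1 - 1/q) ≤ (3:ℝ)^(1 - 1/q) :=
      Real.rpow_le_rpow (by norm_num) (by norm_num) (by linarith)
    calc ((b - a) / 8) * (1/3:ℝ)^(1/q) * ((2 * Aq + Mq)^(1/q) + (2 * Bq + Mq)^(1/q))
        ≤ ((b - a) / 8) * (1/3:ℝ)^(1/q) * (2 * (((3/2) * (Aq + Bq)) ^ (1/q))) := by
          refine mul_le_mul_of_nonneg_left (t1.trans ?_) (by positivity)
          linarith
      _ = ((b - a) / 8) * ((2 * ((1:ℝ)/2)^(1/q)) * (Aq + Bq)^(1/q)) := by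
          rw [t4, ← e13]; ring
      _ = ((b - a) / 8) * ((2:ℝ)^(1 - 1/q) * (Aq + Bq)^(1/q)) := by rw [e2s]
      _ ≤ ((b - a) / 8) * ((3:ℝ)^(1 - 1/q) * (|f' a| + |f' b|)) := by
          refine mul_le_mul_of_nonneg_left ?_ (by positivity)
          exact mul_le_mul e23 t5 (by positivity) (by positivity)
      _ = ((3 : ℝ) ^ (1 - 1 / q) / 8) * (b - a) * (|f' a| + |f' b|) := by ring
end

section
/- Let f be differentiable with f' integrable on [a,b], a < b, q ≥ 1, and |f'|^q concave on [a,b]. Then |(f(a)+f(b))/2 - (1/(b-a))·∫_a^b f(u) du| ≤ ((b-a)/8)·(|f'((5a+b)/6)| + |f'((a+5b)/6)|). -/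
open MeasureTheory intervalIntegral

private lemma poly_int (a b α β γ : ℝ) :
    ∫ t in a..b, (α + β * t + γ * t ^ 2) =
      α * (b - a) + β * (b ^ 2 - a ^ 2) / 2 + γ * (b ^ 3 - a ^ 3) / 3 := by
  have h1 : IntervalIntegrable (fun t : ℝ => α + β * t) volume a b :=
    (by continuity : Continuous fun t : ℝ => α + β * t).intervalIntegrable _ _
  have h2 : IntervalIntegrable (fun t : ℝ => γ * t ^ 2) volume a b :=
    (by continuity : Continuous fun t : ℝ => γ * t ^ 2).intervalIntegrable _ _
  have h3 : IntervalIntegrable (fun _ : ℝ => α) volume a b := intervalIntegrable_const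
  have h4 : IntervalIntegrable (fun t : ℝ => β * t) volume a b :=
    (by continuity : Continuous fun t : ℝ => β * t).intervalIntegrable _ _
  rw [intervalIntegral.integral_add h1 h2, intervalIntegral.integral_add h3 h4]
  rw [intervalIntegral.integral_const, intervalIntegral.integral_const_mul,
    intervalIntegral.integral_const_mul, integral_id, integral_pow]
  push_cast
  simp only [smul_eq_mul]
  ring

private lemma exists_supergrad {g : ℝ → ℝ} {a b x₀ : ℝ} (hg : ConcaveOn ℝ (Set.Icc a b) g)
    (ha : a < x₀) (hb : x₀ < b) :
    ∃ s : ℝ, ∀ t ∈ Set.Icc a b, g t ≤ g x₀ + s * (t - x₀) := by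
  set S : Set ℝ := (fun u => (g u - g x₀) / (u - x₀)) '' Set.Ioc x₀ b with hS
  have hne : S.Nonempty := ⟨_, ⟨b, ⟨hb, le_refl b⟩, rfl⟩⟩
  have hax : a ∈ Set.Icc a b := ⟨le_refl a, (ha.trans hb).le⟩
  have hub0 : ∀ r ∈ S, r ≤ (g x₀ - g a) / (x₀ - a) := by
    rintro r ⟨u, ⟨hu1, hu2⟩, rfl⟩
    exact hg.slope_anti_adjacent hax ⟨((ha.trans hu1)).le, hu2⟩ ha hu1
  have hbdd : BddAbove S := ⟨_, hub0⟩
  refine ⟨sSup S, fun t ht => ?_⟩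
  rcases lt_trichotomy t x₀ with hlt | heq | hgt
  · have hub : ∀ r ∈ S, r ≤ (g x₀ - g t) / (x₀ - t) := by
      rintro r ⟨u, ⟨hu1, hu2⟩, rfl⟩
      exact hg.slope_anti_adjacent ht ⟨((ht.1.trans_lt hlt).trans hu1).le, hu2⟩ hlt hu1
    have h1 := csSup_le hne hub
    have hpos : 0 < x₀ - t := by linarith
    have h2 : sSup S * (x₀ - t) ≤ g x₀ - g t := (le_div_iff₀ hpos).mp h1
    have h3 : sSup S * (t - x₀) = -(sSup S * (x₀ - t)) := by ring
    linarith
  · subst heq; simp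
  · have hmem : (g t - g x₀) / (t - x₀) ∈ S := ⟨t, ⟨hgt, ht.2⟩, rfl⟩
    have h1 := le_csSup hbdd hmem
    have hpos : 0 < t - x₀ := by linarith
    have h2 : g t - g x₀ ≤ sSup S * (t - x₀) := (div_le_iff₀ hpos).mp h1
    linarith

private lemma abs_concave {g : ℝ → ℝ} {a b q : ℝ} (hq : 1 ≤ q)
    (hconc : ConcaveOn ℝ (Set.Icc a b) fun y => |g y| ^ q) :
    ConcaveOn ℝ (Set.Icc a b) fun y => |g y| := by
  refine ⟨convex_Icc a b, fun x hx y hy p r hp hr hpr => ?_⟩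
  simp only [smul_eq_mul]
  have h1 := hconc.2 hx hy hp hr hpr
  simp only [smul_eq_mul] at h1
  have h2 : (p * |g x| + r * |g y|) ^ q ≤ p * |g x| ^ q + r * |g y| ^ q := by
    have := (convexOn_rpow hq).2 (Set.mem_Ici.mpr (abs_nonneg (g x)))
      (Set.mem_Ici.mpr (abs_nonneg (g y))) hp hr hpr
    simpa using this
  by_contra hcon
  push_neg at hcon
  have hq0 : (0 : ℝ) < q := lt_of_lt_of_le one_pos hq
  have := Real.rpow_lt_rpow (abs_nonneg _) hcon hq0
  linarith

private lemma seg_bound (g w : ℝ → ℝ) {p r : ℝ} (x₀ s W : ℝ) (hpr : p ≤ r)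
    (hgint : IntervalIntegrable g volume p r)
    (hwc : ContinuousOn w (Set.uIcc p r))
    (hw : ∀ t ∈ Set.Icc p r, 0 ≤ w t)
    (hub : ∀ t ∈ Set.Icc p r, g t ≤ g x₀ + s * (t - x₀))
    (hW : ∫ t in p..r, w t * (g x₀ + s * (t - x₀)) = W) :
    ∫ t in p..r, w t * g t ≤ W := by
  rw [← hW]
  have hi1 : IntervalIntegrable (fun t => w t * g t) volume p r :=
    hgint.continuousOn_mul hwc
  have hi2 : IntervalIntegrable (fun t => w t * (g x₀ + s * (t - x₀))) volume p r := by
    apply ContinuousOn.intervalIntegrable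
    exact hwc.mul (Continuous.continuousOn (by continuity))
  refine intervalIntegral.integral_mono_on hpr hi1 hi2 fun t ht => ?_
  exact mul_le_mul_of_nonneg_left (hub t ht) (hw t ht)

theorem cor_2_4 (f f' : ℝ → ℝ) (a b c d : ℝ) (hab : a < b)
    (hca : c < a) (hbd : b < d)
    (hf : ∀ y ∈ Set.Ioo c d, HasDerivAt f (f' y) y)
    (hint : IntervalIntegrable f' volume a b)
    (q : ℝ) (hq : 1 ≤ q)
    (hconc : ConcaveOn ℝ (Set.Icc a b) (fun y => |f' y| ^ q)) :
    |(f a + f b) / 2 - (1 / (b - a)) * ∫ u in a..b, f u|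
      ≤ ((b - a) / 8) * (|f' ((5 * a + b) / 6)| + |f' ((a + 5 * b) / 6)|) := by
  set m : ℝ := (a + b) / 2 with hm
  set x₁ : ℝ := (5 * a + b) / 6 with hx₁
  set x₂ : ℝ := (a + 5 * b) / 6 with hx₂
  set g : ℝ → ℝ := fun t => |f' t| with hg
  have ham : a < m := by rw [hm]; linarith
  have hmb : m < b := by rw [hm]; linarith
  have hsub : Set.Icc a b ⊆ Set.Ioo c d := fun t ht => ⟨lt_of_lt_of_le hca ht.1, lt_of_le_of_lt ht.2 hbd⟩
  have huIcc : Set.uIcc a b = Set.Icc a b := Set.uIcc_of_le hab.le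
  -- continuity / integrability of f
  have hfc : ContinuousOn f (Set.uIcc a b) := by
    rw [huIcc]
    exact fun t ht => ((hf t (hsub ht)).continuousAt).continuousWithinAt
  -- integration by parts
  have hibp : ∫ t in a..b, (t - m) * f' t
      = (b - m) * f b - (a - m) * f a - ∫ t in a..b, f t := by
    have := intervalIntegral.integral_mul_deriv_eq_deriv_mul
      (u := fun t => t - m) (u' := fun _ => (1 : ℝ)) (v := f) (v' := f')
      (fun t _ => (hasDerivAt_id t).sub_const m)
      (fun t ht => hf t (hsub (huIcc ▸ ht)))
      intervalIntegrable_const hint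
    simpa using this
  -- abs integrability
  have hgi : IntervalIntegrable g volume a b := hint.abs
  have hgi1 : IntervalIntegrable g volume a m :=
    hgi.mono_set (by rw [huIcc, Set.uIcc_of_le ham.le]; exact Set.Icc_subset_Icc le_rfl hmb.le)
  have hgi2 : IntervalIntegrable g volume m b :=
    hgi.mono_set (by rw [huIcc, Set.uIcc_of_le hmb.le]; exact Set.Icc_subset_Icc ham.le le_rfl)
  -- concavity of g and supergradients
  have hgconc : ConcaveOn ℝ (Set.Icc a b) g := abs_concave hq hconc
  have hx₁mem : a < x₁ ∧ x₁ < b := by constructor <;> (rw [hx₁]; linarith)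
  have hx₂mem : a < x₂ ∧ x₂ < b := by constructor <;> (rw [hx₂]; linarith)
  obtain ⟨s₁, hs₁⟩ := exists_supergrad hgconc hx₁mem.1 hx₁mem.2
  obtain ⟨s₂, hs₂⟩ := exists_supergrad hgconc hx₂mem.1 hx₂mem.2
  -- left half bound
  have hleft : ∫ t in a..m, (m - t) * g t ≤ (b - a) ^ 2 / 8 * g x₁ := by
    refine seg_bound g (fun t => m - t) x₁ s₁ _ ham.le hgi1
      (Continuous.continuousOn (by continuity))
      (fun t ht => by show (0:ℝ) ≤ m - t; linarith [ht.2])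
      (fun t ht => hs₁ t ⟨ht.1, ht.2.trans hmb.le⟩) ?_
    have hcongr : ∫ t in a..m, (m - t) * (g x₁ + s₁ * (t - x₁))
        = ∫ t in a..m, ((m * (g x₁ - s₁ * x₁)) + ((m * s₁ - g x₁ + s₁ * x₁)) * t + (-s₁) * t ^ 2) := by
      apply intervalIntegral.integral_congr
      intro t _
      ring
    rw [hcongr, poly_int, hm, hx₁]
    ring
  -- right half bound
  have hright : ∫ t in m..b, (t - m) * g t ≤ (b - a) ^ 2 / 8 * g x₂ := by
    refine seg_bound g (fun t => t - m) x₂ s₂ _ hmb.le hgi2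
      (Continuous.continuousOn (by continuity))
      (fun t ht => by show (0:ℝ) ≤ t - m; linarith [ht.1])
      (fun t ht => hs₂ t ⟨ham.le.trans ht.1, ht.2⟩) ?_
    have hcongr : ∫ t in m..b, (t - m) * (g x₂ + s₂ * (t - x₂))
        = ∫ t in m..b, ((-(m * (g x₂ - s₂ * x₂))) + ((g x₂ - s₂ * x₂ - m * s₂)) * t + s₂ * t ^ 2) := by
      apply intervalIntegral.integral_congr
      intro t _
      ring
    rw [hcongr, poly_int, hm, hx₂]
    ring
  -- assemble the kernel integral bound
  have hker : IntervalIntegrable (fun t => |t - m| * g t) volume a b :=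
    hgi.continuousOn_mul (Continuous.continuousOn (by continuity))
  have hker1 : IntervalIntegrable (fun t => |t - m| * g t) volume a m :=
    hker.mono_set (by rw [huIcc, Set.uIcc_of_le ham.le]; exact Set.Icc_subset_Icc le_rfl hmb.le)
  have hker2 : IntervalIntegrable (fun t => |t - m| * g t) volume m b :=
    hker.mono_set (by rw [huIcc, Set.uIcc_of_le hmb.le]; exact Set.Icc_subset_Icc ham.le le_rfl)
  have hsplit : ∫ t in a..b, |t - m| * g t
      = (∫ t in a..m, |t - m| * g t) + ∫ t in m..b, |t - m| * g t :=
    (intervalIntegral.integral_add_adjacent_intervals hker1 hker2).symm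
  have hL : ∫ t in a..m, |t - m| * g t = ∫ t in a..m, (m - t) * g t := by
    apply intervalIntegral.integral_congr
    intro t ht
    rw [Set.uIcc_of_le ham.le] at ht
    show |t - m| * g t = (m - t) * g t
    rw [abs_of_nonpos (by linarith [ht.2])]
    ring
  have hR : ∫ t in m..b, |t - m| * g t = ∫ t in m..b, (t - m) * g t := by
    apply intervalIntegral.integral_congr
    intro t ht
    rw [Set.uIcc_of_le hmb.le] at ht
    show |t - m| * g t = (t - m) * g t
    rw [abs_of_nonneg (by linarith [ht.1])]
  have hItot : |∫ t in a..b, (t - m) * f' t| ≤ (b - a) ^ 2 / 8 * (g x₁ + g x₂) := by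
    calc |∫ t in a..b, (t - m) * f' t| ≤ ∫ t in a..b, |(t - m) * f' t| :=
          intervalIntegral.abs_integral_le_integral_abs hab.le
      _ = ∫ t in a..b, |t - m| * g t := by
          apply intervalIntegral.integral_congr
          intro t _
          show |(t - m) * f' t| = |t - m| * g t
          rw [abs_mul]
      _ = (∫ t in a..m, (m - t) * g t) + ∫ t in m..b, (t - m) * g t := by
          rw [hsplit, hL, hR]
      _ ≤ (b - a) ^ 2 / 8 * g x₁ + (b - a) ^ 2 / 8 * g x₂ := add_le_add hleft hright
      _ = (b - a) ^ 2 / 8 * (g x₁ + g x₂) := by ring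
  -- final computation
  have hba : (0 : ℝ) < b - a := by linarith
  have hid : (f a + f b) / 2 - (1 / (b - a)) * ∫ u in a..b, f u
      = (1 / (b - a)) * ∫ t in a..b, (t - m) * f' t := by
    rw [hibp, hm]
    field_simp
    ring
  rw [hid, abs_mul, abs_of_nonneg (by positivity : (0:ℝ) ≤ 1 / (b - a))]
  calc 1 / (b - a) * |∫ t in a..b, (t - m) * f' t|
      ≤ 1 / (b - a) * ((b - a) ^ 2 / 8 * (g x₁ + g x₂)) :=
        mul_le_mul_of_nonneg_left hItot (by positivity)
    _ = ((b - a) / 8) * (g x₁ + g x₂) := by field_simp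
end

section
/- Let a < b be reals with 0 ∉ [a,b] and n ∈ ℤ with |n| ≥ 2, p > 1, q = p/(p-1). Then |(aⁿ + bⁿ)/2 - (b^{n+1} - a^{n+1})/((b-a)(n+1))| ≤ |n|·(b-a)·(1/(p+1))^{1/p}·(1/2)^{1/q}·(|a|^{n-1} + |b|^{n-1})/2. -/
open intervalIntegral Set MeasureTheory

theorem conv_aux (c d x : ℝ) (hc : 0 < c) (hcd : c < d) (hx : x ∈ Set.Icc c d) (m : ℤ) :
    x ^ m ≤ ((d - x) * c ^ m + (x - c) * d ^ m) / (d - c) := by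
  obtain ⟨h1, h2⟩ := hx
  have hdc : (0:ℝ) < d - c := by linarith
  have h3 : (0:ℝ) ≤ (d - x)/(d-c) := by apply div_nonneg <;> linarith
  have h4 : (0:ℝ) ≤ (x - c)/(d-c) := by apply div_nonneg <;> linarith
  have h5 : (d - x)/(d-c) + (x - c)/(d-c) = 1 := by field_simp; ring
  have := (convexOn_zpow (𝕜 := ℝ) m).2 (Set.mem_Ioi.2 hc) (Set.mem_Ioi.2 (hc.trans hcd)) h3 h4 h5
  simp only [smul_eq_mul] at this
  have hx' : (d - x)/(d-c) * c + (x - c)/(d-c) * d = x := by field_simp; ring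
  rw [hx'] at this
  calc x ^ m ≤ (d - x)/(d-c) * c ^ m + (x - c)/(d-c) * d ^ m := this
    _ = ((d - x) * c ^ m + (x - c) * d ^ m) / (d - c) := by ring

theorem pointw (a b x : ℝ) (hab : a < b) (h0 : (0:ℝ) ∉ Set.Icc a b) (hx : x ∈ Set.Icc a b)
    (m : ℤ) : |x| ^ m ≤ ((b - x) * |a| ^ m + (x - a) * |b| ^ m) / (b - a) := by
  obtain ⟨h1, h2⟩ := hx
  have : 0 < a ∨ b < 0 := by
    by_contra h; push_neg at h; exact h0 ⟨h.1, h.2⟩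
  rcases this with ha | hb
  · have hxpos : 0 < x := lt_of_lt_of_le ha h1
    rw [abs_of_pos hxpos, abs_of_pos ha, abs_of_pos (ha.trans hab)]
    exact conv_aux a b x ha hab ⟨h1, h2⟩ m
  · have hxneg : x < 0 := lt_of_le_of_lt h2 hb
    have := conv_aux (-b) (-a) (-x) (by linarith) (by linarith) ⟨by linarith, by linarith⟩ m
    rw [abs_of_neg hxneg, abs_of_neg (hab.trans hb), abs_of_neg hb]
    calc (-x) ^ m ≤ ((-a - -x) * (-b) ^ m + (-x - -b) * (-a) ^ m) / (-a - -b) := this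
      _ = ((b - x) * (-a) ^ m + (x - a) * (-b) ^ m) / (b - a) := by ring_nf

theorem ig1 (u v c : ℝ) : ∫ x in u..v, (c - x) = (c*v - v^2/2) - (c*u - u^2/2) := by
  have : ∀ x ∈ Set.uIcc u v, HasDerivAt (fun y => c*y - y^2/2) (c - x) x := by
    intro x _
    have h1 : HasDerivAt (fun y : ℝ => c*y) c x := by
      simpa using (hasDerivAt_id x).const_mul c
    have h2 : HasDerivAt (fun y : ℝ => y^2/2) x x := by
      simpa using (hasDerivAt_pow 2 x).div_const 2
    exact h1.sub h2
  rw [intervalIntegral.integral_eq_sub_of_hasDerivAt this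
    ((Continuous.intervalIntegrable (by continuity) u v))]

theorem ig2 (u v c : ℝ) : ∫ x in u..v, (c - x)*x = (c*v^2/2 - v^3/3) - (c*u^2/2 - u^3/3) := by
  have : ∀ x ∈ Set.uIcc u v, HasDerivAt (fun y => c*y^2/2 - y^3/3) ((c - x)*x) x := by
    intro x _
    have h1 : HasDerivAt (fun y : ℝ => c*y^2/2) (c*x) x := by
      have := ((hasDerivAt_pow 2 x).const_mul c).div_const 2
      exact this.congr_deriv (by push_cast; ring)
    have h2 : HasDerivAt (fun y : ℝ => y^3/3) (x^2) x := by
      have := (hasDerivAt_pow 3 x).div_const 3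
      exact this.congr_deriv (by push_cast; ring)
    have := h1.sub h2
    exact this.congr_deriv (by ring)
  rw [intervalIntegral.integral_eq_sub_of_hasDerivAt this
    ((Continuous.intervalIntegrable (by continuity) u v))]

theorem ig3 (u v c c1 c2 : ℝ) : ∫ x in u..v, (c - x)*(c1 + c2*x) =
    (c1*(c*v - v^2/2) + c2*(c*v^2/2 - v^3/3)) - (c1*(c*u - u^2/2) + c2*(c*u^2/2 - u^3/3)) := by
  have e : ∀ x : ℝ, (c - x)*(c1 + c2*x) = c1*(c-x) + c2*((c-x)*x) := fun x => by ring
  simp only [e]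
  rw [intervalIntegral.integral_add (Continuous.intervalIntegrable (by continuity) u v)
      (Continuous.intervalIntegrable (by continuity) u v),
    intervalIntegral.integral_const_mul, intervalIntegral.integral_const_mul, ig1, ig2]
  ring

theorem int_main (a b A B : ℝ) (hab : a < b) :
    ∫ x in a..b, |x - (a+b)/2| * ((b - x)*A + (x - a)*B) = (b-a)^3*(A+B)/8 := by
  have ham : a ≤ (a+b)/2 := by linarith
  have hmb : (a+b)/2 ≤ b := by linarith
  rw [← intervalIntegral.integral_add_adjacent_intervals (a := a) (b := (a+b)/2) (c := b)
      (Continuous.intervalIntegrable (by continuity) _ _)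
      (Continuous.intervalIntegrable (by continuity) _ _)]
  have e1 : ∫ x in a..(a+b)/2, |x - (a+b)/2| * ((b - x)*A + (x - a)*B)
      = ∫ x in a..(a+b)/2, ((a+b)/2 - x)*((b*A - a*B) + (B - A)*x) := by
    apply intervalIntegral.integral_congr
    intro x hx
    rw [Set.uIcc_of_le ham] at hx
    obtain ⟨hx1, hx2⟩ := hx
    show |x - (a+b)/2| * ((b - x)*A + (x - a)*B) = _
    rw [abs_of_nonpos (by linarith)]
    ring
  have e2 : ∫ x in ((a+b)/2)..b, |x - (a+b)/2| * ((b - x)*A + (x - a)*B)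
      = ∫ x in ((a+b)/2)..b, -(((a+b)/2 - x)*((b*A - a*B) + (B - A)*x)) := by
    apply intervalIntegral.integral_congr
    intro x hx
    rw [Set.uIcc_of_le hmb] at hx
    obtain ⟨hx1, hx2⟩ := hx
    show |x - (a+b)/2| * ((b - x)*A + (x - a)*B) = _
    rw [abs_of_nonneg (by linarith)]
    ring
  rw [e1, e2, intervalIntegral.integral_neg, ig3, ig3]
  ring

theorem myabs_zpow (x : ℝ) (n : ℤ) : |x ^ n| = |x| ^ n := by
  rcases eq_or_ne x 0 with h | h
  · rcases eq_or_ne n 0 with h2 | h2 <;> simp [h, h2, zero_zpow]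
  · rcases n with k | k
    · simp [abs_pow]
    · simp [zpow_negSucc, abs_pow, abs_inv]

theorem int_id (a b : ℝ) (hab : a < b) (h0 : (0:ℝ) ∉ Set.Icc a b) (n : ℤ) (hn : 2 ≤ |n|) :
    ∫ x in a..b, (x - (a+b)/2) * ((n:ℝ) * x^(n-1))
      = (b-a) * ((a ^ n + b ^ n) / 2 - (b ^ (n + 1) - a ^ (n + 1)) / ((b - a) * ((n:ℝ) + 1))) := by
  have huI : (0:ℝ) ∉ Set.uIcc a b := by rwa [Set.uIcc_of_le hab.le]
  have ha : a ≠ 0 := fun h => h0 (h ▸ ⟨le_refl _, hab.le⟩) |>.elim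
  have hb : b ≠ 0 := fun h => h0 (h ▸ ⟨hab.le, le_refl _⟩) |>.elim
  have hcases : n ≤ -2 ∨ 2 ≤ n := by
    rcases le_or_gt 0 n with h | h
    · right; rwa [abs_of_nonneg h] at hn
    · left; rw [abs_of_neg h] at hn; omega
  have hn0 : n ≠ 0 := by omega
  have hn1 : n ≠ -1 := by omega
  have hnm1 : n - 1 ≠ -1 := by omega
  have hcast : ((n:ℝ)) ≠ 0 := Int.cast_ne_zero.2 hn0
  have hcast1 : ((n:ℝ)) + 1 ≠ 0 := by
    have : ((n+1 : ℤ) : ℝ) ≠ 0 := Int.cast_ne_zero.2 (by omega)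
    push_cast at this; exact this
  have hba : b - a ≠ 0 := by intro h; linarith [sub_eq_zero.1 h]
  have hcont : ContinuousOn (fun x : ℝ => x ^ (n-1)) (Set.uIcc a b) :=
    (continuousOn_zpow₀ (n-1)).mono (fun x hx => by
      simp only [Set.mem_compl_iff, Set.mem_singleton_iff]
      intro h; exact huI (h ▸ hx))
  have hcont' : ContinuousOn (fun x : ℝ => x ^ n) (Set.uIcc a b) :=
    (continuousOn_zpow₀ n).mono (fun x hx => by
      simp only [Set.mem_compl_iff, Set.mem_singleton_iff]
      intro h; exact huI (h ▸ hx))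
  have e : ∫ x in a..b, (x - (a+b)/2) * ((n:ℝ) * x^(n-1))
      = ∫ x in a..b, ((n:ℝ) * x^n - ((a+b)/2 * n) * x^(n-1)) := by
    apply intervalIntegral.integral_congr
    intro x hx
    have hx0 : x ≠ 0 := fun h => huI (h ▸ hx)
    show (x - (a+b)/2) * ((n:ℝ) * x^(n-1)) = (n:ℝ) * x^n - ((a+b)/2 * (n:ℝ)) * x^(n-1)
    have : x ^ n = x ^ (n-1) * x := by
      rw [← zpow_add_one₀ hx0 (n-1)]; congr 1; ring
    rw [this]; ring
  rw [e, intervalIntegral.integral_sub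
      (((hcont'.intervalIntegrable).const_mul _))
      (((hcont.intervalIntegrable).const_mul _)),
    intervalIntegral.integral_const_mul, intervalIntegral.integral_const_mul,
    integral_zpow (Or.inr ⟨hn1, huI⟩), integral_zpow (Or.inr ⟨hnm1, huI⟩)]
  have h1 : a ^ (n + 1) = a ^ n * a := zpow_add_one₀ ha n
  have h2 : b ^ (n + 1) = b ^ n * b := zpow_add_one₀ hb n
  have h3 : a ^ (n - 1 + 1) = a ^ n := by congr 1; ring
  have h4 : b ^ (n - 1 + 1) = b ^ n := by congr 1; ring
  rw [h1, h2, h3, h4]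
  push_cast
  simp only [sub_add_cancel]
  field_simp
  ring

theorem prop_3_1_a (a b : ℝ) (hab : a < b) (h0 : (0:ℝ) ∉ Set.Icc a b)
    (n : ℤ) (hn : 2 ≤ |n|) (p q : ℝ) (hp : 1 < p) (hq : q = p / (p - 1)) :
    |(a ^ n + b ^ n) / 2 - (b ^ (n + 1) - a ^ (n + 1)) / ((b - a) * ((n : ℝ) + 1))|
      ≤ (|n| : ℝ) * (b - a) * (1 / (p + 1)) ^ (1 / p) * (1 / 2 : ℝ) ^ (1 / q) *
        ((|a| ^ (n - 1) + |b| ^ (n - 1)) / 2) := by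
  have hba : (0:ℝ) < b - a := by linarith
  have huI : (0:ℝ) ∉ Set.uIcc a b := by rwa [Set.uIcc_of_le hab.le]
  set A := |a| ^ (n-1) with hAdef
  set B := |b| ^ (n-1) with hBdef
  have hA : 0 ≤ A := zpow_nonneg (abs_nonneg a) _
  have hB : 0 ≤ B := zpow_nonneg (abs_nonneg b) _
  have hncast : ((|n| : ℤ) : ℝ) = |(n:ℝ)| := by push_cast; ring
  have hnnn : (0:ℝ) ≤ ((|n| : ℤ) : ℝ) := by positivity
  -- Step 1 : core estimate
  have key : |(a ^ n + b ^ n) / 2 - (b ^ (n + 1) - a ^ (n + 1)) / ((b - a) * ((n : ℝ) + 1))|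
      ≤ ((|n| : ℤ) : ℝ) * (b - a) * (A + B) / 8 := by
    have hI := int_id a b hab h0 n hn
    have hcontm1 : ContinuousOn (fun x : ℝ => x ^ (n-1)) (Set.uIcc a b) :=
      (continuousOn_zpow₀ (n-1)).mono (fun x hx => by
        simp only [Set.mem_compl_iff, Set.mem_singleton_iff]
        intro h; exact huI (h ▸ hx))
    have hf : ContinuousOn (fun x : ℝ => (x - (a+b)/2) * ((n:ℝ) * x^(n-1))) (Set.uIcc a b) :=
      ((continuousOn_id.sub continuousOn_const).mul (continuousOn_const.mul hcontm1))
    have hfabs : IntervalIntegrable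
        (fun x : ℝ => |(x - (a+b)/2) * ((n:ℝ) * x^(n-1))|) volume a b :=
      (hf.abs).intervalIntegrable
    have hgint : IntervalIntegrable
        (fun x : ℝ => (((|n| : ℤ):ℝ)/(b-a)) * (|x - (a+b)/2| * ((b - x)*A + (x - a)*B)))
        volume a b := by
      apply Continuous.intervalIntegrable
      continuity
    have step1 : |∫ x in a..b, (x - (a+b)/2) * ((n:ℝ) * x^(n-1))|
        ≤ ∫ x in a..b, |(x - (a+b)/2) * ((n:ℝ) * x^(n-1))| :=
      intervalIntegral.abs_integral_le_integral_abs hab.le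
    have step2 : ∫ x in a..b, |(x - (a+b)/2) * ((n:ℝ) * x^(n-1))|
        ≤ ∫ x in a..b, (((|n| : ℤ):ℝ)/(b-a)) * (|x - (a+b)/2| * ((b - x)*A + (x - a)*B)) := by
      apply intervalIntegral.integral_mono_on hab.le hfabs hgint
      intro x hx
      have hpt := pointw a b x hab h0 hx (n-1)
      have e1 : |(x - (a+b)/2) * ((n:ℝ) * x^(n-1))|
          = (|x - (a+b)/2| * ((|n| : ℤ):ℝ)) * |x|^(n-1) := by
        rw [abs_mul, abs_mul, myabs_zpow, hncast]; ring
      rw [e1]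
      have hmul : (0:ℝ) ≤ |x - (a+b)/2| * ((|n| : ℤ):ℝ) := by positivity
      calc (|x - (a+b)/2| * ((|n| : ℤ):ℝ)) * |x|^(n-1)
          ≤ (|x - (a+b)/2| * ((|n| : ℤ):ℝ)) * (((b - x)*A + (x - a)*B)/(b-a)) :=
            mul_le_mul_of_nonneg_left hpt hmul
        _ = (((|n| : ℤ):ℝ)/(b-a)) * (|x - (a+b)/2| * ((b - x)*A + (x - a)*B)) := by
            field_simp
    have step3 : ∫ x in a..b, (((|n| : ℤ):ℝ)/(b-a)) * (|x - (a+b)/2| * ((b - x)*A + (x - a)*B))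
        = ((|n| : ℤ):ℝ) * (b-a)^2 * (A+B) / 8 := by
      rw [intervalIntegral.integral_const_mul, int_main a b A B hab]
      field_simp
    have hchain := step1.trans (step2.trans_eq step3)
    rw [hI, abs_mul, abs_of_pos hba] at hchain
    have h8 : ((|n| : ℤ):ℝ) * (b-a)^2 * (A+B)/8
        = (b-a) * (((|n| : ℤ):ℝ) * (b-a) * (A+B)/8) := by ring
    rw [h8] at hchain
    exact le_of_mul_le_mul_left hchain hba
  -- Step 2 : the constant is at least 1/4
  have hp0 : (0:ℝ) < p := by linarith
  have hC1 : (1:ℝ)/2 ≤ (1 / (p + 1)) ^ (1 / p) := by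
    have h2p : 1 + p ≤ (2:ℝ) ^ p := by
      have := one_add_mul_self_le_rpow_one_add (by norm_num : (-1:ℝ) ≤ 1) hp.le
      norm_num at this
      linarith
    have hpow : ((1:ℝ)/2) ^ p ≤ 1 / (p + 1) := by
      rw [Real.div_rpow (by norm_num) (by norm_num), Real.one_rpow]
      exact one_div_le_one_div_of_le (by linarith) (by linarith)
    calc (1:ℝ)/2 = (((1:ℝ)/2) ^ p) ^ (1/p) := by
          rw [← Real.rpow_mul (by norm_num), mul_one_div_cancel (by linarith : p ≠ 0),
            Real.rpow_one]
      _ ≤ (1/(p+1)) ^ (1/p) := Real.rpow_le_rpow (by positivity) hpow (by positivity)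
  have h1q : 1/q ≤ 1 := by
    rw [hq, one_div_div]
    rw [div_le_one hp0]
    linarith
  have hqpos : 0 < q := by
    rw [hq]; apply div_pos <;> linarith
  have hC2 : (1:ℝ)/2 ≤ ((1:ℝ)/2) ^ (1/q) := by
    have := Real.rpow_le_rpow_of_exponent_ge (by norm_num : (0:ℝ) < 1/2)
      (by norm_num : (1:ℝ)/2 ≤ 1) h1q
    rwa [Real.rpow_one] at this
  have hCC : (1:ℝ)/4 ≤ (1/(p+1))^(1/p) * ((1:ℝ)/2)^(1/q) := by
    calc (1:ℝ)/4 = (1/2)*(1/2) := by norm_num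
      _ ≤ _ := mul_le_mul hC1 hC2 (by norm_num) (by positivity)
  rw [← hncast]
  refine key.trans ?_
  have hbase : 0 ≤ ((|n|:ℤ):ℝ) * (b - a) * ((A+B)/2) := by positivity
  calc ((|n|:ℤ):ℝ) * (b - a) * (A + B) / 8
      = (((|n|:ℤ):ℝ) * (b-a) * ((A+B)/2)) * (1/4) := by ring
    _ ≤ (((|n|:ℤ):ℝ) * (b-a) * ((A+B)/2)) * ((1/(p+1))^(1/p) * ((1:ℝ)/2)^(1/q)) :=
        mul_le_mul_of_nonneg_left hCC hbase
    _ = ((|n|:ℤ):ℝ) * (b - a) * (1 / (p + 1)) ^ (1 / p) * ((1:ℝ)/2) ^ (1 / q) * ((A + B) / 2) := by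
        ring
end

section
/- Let a < b be reals with 0 ∉ [a,b], n ∈ ℤ with |n| ≥ 2, and q ≥ 1. Then |(aⁿ + bⁿ)/2 - (b^{n+1} - a^{n+1})/((b-a)(n+1))| ≤ |n|·(b-a)·(3^{1-1/q}/4)·(|a|^{n-1} + |b|^{n-1})/2. -/
open MeasureTheory intervalIntegral Set

private lemma my_abs_zpow (x : ℝ) (k : ℤ) : |x ^ k| = |x| ^ k := by
  rcases k with j | j
  · simp [abs_pow]
  · simp [zpow_negSucc, abs_inv, abs_pow]

private lemma my_int_quad (K p q r u v : ℝ) :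
    ∫ x in u..v, K * (p + q * x + r * x ^ 2) =
      K * (p * (v - u) + q * (v ^ 2 - u ^ 2) / 2 + r * (v ^ 3 - u ^ 3) / 3) := by
  have h1 : IntervalIntegrable (fun _ : ℝ => p) volume u v :=
    continuous_const.intervalIntegrable _ _
  have h2 : IntervalIntegrable (fun x : ℝ => q * x) volume u v :=
    (continuous_const.mul continuous_id).intervalIntegrable _ _
  have h3 : IntervalIntegrable (fun x : ℝ => r * x ^ 2) volume u v :=
    (continuous_const.mul (continuous_pow 2)).intervalIntegrable _ _
  rw [intervalIntegral.integral_const_mul]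
  congr 1
  rw [intervalIntegral.integral_add (h1.add h2) h3, intervalIntegral.integral_add h1 h2,
    intervalIntegral.integral_const_mul, intervalIntegral.integral_const_mul,
    integral_id, integral_pow, intervalIntegral.integral_const, smul_eq_mul]
  push_cast
  ring

set_option maxHeartbeats 1600000 in
theorem prop_3_1_b (a b : ℝ) (hab : a < b) (h0 : (0:ℝ) ∉ Set.Icc a b)
    (n : ℤ) (hn : 2 ≤ |n|) (q : ℝ) (hq : 1 ≤ q) :
    |(a ^ n + b ^ n) / 2 - (b ^ (n + 1) - a ^ (n + 1)) / ((b - a) * ((n : ℝ) + 1))|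
      ≤ (|n| : ℝ) * (b - a) * ((3 : ℝ) ^ (1 - 1 / q) / 4) *
        ((|a| ^ (n - 1) + |b| ^ (n - 1)) / 2) := by
  have hba : (0:ℝ) < b - a := by linarith
  have hnot : (0:ℝ) ∉ Set.uIcc a b := by rw [Set.uIcc_of_le hab.le]; exact h0
  have hcase : 0 < a ∨ b < 0 := by
    by_contra h
    push_neg at h
    exact h0 ⟨h.1, h.2⟩
  have ha0 : a ≠ 0 := by
    rcases hcase with h | h
    · exact ne_of_gt h
    · exact ne_of_lt (hab.trans h)
  have hb0 : b ≠ 0 := by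
    rcases hcase with h | h
    · exact ne_of_gt (h.trans hab)
    · exact ne_of_lt h
  have hx0 : ∀ x ∈ Set.uIcc a b, x ≠ 0 := fun x hx h => hnot (h ▸ hx)
  have hn2 : 2 ≤ n ∨ n ≤ -2 := by
    rcases le_or_gt 0 n with h | h
    · left; rwa [abs_of_nonneg h] at hn
    · right; rw [abs_of_neg h] at hn; omega
  have hnne1 : n ≠ -1 := by omega
  have hnm1 : n - 1 ≠ -1 := by omega
  have hn1R : (n:ℝ) + 1 ≠ 0 := by
    have h1 : ((n + 1 : ℤ) : ℝ) ≠ 0 := Int.cast_ne_zero.2 (by omega)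
    push_cast at h1
    exact h1
  have hnR : (n:ℝ) ≠ 0 := Int.cast_ne_zero.2 (by omega)
  set m : ℝ := (a + b) / 2 with hm
  set c : ℝ := |a| ^ (n - 1) with hc
  set d : ℝ := |b| ^ (n - 1) with hd
  have ham : a ≤ m := by rw [hm]; linarith
  have hmb : m ≤ b := by rw [hm]; linarith
  have hapos : 0 < |a| := abs_pos.2 ha0
  have hbpos : 0 < |b| := abs_pos.2 hb0
  have hcpos : 0 < c := zpow_pos hapos _
  have hdpos : 0 < d := zpow_pos hbpos _
  -- integrals of zpow
  have Jn : IntervalIntegrable (fun x : ℝ => x ^ n) volume a b :=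
    intervalIntegrable_zpow (Or.inr hnot)
  have Jn1 : IntervalIntegrable (fun x : ℝ => x ^ (n - 1)) volume a b :=
    intervalIntegrable_zpow (Or.inr hnot)
  have I1 : ∫ x in a..b, x ^ n = (b ^ (n + 1) - a ^ (n + 1)) / ((n:ℝ) + 1) := by
    have := integral_zpow (a := a) (b := b) (Or.inr ⟨hnne1, hnot⟩)
    rw [this]
  have I2 : ∫ x in a..b, x ^ (n - 1) = (b ^ n - a ^ n) / (n:ℝ) := by
    have := integral_zpow (a := a) (b := b) (n := n - 1) (Or.inr ⟨hnm1, hnot⟩)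
    rw [this, show n - 1 + 1 = n from by omega]
    all_goals (push_cast; ring)
  -- the integral representation of the error term
  have Ig : ∫ x in a..b, (x - m) * (n:ℝ) * x ^ (n - 1)
      = (n:ℝ) * ((b ^ (n + 1) - a ^ (n + 1)) / ((n:ℝ) + 1))
        - (m * (n:ℝ)) * ((b ^ n - a ^ n) / (n:ℝ)) := by
    rw [intervalIntegral.integral_congr
        (g := fun x => (n:ℝ) * x ^ n - (m * (n:ℝ)) * x ^ (n - 1)) ?_]
    · rw [intervalIntegral.integral_sub (Jn.const_mul _) (Jn1.const_mul _),
        intervalIntegral.integral_const_mul, intervalIntegral.integral_const_mul, I1, I2]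
    · intro x hx
      have hxne : x ≠ 0 := hx0 x hx
      have h' : n - 1 + 1 = n := by ring
      have hxn : x ^ n = x ^ (n - 1) * x := by
        conv_lhs => rw [← h']
        rw [zpow_add_one₀ hxne]
      show (x - m) * (n:ℝ) * x ^ (n - 1) = (n:ℝ) * x ^ n - m * (n:ℝ) * x ^ (n - 1)
      rw [hxn]
      ring
  have hT : (a ^ n + b ^ n) / 2 - (b ^ (n + 1) - a ^ (n + 1)) / ((b - a) * ((n : ℝ) + 1))
      = (∫ x in a..b, (x - m) * (n:ℝ) * x ^ (n - 1)) / (b - a) := by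
    rw [Ig, zpow_add_one₀ hb0, zpow_add_one₀ ha0, hm]
    field_simp
    ring
  -- the majorant function
  set H : ℝ → ℝ := fun x => (|n| : ℝ) * |x - m| * ((b - x) * c + (x - a) * d) / (b - a) with hH
  have hHcont : Continuous H := by
    apply Continuous.div_const
    exact (continuous_const.mul (continuous_id.sub continuous_const).abs).mul
      (((continuous_const.sub continuous_id).mul continuous_const).add
        ((continuous_id.sub continuous_const).mul continuous_const))
  -- pointwise bound
  have hpt : ∀ x ∈ Set.Icc a b, |(x - m) * (n:ℝ) * x ^ (n - 1)| ≤ H x := by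
    intro x hx
    have hxne : x ≠ 0 := hx0 x (by rwa [Set.uIcc_of_le hab.le])
    have hα : 0 ≤ (b - x) / (b - a) := div_nonneg (by linarith [hx.2]) hba.le
    have hβ : 0 ≤ (x - a) / (b - a) := div_nonneg (by linarith [hx.1]) hba.le
    have hαβ : (b - x) / (b - a) + (x - a) / (b - a) = 1 := by field_simp; ring
    have habs : |x| = ((b - x) / (b - a)) * |a| + ((x - a) / (b - a)) * |b| := by
      rcases hcase with hpos | hneg
      · have hax : 0 < x := lt_of_lt_of_le hpos hx.1
        have hbp : 0 < b := hpos.trans hab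
        rw [abs_of_pos hax, abs_of_pos hpos, abs_of_pos hbp]
        field_simp
        ring
      · have hxb : x < 0 := lt_of_le_of_lt hx.2 hneg
        have hano : a < 0 := hab.trans hneg
        rw [abs_of_neg hxb, abs_of_neg hano, abs_of_neg hneg]
        field_simp
        ring
    have hconv := (convexOn_zpow (𝕜 := ℝ) (n - 1)).2 (Set.mem_Ioi.2 hapos) (Set.mem_Ioi.2 hbpos)
      hα hβ hαβ
    simp only [smul_eq_mul] at hconv
    rw [← habs] at hconv
    have hxbd : |x| ^ (n - 1) ≤ ((b - x) / (b - a)) * c + ((x - a) / (b - a)) * d := hconv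
    have heq : |(x - m) * (n:ℝ) * x ^ (n - 1)| = (|n| : ℝ) * |x - m| * |x| ^ (n - 1) := by
      rw [abs_mul, abs_mul, my_abs_zpow]
      ring
    rw [heq]
    have hkey : (|n| : ℝ) * |x - m| * |x| ^ (n - 1)
        ≤ (|n| : ℝ) * |x - m| * (((b - x) / (b - a)) * c + ((x - a) / (b - a)) * d) := by
      apply mul_le_mul_of_nonneg_left hxbd
      positivity
    refine hkey.trans (le_of_eq ?_)
    rw [hH]
    ring
  -- integral of the majorant
  have HA : ∫ x in a..m, H x
      = ((|n| : ℝ) / (b - a)) * ((m * (b * c - a * d)) * (m - a)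
        + (m * (d - c) - (b * c - a * d)) * (m ^ 2 - a ^ 2) / 2
        + (c - d) * (m ^ 3 - a ^ 3) / 3) := by
    rw [intervalIntegral.integral_congr (g := fun x => ((|n| : ℝ) / (b - a)) *
        ((m * (b * c - a * d)) + (m * (d - c) - (b * c - a * d)) * x + (c - d) * x ^ 2)) ?_]
    · exact my_int_quad _ _ _ _ _ _
    · intro x hx
      rw [Set.uIcc_of_le ham] at hx
      have h1 : |x - m| = m - x := by rw [abs_of_nonpos (by linarith [hx.2])]; ring
      simp only [hH, h1]
      ring
  have HB : ∫ x in m..b, H x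
      = ((|n| : ℝ) / (b - a)) * ((-(m * (b * c - a * d))) * (b - m)
        + (-(m * (d - c) - (b * c - a * d))) * (b ^ 2 - m ^ 2) / 2
        + (-(c - d)) * (b ^ 3 - m ^ 3) / 3) := by
    rw [intervalIntegral.integral_congr (g := fun x => ((|n| : ℝ) / (b - a)) *
        ((-(m * (b * c - a * d))) + (-(m * (d - c) - (b * c - a * d))) * x
          + (-(c - d)) * x ^ 2)) ?_]
    · exact my_int_quad _ _ _ _ _ _
    · intro x hx
      rw [Set.uIcc_of_le hmb] at hx
      have h1 : |x - m| = x - m := abs_of_nonneg (by linarith [hx.1])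
      simp only [hH, h1]
      ring
  have HH : ∫ x in a..b, H x = (|n| : ℝ) * ((b - a) ^ 2 * (c + d) / 8) := by
    rw [← intervalIntegral.integral_add_adjacent_intervals
      (hHcont.intervalIntegrable a m) (hHcont.intervalIntegrable m b), HA, HB, hm]
    field_simp
    ring
  -- putting it together
  have hgcont : ContinuousOn (fun x : ℝ => (x - m) * (n:ℝ) * x ^ (n - 1)) (Set.uIcc a b) := by
    apply ContinuousOn.mul
    · exact ((continuousOn_id.sub continuousOn_const).mul continuousOn_const)
    · exact ContinuousOn.zpow₀ continuousOn_id _ (fun x hx => Or.inl (hx0 x hx))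
  have hGint : IntervalIntegrable (fun x : ℝ => (x - m) * (n:ℝ) * x ^ (n - 1)) volume a b :=
    hgcont.intervalIntegrable
  have key : |(a ^ n + b ^ n) / 2 - (b ^ (n + 1) - a ^ (n + 1)) / ((b - a) * ((n : ℝ) + 1))|
      ≤ (|n| : ℝ) * (b - a) * ((c + d) / 8) := by
    rw [hT, abs_div, abs_of_pos hba, div_le_iff₀ hba]
    calc |∫ x in a..b, (x - m) * (n:ℝ) * x ^ (n - 1)|
        ≤ ∫ x in a..b, |(x - m) * (n:ℝ) * x ^ (n - 1)| :=
          intervalIntegral.abs_integral_le_integral_abs hab.le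
      _ ≤ ∫ x in a..b, H x := by
          apply intervalIntegral.integral_mono_on hab.le hGint.abs
            (hHcont.intervalIntegrable a b) hpt
      _ = (|n| : ℝ) * ((b - a) ^ 2 * (c + d) / 8) := HH
      _ = (|n| : ℝ) * (b - a) * ((c + d) / 8) * (b - a) := by ring
  have h3 : 1 ≤ (3 : ℝ) ^ (1 - 1 / q) := by
    apply Real.one_le_rpow (by norm_num)
    have hq0 : 0 < q := lt_of_lt_of_le one_pos hq
    have : 1 / q ≤ 1 := by rw [div_le_one hq0]; linarith
    linarith
  refine key.trans ?_
  have hnn : (0:ℝ) ≤ (|n| : ℝ) := by positivity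
  nlinarith [mul_nonneg (mul_nonneg hnn hba.le) (by positivity : (0:ℝ) ≤ (c + d) / 8),
    mul_nonneg (mul_nonneg (mul_nonneg hnn hba.le) (by positivity : (0:ℝ) ≤ (c + d) / 8)) (by linarith : (0:ℝ) ≤ (3:ℝ) ^ (1 - 1/q) - 1)]
end
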